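/- arXiv:2511.18198 — 7 statements merged into one kernel-verified Lean document; each statement's English description precedes it below -/
import Mathlib

section
/- For all natural numbers m and k with k ≥ 2 and m + 1 ≥ 2k, there exists a move sequence that cleanly computes m whose space is at most ⌈(m+1)/k⌉ + k − 1 and whose number of squaring operations is at most (2⌈(m+1)/k⌉ − 1)·(2k − 1) + 2·((m+1) − k·⌈(m+1)/k⌉) − 4 (this quantity evaluated in the integers ℤ). -/
/-- A move sequence in the reversible pebble game modelling intermediate
uncomputation of iterated out-of-place squarings.  `conf t` is the
configuration (finite set of pebbled nodes) at time `t ≤ T`; at step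
`t < T` exactly the node `move t` is toggled, subject to the legality
condition that either `move t = 0` or `move t ≥ 1` and its predecessor
is pebbled. -/
structure MoveSeq where
  /-- total move count -/
  T : ℕ
  /-- configuration at each time step -/
  conf : ℕ → Finset ℕ
  /-- the node toggled at step `t` (relevant for `t < T`) -/
  move : ℕ → ℕ
  init : conf 0 = ∅
  legal : ∀ t < T, move t = 0 ∨ (1 ≤ move t ∧ move t - 1 ∈ conf t)
  step : ∀ t < T, conf (t + 1) =
    if move t ∈ conf t then (conf t).erase (move t) else insert (move t) (conf t)

/-- The space of a move sequence: the maximum number of pebbled nodes over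
all visited configurations. -/
def MoveSeq.space (M : MoveSeq) : ℕ :=
  (Finset.range (M.T + 1)).sup fun t => (M.conf t).card

/-- The number of squaring operations: the number of moves toggling a node `i ≥ 1`. -/
def MoveSeq.squarings (M : MoveSeq) : ℕ :=
  ((Finset.range M.T).filter fun t => 1 ≤ M.move t).card

/-- The sequence cleanly computes `m` if its final configuration is `{m}`. -/
def MoveSeq.CleanlyComputes (M : MoveSeq) (m : ℕ) : Prop :=
  M.conf M.T = {m}

/-- Some configuration visited by the sequence contains the node `i`. -/
def MoveSeq.Visits (M : MoveSeq) (i : ℕ) : Prop :=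
  ∃ t ≤ M.T, i ∈ M.conf t

namespace PG

def toggle (S : Finset ℕ) (i : ℕ) : Finset ℕ := if i ∈ S then S.erase i else insert i S

def play : Finset ℕ → List ℕ → Finset ℕ
  | S, [] => S
  | S, i :: l => play (toggle S i) l

def Valid : Finset ℕ → List ℕ → Prop
  | _, [] => True
  | S, i :: l => (i = 0 ∨ (1 ≤ i ∧ i - 1 ∈ S)) ∧ Valid (toggle S i) l

def spc : Finset ℕ → List ℕ → ℕ
  | S, [] => S.card
  | S, i :: l => max S.card (spc (toggle S i) l)

@[simp] lemma play_nil (S : Finset ℕ) : play S [] = S := rfl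
@[simp] lemma play_cons (S : Finset ℕ) (i : ℕ) (l : List ℕ) :
    play S (i :: l) = play (toggle S i) l := rfl
@[simp] lemma valid_nil (S : Finset ℕ) : Valid S [] := trivial
lemma valid_cons {S : Finset ℕ} {i : ℕ} {l : List ℕ} :
    Valid S (i :: l) ↔ (i = 0 ∨ (1 ≤ i ∧ i - 1 ∈ S)) ∧ Valid (toggle S i) l := Iff.rfl
@[simp] lemma spc_nil (S : Finset ℕ) : spc S [] = S.card := rfl
@[simp] lemma spc_cons (S : Finset ℕ) (i : ℕ) (l : List ℕ) :
    spc S (i :: l) = max S.card (spc (toggle S i) l) := rfl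

lemma play_append (l1 : List ℕ) : ∀ (l2 : List ℕ) (S : Finset ℕ),
    play S (l1 ++ l2) = play (play S l1) l2 := by
  induction l1 with
  | nil => simp
  | cons i l ih => intro l2 S; simp [ih]

lemma valid_append (l1 : List ℕ) : ∀ (l2 : List ℕ) (S : Finset ℕ),
    Valid S (l1 ++ l2) ↔ Valid S l1 ∧ Valid (play S l1) l2 := by
  induction l1 with
  | nil => simp
  | cons i l ih => intro l2 S; simp [valid_cons, ih, and_assoc]

lemma card_le_spc (S : Finset ℕ) (l : List ℕ) : S.card ≤ spc S l := by
  cases l <;> simp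

lemma spc_append (l1 : List ℕ) : ∀ (l2 : List ℕ) (S : Finset ℕ),
    spc S (l1 ++ l2) = max (spc S l1) (spc (play S l1) l2) := by
  induction l1 with
  | nil =>
    intro l2 S
    simp [Nat.max_eq_right (card_le_spc S l2)]
  | cons i l ih =>
    intro l2 S
    simp [ih, Nat.max_assoc]

lemma play_take_succ : ∀ (l : List ℕ) (S : Finset ℕ) (t : ℕ), t < l.length →
    play S (l.take (t + 1)) = toggle (play S (l.take t)) (l.getD t 0) := by
  intro l
  induction l with
  | nil => intro S t h; simp at h
  | cons i l ih =>
    intro S t h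
    cases t with
    | zero => simp
    | succ t =>
      simp only [List.take_succ_cons, play_cons, List.getD_cons_succ]
      exact ih (toggle S i) t (by simpa using h)

lemma valid_take : ∀ (l : List ℕ) (S : Finset ℕ), Valid S l → ∀ t < l.length,
    l.getD t 0 = 0 ∨ (1 ≤ l.getD t 0 ∧ l.getD t 0 - 1 ∈ play S (l.take t)) := by
  intro l
  induction l with
  | nil => intro S _ t h; simp at h
  | cons i l ih =>
    intro S hv t ht
    cases t with
    | zero => simpa using hv.1
    | succ t =>
      simp only [List.getD_cons_succ, List.take_succ_cons, play_cons]
      exact ih (toggle S i) hv.2 t (by simpa using ht)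

lemma card_play_take : ∀ (l : List ℕ) (S : Finset ℕ) (t : ℕ),
    (play S (l.take t)).card ≤ spc S l := by
  intro l
  induction l with
  | nil => intro S t; simp
  | cons i l ih =>
    intro S t
    cases t with
    | zero => simpa using card_le_spc S (i :: l)
    | succ t =>
      simp only [List.take_succ_cons, play_cons, spc_cons]
      exact le_trans (ih (toggle S i) t) (le_max_right _ _)

def pp : ℕ → Bool := fun i => decide (1 ≤ i)

lemma filter_range_countP : ∀ (l : List ℕ),
    ((Finset.range l.length).filter (fun t => 1 ≤ l.getD t 0)).card = l.countP pp := by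
  intro l
  induction l with
  | nil => simp
  | cons i l ih =>
    rw [Finset.card_filter, List.length_cons, Finset.sum_range_succ']
    simp only [List.getD_cons_succ, List.getD_cons_zero]
    rw [← Finset.card_filter, ih, List.countP_cons]
    simp [pp]

def ofList (L : List ℕ) (h : Valid ∅ L) : MoveSeq where
  T := L.length
  conf t := play ∅ (L.take t)
  move t := L.getD t 0
  init := by simp
  legal := fun t ht => valid_take L ∅ h t ht
  step := fun t ht => play_take_succ L ∅ t ht

lemma ofList_space_le (L : List ℕ) (h : Valid ∅ L) : (ofList L h).space ≤ spc ∅ L := by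
  apply Finset.sup_le
  intro t _
  exact card_play_take L ∅ t

lemma ofList_squarings (L : List ℕ) (h : Valid ∅ L) :
    (ofList L h).squarings = L.countP pp := filter_range_countP L

lemma ofList_clean (L : List ℕ) (h : Valid ∅ L) {m : ℕ} (h2 : play ∅ L = {m}) :
    (ofList L h).CleanlyComputes m := by
  unfold MoveSeq.CleanlyComputes
  show play ∅ (L.take L.length) = {m}
  rwa [List.take_length]

def upL (a n : ℕ) : List ℕ := List.range' a n
def dnL (a n : ℕ) : List ℕ := (List.range' a n).reverse

@[simp] lemma upL_zero (a : ℕ) : upL a 0 = [] := rfl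
@[simp] lemma dnL_zero (a : ℕ) : dnL a 0 = [] := rfl
lemma upL_succ (a n : ℕ) : upL a (n + 1) = a :: upL (a + 1) n := List.range'_succ
lemma dnL_succ (a n : ℕ) : dnL a (n + 1) = (a + n) :: dnL a n := by
  simp [dnL, List.range'_concat]

lemma upL_spec : ∀ (n a : ℕ) (S : Finset ℕ),
    Disjoint (Finset.Ico a (a + n)) S → (a = 0 ∨ (1 ≤ a ∧ a - 1 ∈ S)) →
    Valid S (upL a n) ∧ play S (upL a n) = S ∪ Finset.Ico a (a + n) ∧
      spc S (upL a n) ≤ S.card + n := by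
  intro n
  induction n with
  | zero => intro a S _ _; simp
  | succ n ih =>
    intro a S hdis hpred
    have haS : a ∉ S := by
      intro hc
      exact Finset.disjoint_left.1 hdis (Finset.mem_Ico.2 ⟨le_refl a, by omega⟩) hc
    have htog : toggle S a = insert a S := by simp [toggle, haS]
    have hdis' : Disjoint (Finset.Ico (a + 1) (a + 1 + n)) (insert a S) := by
      rw [Finset.disjoint_left]
      intro x hx
      rw [Finset.mem_Ico] at hx
      simp only [Finset.mem_insert, not_or]
      exact ⟨by omega, fun hc => Finset.disjoint_left.1 hdis (Finset.mem_Ico.2 (by omega)) hc⟩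
    obtain ⟨hv, hp, hs⟩ := ih (a + 1) (insert a S)
      hdis' (Or.inr ⟨by omega, by simp⟩)
    rw [upL_succ]
    refine ⟨⟨hpred, by rwa [htog]⟩, ?_, ?_⟩
    · rw [play_cons, htog, hp]
      ext x
      simp only [Finset.mem_union, Finset.mem_insert, Finset.mem_Ico]
      by_cases hxS : x ∈ S
      · simp only [hxS, true_or, or_true, iff_true]
      · simp only [hxS, false_or, or_false]
        omega
    · rw [spc_cons, htog]
      have : (insert a S).card = S.card + 1 := Finset.card_insert_of_notMem haS
      rw [this] at hs
      omega

lemma dnL_spec : ∀ (n a : ℕ) (S : Finset ℕ),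
    Finset.Ico a (a + n) ⊆ S → (a = 0 ∨ (1 ≤ a ∧ a - 1 ∈ S)) →
    Valid S (dnL a n) ∧ play S (dnL a n) = S \ Finset.Ico a (a + n) ∧
      spc S (dnL a n) ≤ S.card := by
  intro n
  induction n with
  | zero => intro a S _ _; simp
  | succ n ih =>
    intro a S hsub hpred
    have hmem : a + n ∈ S := hsub (Finset.mem_Ico.2 (by omega))
    have htog : toggle S (a + n) = S.erase (a + n) := by simp [toggle, hmem]
    have hleg : a + n = 0 ∨ (1 ≤ a + n ∧ a + n - 1 ∈ S) := by
      cases n with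
      | zero => simpa using hpred
      | succ n =>
        right
        refine ⟨by omega, ?_⟩
        have h3 : a + n ∈ S := hsub (Finset.mem_Ico.2 (by omega))
        have h4 : a + (n + 1) - 1 = a + n := by omega
        rw [h4]
        exact h3
    have hsub' : Finset.Ico a (a + n) ⊆ S.erase (a + n) := by
      intro x hx
      rw [Finset.mem_Ico] at hx
      exact Finset.mem_erase.2 ⟨by omega, hsub (Finset.mem_Ico.2 (by omega))⟩
    have hpred' : a = 0 ∨ (1 ≤ a ∧ a - 1 ∈ S.erase (a + n)) := by
      rcases hpred with h | ⟨h1, h2⟩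
      · exact Or.inl h
      · exact Or.inr ⟨h1, Finset.mem_erase.2 ⟨by omega, h2⟩⟩
    obtain ⟨hv, hp, hs⟩ := ih a (S.erase (a + n)) hsub' hpred'
    rw [dnL_succ]
    refine ⟨⟨hleg, by rwa [htog]⟩, ?_, ?_⟩
    · rw [play_cons, htog, hp]
      ext x
      simp only [Finset.mem_sdiff, Finset.mem_erase, Finset.mem_Ico]
      by_cases hxS : x ∈ S
      · simp only [hxS, true_and, and_true]
        omega
      · simp only [hxS, false_and, and_false]
    · rw [spc_cons, htog]
      exact max_le (le_refl _) (le_trans hs (Finset.card_erase_le))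

lemma countP_upL_pos {a : ℕ} (h : 1 ≤ a) (n : ℕ) : (upL a n).countP pp = n := by
  have h2 : ∀ i ∈ upL a n, pp i = true := by
    intro i hi
    rw [upL, List.mem_range'_1] at hi
    simp only [pp, decide_eq_true_eq]
    omega
  rw [List.countP_eq_length.2 h2, upL, List.length_range']

lemma countP_upL_zero (n : ℕ) : (upL 0 n).countP pp = n - 1 := by
  cases n with
  | zero => simp
  | succ n =>
    rw [upL_succ, List.countP_cons]
    have : (upL (0+1) n).countP pp = n := countP_upL_pos (by omega) n
    simp [pp, this]

lemma countP_dnL (a n : ℕ) : (dnL a n).countP pp = (upL a n).countP pp := by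
  rw [dnL, upL, List.countP_eq_length_filter, List.countP_eq_length_filter,
    List.filter_reverse, List.length_reverse]

def fwb (k j : ℕ) : List ℕ := upL (j*k) k ++ dnL (j*k) (k-1)
def bwb (k j : ℕ) : List ℕ := upL (j*k) (k-1) ++ (j*k + (k-1)) :: dnL (j*k) (k-1)
def Bset (k j : ℕ) : Finset ℕ := (Finset.range j).image fun i => i*k + (k-1)

@[simp] lemma Bset_zero (k : ℕ) : Bset k 0 = ∅ := by simp [Bset]

lemma Bset_succ (k j : ℕ) : Bset k (j+1) = insert (j*k + (k-1)) (Bset k j) := by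
  rw [Bset, Finset.range_add_one, Finset.image_insert]; rfl

lemma mem_Bset_lt {k j x : ℕ} (hk : 1 ≤ k) (hx : x ∈ Bset k j) : x + 1 ≤ j * k := by
  rw [Bset, Finset.mem_image] at hx
  obtain ⟨i, hi, hix⟩ := hx
  rw [Finset.mem_range] at hi
  have e : (i+1)*k = i*k + k := by ring
  have h2 : (i+1)*k ≤ j*k := Nat.mul_le_mul_right k (by omega)
  omega

lemma Bset_card {k : ℕ} (hk : 1 ≤ k) (j : ℕ) : (Bset k j).card = j := by
  rw [Bset, Finset.card_image_of_injective _ ?_, Finset.card_range]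
  intro a b hab
  have hab' : a * k + (k - 1) = b * k + (k - 1) := hab
  have h2 : a * k = b * k := by omega
  exact Nat.eq_of_mul_eq_mul_right (by omega) h2

lemma Bset_pred_mem {k : ℕ} (hk : 1 ≤ k) {j j' : ℕ} (hj : 1 ≤ j) (hjj : j ≤ j') :
    j * k - 1 ∈ Bset k j' := by
  rw [Bset, Finset.mem_image]
  refine ⟨j - 1, Finset.mem_range.2 (by omega), ?_⟩
  show (j - 1) * k + (k - 1) = j * k - 1
  have e2 : j - 1 + 1 = j := by omega
  have e : j * k = (j-1)*k + k := by nth_rewrite 1 [← e2]; rw [Nat.succ_mul]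
  omega

lemma Bset_pred {k : ℕ} (hk : 1 ≤ k) (j : ℕ) :
    j * k = 0 ∨ (1 ≤ j * k ∧ j * k - 1 ∈ Bset k j) := by
  cases j with
  | zero => left; simp
  | succ j =>
    right
    constructor
    · exact Nat.one_le_iff_ne_zero.2 (Nat.mul_ne_zero (Nat.succ_ne_zero j) (by omega))
    · exact Bset_pred_mem hk (by omega) (le_refl _)

lemma fwb_spec {k : ℕ} (hk : 2 ≤ k) (j : ℕ) :
    Valid (Bset k j) (fwb k j) ∧ play (Bset k j) (fwb k j) = Bset k (j+1) ∧
      spc (Bset k j) (fwb k j) ≤ j + k := by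
  have hk1 : 1 ≤ k := by omega
  have hdis : Disjoint (Finset.Ico (j*k) (j*k + k)) (Bset k j) := by
    rw [Finset.disjoint_right]
    intro x hx
    have := mem_Bset_lt hk1 hx
    rw [Finset.mem_Ico]
    omega
  obtain ⟨huv, hup, hus⟩ := upL_spec k (j*k) (Bset k j) hdis (Bset_pred hk1 j)
  set S1 := Bset k j ∪ Finset.Ico (j*k) (j*k + k) with hS1
  have hsub : Finset.Ico (j*k) (j*k + (k-1)) ⊆ S1 := by
    intro x hx
    rw [Finset.mem_Ico] at hx
    exact Finset.mem_union_right _ (Finset.mem_Ico.2 (by omega))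
  have hpred' : j*k = 0 ∨ (1 ≤ j*k ∧ j*k - 1 ∈ S1) := by
    rcases Bset_pred hk1 j with h | ⟨h1, h2⟩
    · exact Or.inl h
    · exact Or.inr ⟨h1, Finset.mem_union_left _ h2⟩
  obtain ⟨hdv, hdp, hds⟩ := dnL_spec (k-1) (j*k) S1 hsub hpred'
  have hS1card : S1.card = j + k := by
    rw [hS1, Finset.card_union_of_disjoint hdis.symm, Bset_card hk1, Nat.card_Ico]
    omega
  refine ⟨?_, ?_, ?_⟩
  · rw [fwb, valid_append]
    exact ⟨huv, by rw [hup]; exact hdv⟩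
  · rw [fwb, play_append, hup, hdp, Bset_succ]
    ext x
    by_cases hx : x ∈ Bset k j
    · have := mem_Bset_lt hk1 hx
      simp only [hS1, Finset.mem_sdiff, Finset.mem_union, Finset.mem_Ico,
        Finset.mem_insert, hx, true_or, or_true, iff_true, true_and, and_true]
      omega
    · simp only [hS1, Finset.mem_sdiff, Finset.mem_union, Finset.mem_Ico,
        Finset.mem_insert, hx, false_or, or_false, true_and, and_true]
      omega
  · rw [fwb, spc_append, hup]
    rw [Bset_card hk1] at hus
    omega

lemma bwb_spec {k m : ℕ} (hk : 2 ≤ k) {j : ℕ} (hm : j*k + k ≤ m) :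
    Valid (insert m (Bset k (j+1))) (bwb k j) ∧
      play (insert m (Bset k (j+1))) (bwb k j) = insert m (Bset k j) ∧
      spc (insert m (Bset k (j+1))) (bwb k j) ≤ j + k + 1 := by
  have hk1 : 1 ≤ k := by omega
  set x := j*k + (k-1) with hx
  set S0 := insert m (Bset k (j+1)) with hS0
  have hxB : x ∈ Bset k (j+1) := by rw [Bset_succ]; exact Finset.mem_insert_self _ _
  have hmB : m ∉ Bset k (j+1) := by
    intro hc
    have := mem_Bset_lt hk1 hc
    have e : (j+1)*k = j*k + k := by ring
    omega
  have hS0card : S0.card = j + 2 := by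
    rw [hS0, Finset.card_insert_of_notMem hmB, Bset_card hk1]
  have hdis : Disjoint (Finset.Ico (j*k) (j*k + (k-1))) S0 := by
    rw [Finset.disjoint_right]
    intro y hy
    rw [Finset.mem_Ico]
    rw [hS0, Finset.mem_insert, Bset_succ, Finset.mem_insert] at hy
    rcases hy with h | h | h
    · omega
    · omega
    · have := mem_Bset_lt hk1 h
      omega
  have hpred : j*k = 0 ∨ (1 ≤ j*k ∧ j*k - 1 ∈ S0) := by
    rcases Bset_pred hk1 j with h | ⟨h1, h2⟩
    · exact Or.inl h
    · refine Or.inr ⟨h1, ?_⟩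
      rw [hS0, Bset_succ]
      exact Finset.mem_insert_of_mem (Finset.mem_insert_of_mem
        (by rw [Bset_succ] at hxB; exact h2))
  obtain ⟨huv, hup, hus⟩ := upL_spec (k-1) (j*k) S0 hdis hpred
  set S1 := S0 ∪ Finset.Ico (j*k) (j*k + (k-1)) with hS1
  have hxS1 : x ∈ S1 := Finset.mem_union_left _ (Finset.mem_insert_of_mem hxB)
  have htog : toggle S1 x = S1.erase x := by simp [toggle, hxS1]
  have hleg : x = 0 ∨ (1 ≤ x ∧ x - 1 ∈ S1) := by
    refine Or.inr ⟨by omega, ?_⟩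
    apply Finset.mem_union_right
    rw [Finset.mem_Ico]
    omega
  have hS2 : S1.erase x = insert m (Bset k j) ∪ Finset.Ico (j*k) (j*k + (k-1)) := by
    ext y
    have hyx : y ∈ Bset k j → y + 1 ≤ j * k := fun h => mem_Bset_lt hk1 h
    by_cases hy : y ∈ Bset k j
    · have := hyx hy
      simp only [hS1, hS0, Bset_succ, Finset.mem_erase, Finset.mem_union,
        Finset.mem_insert, Finset.mem_Ico, hy, or_true, true_or, iff_true, true_and, and_true]
      omega
    · simp only [hS1, hS0, Bset_succ, Finset.mem_erase, Finset.mem_union,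
        Finset.mem_insert, Finset.mem_Ico, hy, or_false, false_or, true_and, and_true]
      omega
  have hsub2 : Finset.Ico (j*k) (j*k + (k-1)) ⊆ insert m (Bset k j) ∪ Finset.Ico (j*k) (j*k + (k-1)) := Finset.subset_union_right
  have hpred2 : j*k = 0 ∨ (1 ≤ j*k ∧ j*k - 1 ∈ insert m (Bset k j) ∪ Finset.Ico (j*k) (j*k + (k-1))) := by
    rcases Bset_pred hk1 j with h | ⟨h1, h2⟩
    · exact Or.inl h
    · exact Or.inr ⟨h1, Finset.mem_union_left _ (Finset.mem_insert_of_mem h2)⟩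
  obtain ⟨hdv, hdp, hds⟩ := dnL_spec (k-1) (j*k) _ hsub2 hpred2
  have hfin : (insert m (Bset k j) ∪ Finset.Ico (j*k) (j*k + (k-1))) \ Finset.Ico (j*k) (j*k + (k-1)) = insert m (Bset k j) := by
    ext y
    by_cases hy : y ∈ Bset k j
    · have := mem_Bset_lt hk1 hy
      simp only [Finset.mem_sdiff, Finset.mem_union, Finset.mem_insert,
        Finset.mem_Ico, hy, or_true, true_or, iff_true, true_and, and_true]
      omega
    · simp only [Finset.mem_sdiff, Finset.mem_union, Finset.mem_insert,
        Finset.mem_Ico, hy, or_false, false_or, true_and, and_true]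
      omega
  have hS1card : S1.card = j + k + 1 := by
    rw [hS1, Finset.card_union_of_disjoint hdis.symm, hS0card, Nat.card_Ico]
    omega
  refine ⟨?_, ?_, ?_⟩
  · rw [bwb, valid_append, hup]
    refine ⟨huv, hleg, ?_⟩
    rw [htog, hS2]
    exact hdv
  · rw [bwb, play_append, hup, play_cons, htog, hS2, hdp, hfin]
  · rw [bwb, spc_append, hup, spc_cons, htog, hS2]
    rw [hS0card] at hus
    have h2 : (insert m (Bset k j) ∪ Finset.Ico (j*k) (j*k + (k-1))).card ≤ S1.card := by
      rw [← hS2]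
      exact Finset.card_erase_le
    omega

def FJ (k j : ℕ) : List ℕ := ((List.range j).map (fwb k)).flatten
def GJ (k j : ℕ) : List ℕ := ((List.range j).reverse.map (bwb k)).flatten

@[simp] lemma FJ_zero (k : ℕ) : FJ k 0 = [] := rfl
@[simp] lemma GJ_zero (k : ℕ) : GJ k 0 = [] := rfl
lemma FJ_succ (k j : ℕ) : FJ k (j+1) = FJ k j ++ fwb k j := by
  simp [FJ, List.range_succ]
lemma GJ_succ (k j : ℕ) : GJ k (j+1) = bwb k j ++ GJ k j := by
  simp [GJ, List.range_succ]

lemma countP_fwb_zero {k : ℕ} (hk : 2 ≤ k) : (fwb k 0).countP pp = 2*k - 3 := by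
  rw [fwb, List.countP_append, countP_dnL]
  simp only [Nat.zero_mul]
  rw [countP_upL_zero, countP_upL_zero]
  omega

lemma countP_fwb_pos {k j : ℕ} (hk : 2 ≤ k) (hj : 1 ≤ j) :
    (fwb k j).countP pp = 2*k - 1 := by
  have hjk : 1 ≤ j * k := Nat.mul_pos (by omega) (by omega)
  rw [fwb, List.countP_append, countP_dnL, countP_upL_pos hjk, countP_upL_pos hjk]
  omega

lemma countP_bwb_zero {k : ℕ} (hk : 2 ≤ k) : (bwb k 0).countP pp = 2*k - 3 := by
  rw [bwb, List.countP_append, List.countP_cons, countP_dnL]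
  simp only [Nat.zero_mul, Nat.zero_add]
  rw [countP_upL_zero]
  have : pp (k - 1) = true := by simp only [pp, decide_eq_true_eq]; omega
  rw [this]
  simp only [if_true]
  omega

lemma countP_bwb_pos {k j : ℕ} (hk : 2 ≤ k) (hj : 1 ≤ j) :
    (bwb k j).countP pp = 2*k - 1 := by
  have hjk : 1 ≤ j * k := Nat.mul_pos (by omega) (by omega)
  rw [bwb, List.countP_append, List.countP_cons, countP_dnL,
    countP_upL_pos hjk]
  have : pp (j*k + (k - 1)) = true := by simp only [pp, decide_eq_true_eq]; omega
  rw [this]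
  simp only [if_true]
  omega

lemma fwd_spec {k : ℕ} (hk : 2 ≤ k) : ∀ j : ℕ,
    Valid ∅ (FJ k j) ∧ play ∅ (FJ k j) = Bset k j ∧ spc ∅ (FJ k j) + 1 ≤ j + k ∧
      (FJ k j).countP pp + 2 * min j 1 = j * (2*k-1) := by
  intro j
  induction j with
  | zero => refine ⟨trivial, by simp, by simp; omega, by simp⟩
  | succ j ih =>
    obtain ⟨ihv, ihp, ihs, ihc⟩ := ih
    obtain ⟨bv, bp, bs⟩ := fwb_spec hk j
    have e : (j+1) * (2*k-1) = j * (2*k-1) + (2*k-1) := by ring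
    refine ⟨?_, ?_, ?_, ?_⟩
    · rw [FJ_succ, valid_append, ihp]
      exact ⟨ihv, bv⟩
    · rw [FJ_succ, play_append, ihp, bp]
    · rw [FJ_succ, spc_append, ihp]
      omega
    · rw [FJ_succ, List.countP_append]
      rcases Nat.eq_zero_or_pos j with hj | hj
      · subst hj
        rw [countP_fwb_zero hk]
        simp only [FJ_zero, List.countP_nil] at *
        omega
      · rw [countP_fwb_pos hk hj]
        omega

lemma bwd_spec {k m q : ℕ} (hk : 2 ≤ k) (hm : q * k ≤ m) : ∀ j ≤ q,
    Valid (insert m (Bset k j)) (GJ k j) ∧ play (insert m (Bset k j)) (GJ k j) = {m} ∧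
      spc (insert m (Bset k j)) (GJ k j) ≤ j + k ∧
      (GJ k j).countP pp + 2 * min j 1 = j * (2*k-1) := by
  intro j
  induction j with
  | zero =>
    intro _
    refine ⟨by simp, by simp, ?_, by simp⟩
    simp only [GJ_zero, spc_nil]
    rw [Finset.card_insert_of_notMem (by simp), Bset_zero, Finset.card_empty]
    omega
  | succ j ih =>
    intro hjq
    obtain ⟨ihv, ihp, ihs, ihc⟩ := ih (by omega)
    have hjm : j * k + k ≤ m := by
      have e : (j+1) * k = j * k + k := by ring
      have h2 : (j+1) * k ≤ q * k := Nat.mul_le_mul_right k hjq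
      omega
    obtain ⟨bv, bp, bs⟩ := bwb_spec hk hjm
    have e : (j+1) * (2*k-1) = j * (2*k-1) + (2*k-1) := by ring
    refine ⟨?_, ?_, ?_, ?_⟩
    · rw [GJ_succ, valid_append, bp]
      exact ⟨bv, ihv⟩
    · rw [GJ_succ, play_append, bp, ihp]
    · rw [GJ_succ, spc_append, bp]
      omega
    · rw [GJ_succ, List.countP_append]
      rcases Nat.eq_zero_or_pos j with hj | hj
      · subst hj
        rw [countP_bwb_zero hk]
        simp only [GJ_zero, List.countP_nil] at *
        omega
      · rw [countP_bwb_pos hk hj]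
        omega

end PG

open PG

/-- the simple strategy with block size `k`. -/
theorem simple_strategy_cost (m k : ℕ) (hk : 2 ≤ k) (hm : 2 * k ≤ m + 1) :
    ∃ M : MoveSeq, M.CleanlyComputes m ∧
      (M.space : ℤ) ≤ ⌈((m : ℚ) + 1) / k⌉ + k - 1 ∧
      (M.squarings : ℤ) ≤
        (2 * ⌈((m : ℚ) + 1) / k⌉ - 1) * (2 * (k : ℤ) - 1)
          + 2 * (((m : ℤ) + 1) - (k : ℤ) * ⌈((m : ℚ) + 1) / k⌉) - 4 := by
  have hk1 : 1 ≤ k := by omega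
  set q := m / k with hqdef
  set s := m % k with hsdef
  have hdm : k * q + s = m := Nat.div_add_mod m k
  have hqk : q * k + s = m := by rw [mul_comm]; exact hdm
  have hsk : s < k := Nat.mod_lt m (by omega)
  have hq1 : 1 ≤ q := by
    rw [hqdef]
    rw [Nat.le_div_iff_mul_le (by omega)]
    omega
  have hqkm : q * k ≤ m := by omega
  have hqk1 : 1 ≤ q * k := Nat.mul_pos (by omega) (by omega)
  -- the three phases
  obtain ⟨fv, fp, fs, fc⟩ := fwd_spec hk q
  obtain ⟨gv, gp, gs, gc⟩ := bwd_spec hk hqkm q le_rfl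
  -- middle segment
  have hdis : Disjoint (Finset.Ico (q*k) (q*k + (s+1))) (Bset k q) := by
    rw [Finset.disjoint_right]
    intro x hx
    have := mem_Bset_lt hk1 hx
    rw [Finset.mem_Ico]
    omega
  obtain ⟨muv, mup, mus⟩ := upL_spec (s+1) (q*k) (Bset k q) hdis (Bset_pred hk1 q)
  have hsub : Finset.Ico (q*k) (q*k + s) ⊆ Bset k q ∪ Finset.Ico (q*k) (q*k + (s+1)) := by
    intro x hx
    rw [Finset.mem_Ico] at hx
    exact Finset.mem_union_right _ (Finset.mem_Ico.2 (by omega))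
  have hpred' : q*k = 0 ∨ (1 ≤ q*k ∧ q*k - 1 ∈ Bset k q ∪ Finset.Ico (q*k) (q*k + (s+1))) := by
    rcases Bset_pred hk1 q with h | ⟨h1, h2⟩
    · exact Or.inl h
    · exact Or.inr ⟨h1, Finset.mem_union_left _ h2⟩
  obtain ⟨mdv, mdp, mds⟩ := dnL_spec s (q*k) _ hsub hpred'
  have hucard : (Bset k q ∪ Finset.Ico (q*k) (q*k + (s+1))).card = q + s + 1 := by
    rw [Finset.card_union_of_disjoint hdis.symm, Bset_card hk1, Nat.card_Ico]
    omega
  have hmidp : play (Bset k q) (upL (q*k) (s+1) ++ dnL (q*k) s) = insert m (Bset k q) := by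
    rw [play_append, mup, mdp]
    ext y
    by_cases hy : y ∈ Bset k q
    · have := mem_Bset_lt hk1 hy
      simp only [Finset.mem_sdiff, Finset.mem_union, Finset.mem_Ico, Finset.mem_insert,
        hy, true_or, or_true, iff_true, true_and, and_true]
      omega
    · simp only [Finset.mem_sdiff, Finset.mem_union, Finset.mem_Ico, Finset.mem_insert,
        hy, false_or, or_false, true_and, and_true]
      omega
  set L := FJ k q ++ ((upL (q*k) (s+1) ++ dnL (q*k) s) ++ GJ k q) with hL
  have hvalid : Valid ∅ L := by
    rw [hL, valid_append, fp, valid_append, hmidp]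
    refine ⟨fv, ?_, gv⟩
    rw [valid_append, mup]
    exact ⟨muv, mdv⟩
  have hplay : play ∅ L = {m} := by
    rw [hL, play_append, fp, play_append, hmidp, gp]
  have hspc : spc ∅ L ≤ q + k := by
    rw [hL, spc_append, fp, spc_append, hmidp, spc_append, mup]
    rw [Bset_card hk1] at mus
    rw [hucard] at mds
    omega
  have hcount : L.countP pp + 4 + 2 * q = 4 * (q * k) + 2 * s + 1 := by
    have e : q * (2*k-1) + q = 2 * (q * k) := by
      have e2 : (2*k-1) + 1 = 2*k := by omega
      calc q * (2*k-1) + q = q * ((2*k-1) + 1) := by ring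
        _ = q * (2*k) := by rw [e2]
        _ = 2 * (q * k) := by ring
    have hup1 : (upL (q*k) (s+1)).countP pp = s + 1 := countP_upL_pos hqk1 (s+1)
    have hdn1 : (dnL (q*k) s).countP pp = s := by
      rw [countP_dnL, countP_upL_pos hqk1]
    rw [hL, List.countP_append, List.countP_append, List.countP_append, hup1, hdn1]
    omega
  refine ⟨ofList L hvalid, ofList_clean L hvalid hplay, ?_, ?_⟩
  · -- ceiling value
    have hceil : ⌈((m : ℚ) + 1) / (k:ℚ)⌉ = (q : ℤ) + 1 := by
      rw [Int.ceil_eq_iff]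
      constructor
      · rw [lt_div_iff₀ (by positivity)]
        have h2 : (q*k : ℚ) < (m:ℚ) + 1 := by exact_mod_cast (by omega : q*k < m + 1)
        push_cast
        nlinarith
      · rw [div_le_iff₀ (by positivity)]
        have h3 : m + 1 ≤ (q+1) * k := by
          have e : (q+1)*k = q*k + k := by ring
          omega
        have h4 : (m:ℚ) + 1 ≤ ((q:ℚ)+1) * k := by exact_mod_cast h3
        push_cast
        nlinarith
    rw [hceil]
    have h5 : (ofList L hvalid).space ≤ q + k := le_trans (ofList_space_le L hvalid) hspc
    have h6 : ((ofList L hvalid).space : ℤ) ≤ (q : ℤ) + k := by exact_mod_cast h5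
    linarith
  · have hceil : ⌈((m : ℚ) + 1) / (k:ℚ)⌉ = (q : ℤ) + 1 := by
      rw [Int.ceil_eq_iff]
      constructor
      · rw [lt_div_iff₀ (by positivity)]
        have h2 : (q*k : ℚ) < (m:ℚ) + 1 := by exact_mod_cast (by omega : q*k < m + 1)
        push_cast
        nlinarith
      · rw [div_le_iff₀ (by positivity)]
        have h3 : m + 1 ≤ (q+1) * k := by
          have e : (q+1)*k = q*k + k := by ring
          omega
        have h4 : (m:ℚ) + 1 ≤ ((q:ℚ)+1) * k := by exact_mod_cast h3
        push_cast
        nlinarith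
    rw [hceil, ofList_squarings]
    have hcZ : (L.countP pp : ℤ) + 4 + 2 * q = 4 * (q * k) + 2 * s + 1 := by
      exact_mod_cast hcount
    have hmZ : (m : ℤ) = q * k + s := by exact_mod_cast hqk.symm
    have hgoal : (L.countP pp : ℤ) =
        (2 * ((q:ℤ) + 1) - 1) * (2 * (k : ℤ) - 1)
          + 2 * (((m : ℤ) + 1) - (k : ℤ) * ((q:ℤ) + 1)) - 4 := by
      linear_combination hcZ - 2 * hmZ
    exact le_of_eq hgoal
end

section
/- For every m ≥ 1 and every k with 1 ≤ k ≤ m + 1, there exists a move sequence that cleanly computes m whose space is at most ⌈(m+1)/k⌉ + k − 1 and which contains at most 4m − 2 squaring operations. -/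
namespace PebbleAux

def toggle (S : Finset ℕ) (i : ℕ) : Finset ℕ :=
  if i ∈ S then S.erase i else insert i S

def applyList : Finset ℕ → List ℕ → Finset ℕ
  | S, [] => S
  | S, i :: L => applyList (toggle S i) L

@[simp] lemma applyList_nil (S : Finset ℕ) : applyList S [] = S := rfl
@[simp] lemma applyList_cons (S : Finset ℕ) (i : ℕ) (L : List ℕ) :
    applyList S (i :: L) = applyList (toggle S i) L := rfl

lemma applyList_append (S : Finset ℕ) (L1 L2 : List ℕ) :
    applyList S (L1 ++ L2) = applyList (applyList S L1) L2 := by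
  induction L1 generalizing S with
  | nil => rfl
  | cons a L ih => simp [ih]

/-- legality plus space bound `B` along the whole sequence. -/
def Good (B : ℕ) : Finset ℕ → List ℕ → Prop
  | S, [] => S.card ≤ B
  | S, i :: L => S.card ≤ B ∧ (i = 0 ∨ (1 ≤ i ∧ i - 1 ∈ S)) ∧ Good B (toggle S i) L

lemma Good.card_start {B : ℕ} {S : Finset ℕ} {L : List ℕ} (h : Good B S L) :
    S.card ≤ B := by
  cases L with
  | nil => exact h
  | cons a L => exact h.1

lemma Good.append {B : ℕ} {S : Finset ℕ} {L1 L2 : List ℕ}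
    (h1 : Good B S L1) (h2 : Good B (applyList S L1) L2) :
    Good B S (L1 ++ L2) := by
  induction L1 generalizing S with
  | nil => exact h2
  | cons a L ih => exact ⟨h1.1, h1.2.1, ih h1.2.2 h2⟩

lemma Good.prefix_card {B : ℕ} {S : Finset ℕ} {L : List ℕ} (h : Good B S L) :
    ∀ t, (applyList S (L.take t)).card ≤ B := by
  intro t
  induction L generalizing S t with
  | nil => simpa [Good] using h
  | cons a L ih =>
    cases t with
    | zero => simpa using h.1
    | succ t => simpa using ih h.2.2 t

lemma Good.legal {B : ℕ} {S : Finset ℕ} {L : List ℕ} (h : Good B S L) :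
    ∀ t < L.length, (L.getD t 0 = 0 ∨
      (1 ≤ L.getD t 0 ∧ L.getD t 0 - 1 ∈ applyList S (L.take t))) := by
  intro t ht
  induction L generalizing S t with
  | nil => simp at ht
  | cons a L ih =>
    cases t with
    | zero => simpa using h.2.1
    | succ t =>
      simp only [List.length_cons, Nat.succ_lt_succ_iff] at ht
      simpa using ih h.2.2 t ht


/-- moves `[a+1, a+2, …, a+n]`. -/
def up (a n : ℕ) : List ℕ := (List.range n).map (fun i => a + 1 + i)

/-- moves `[a+n, …, a+2, a+1]`. -/
def down (a n : ℕ) : List ℕ := (up a n).reverse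

lemma up_succ (a n : ℕ) : up a (n + 1) = up a n ++ [a + 1 + n] := by
  simp [up, List.range_succ]

lemma down_succ (a n : ℕ) : down a (n + 1) = (a + 1 + n) :: down a n := by
  simp [down, up_succ]

@[simp] lemma up_zero (a : ℕ) : up a 0 = [] := rfl
@[simp] lemma down_zero (a : ℕ) : down a 0 = [] := rfl
@[simp] lemma up_length (a n : ℕ) : (up a n).length = n := by simp [up]
@[simp] lemma down_length (a n : ℕ) : (down a n).length = n := by simp [down]

lemma up_spec {B a n : ℕ} {S : Finset ℕ} (ha : a ∈ S)
    (hd : ∀ x ∈ S, x ≤ a ∨ a + n < x) (hB : S.card + n ≤ B) :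
    Good B S (up a n) ∧ applyList S (up a n) = S ∪ Finset.Ioc a (a + n) := by
  induction n with
  | zero =>
    constructor
    · simpa [Good] using le_trans (Nat.le_add_right _ 0) hB
    · simp
  | succ n ih =>
    have hd' : ∀ x ∈ S, x ≤ a ∨ a + n < x := by
      intro x hx; rcases hd x hx with h | h
      · exact Or.inl h
      · exact Or.inr (by omega)
    obtain ⟨hg, happ⟩ := ih hd' (by omega)
    have hnot : a + 1 + n ∉ S ∪ Finset.Ioc a (a + n) := by
      simp only [Finset.mem_union, Finset.mem_Ioc, not_or]
      constructor
      · intro hmem; rcases hd _ hmem with h | h <;> omega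
      · omega
    have hprev : a + n ∈ S ∪ Finset.Ioc a (a + n) := by
      rcases Nat.eq_zero_or_pos n with h | h
      · subst h; simpa using ha
      · exact Finset.mem_union_right _ (by simp [Finset.mem_Ioc]; omega)
    have hcard : (S ∪ Finset.Ioc a (a + n)).card ≤ S.card + n := by
      calc (S ∪ Finset.Ioc a (a + n)).card ≤ S.card + (Finset.Ioc a (a + n)).card :=
            Finset.card_union_le _ _
        _ = S.card + n := by rw [Nat.card_Ioc]; omega
    have htog : toggle (S ∪ Finset.Ioc a (a + n)) (a + 1 + n)
        = S ∪ Finset.Ioc a (a + (n + 1)) := by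
      rw [toggle, if_neg hnot]
      ext x
      by_cases hx : x ∈ S <;>
        simp only [Finset.mem_insert, Finset.mem_union, Finset.mem_Ioc, hx,
          true_or, false_or, true_iff, iff_true, or_false, or_true] <;> omega
    have hcard2 : (S ∪ Finset.Ioc a (a + (n+1))).card ≤ S.card + (n+1) := by
      calc (S ∪ Finset.Ioc a (a + (n+1))).card
          ≤ S.card + (Finset.Ioc a (a + (n+1))).card := Finset.card_union_le _ _
        _ = S.card + (n+1) := by rw [Nat.card_Ioc]; omega
    rw [up_succ]
    refine ⟨Good.append hg ?_, ?_⟩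
    · rw [happ]
      exact ⟨le_trans hcard (by omega),
        Or.inr ⟨by omega, by simpa using hprev⟩,
        by rw [htog]; exact le_trans hcard2 hB⟩
    · rw [applyList_append, happ]
      simpa [applyList] using htog

lemma down_spec {B a n : ℕ} {S : Finset ℕ} (ha : a ∈ S)
    (hsub : Finset.Ioc a (a + n) ⊆ S) (hB : S.card ≤ B) :
    Good B S (down a n) ∧ applyList S (down a n) = S \ Finset.Ioc a (a + n) := by
  induction n generalizing S with
  | zero =>
    constructor
    · simpa [Good] using hB
    · simp
  | succ n ih =>
    have hmem : a + 1 + n ∈ S := hsub (by simp [Finset.mem_Ioc]; omega)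
    have hprev : a + n ∈ S := by
      rcases Nat.eq_zero_or_pos n with h | h
      · subst h; simpa using ha
      · exact hsub (by simp [Finset.mem_Ioc]; omega)
    have htog : toggle S (a + 1 + n) = S.erase (a + 1 + n) := by
      rw [toggle, if_pos hmem]
    have ha' : a ∈ S.erase (a + 1 + n) := Finset.mem_erase.2 ⟨by omega, ha⟩
    have hsub' : Finset.Ioc a (a + n) ⊆ S.erase (a + 1 + n) := by
      intro x hx
      simp only [Finset.mem_Ioc] at hx
      exact Finset.mem_erase.2 ⟨by omega, hsub (by simp [Finset.mem_Ioc]; omega)⟩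
    have hB' : (S.erase (a + 1 + n)).card ≤ B :=
      le_trans (Finset.card_erase_le) hB
    obtain ⟨hg, happ⟩ := ih ha' hsub' hB'
    rw [down_succ]
    refine ⟨⟨hB, Or.inr ⟨by omega, by simpa using hprev⟩, by rw [htog]; exact hg⟩, ?_⟩
    · simp only [applyList, htog, happ]
      ext x
      by_cases hx : x ∈ S <;>
        simp only [Finset.mem_sdiff, Finset.mem_erase, Finset.mem_Ioc, hx,
          true_and, false_and, and_true, and_false, not_and, not_le, not_lt,
          false_iff, not_or] <;> omega


lemma take_succ_of_lt {L : List ℕ} {t : ℕ} (h : t < L.length) :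
    L.take (t + 1) = L.take t ++ [L.getD t 0] := by
  rw [List.take_succ]
  congr 1
  rw [List.getD_eq_getElem?_getD, List.getElem?_eq_getElem h]
  rfl

/-- Build a `MoveSeq` from a legal list of moves. -/
def ofList (L : List ℕ) {B : ℕ} (h : Good B ∅ L) : MoveSeq where
  T := L.length
  conf := fun t => applyList ∅ (L.take t)
  move := fun t => L.getD t 0
  init := by simp [applyList]
  legal := fun t ht => h.legal t ht
  step := by
    intro t ht
    rw [take_succ_of_lt ht, applyList_append]
    simp only [applyList, toggle]

lemma ofList_space_le (L : List ℕ) {B : ℕ} (h : Good B ∅ L) :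
    (ofList L h).space ≤ B := by
  apply Finset.sup_le
  intro t _
  exact h.prefix_card t

lemma countP_eq (L : List ℕ) :
    ((Finset.range L.length).filter fun t => 1 ≤ L.getD t 0).card
      = L.countP (fun i => 1 ≤ i) := by
  induction L using List.reverseRecOn with
  | nil => simp
  | append_singleton L a ih =>
    rw [List.length_append, List.length_singleton, Finset.range_add_one,
      List.countP_append]
    rw [Finset.filter_insert]
    have hgd : ∀ t < L.length, (L ++ [a]).getD t 0 = L.getD t 0 := by
      intro t ht
      rw [List.getD_eq_getElem?_getD, List.getD_eq_getElem?_getD,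
        List.getElem?_append_left ht]
    have hfil : (Finset.range L.length).filter (fun t => 1 ≤ (L ++ [a]).getD t 0)
        = (Finset.range L.length).filter (fun t => 1 ≤ L.getD t 0) := by
      apply Finset.filter_congr
      intro t ht
      rw [Finset.mem_range] at ht
      simp only [List.getD_eq_getElem?_getD, List.getElem?_append_left ht]
    have hlast : (L ++ [a]).getD L.length 0 = a := by
      rw [List.getD_eq_getElem?_getD, List.getElem?_append_right le_rfl]
      simp
    by_cases hp : 1 ≤ a
    · rw [if_pos (by rw [hlast]; exact hp), Finset.card_insert_of_notMem (by simp),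
        hfil, ih]
      simp [List.countP_singleton, hp]
    · rw [if_neg (by rw [hlast]; exact hp), hfil, ih]
      simp [List.countP_singleton, hp]

lemma ofList_squarings_le (L : List ℕ) {B : ℕ} (h : Good B ∅ L) {n : ℕ}
    (hn : L.countP (fun i => 1 ≤ i) ≤ n) : (ofList L h).squarings ≤ n := by
  unfold MoveSeq.squarings ofList
  rw [countP_eq]
  exact hn

lemma ofList_cleanly (L : List ℕ) {B : ℕ} (h : Good B ∅ L) {m : ℕ}
    (hL : applyList ∅ L = {m}) : (ofList L h).CleanlyComputes m := by
  unfold MoveSeq.CleanlyComputes ofList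
  simpa using hL


@[simp] lemma countP_up (a n : ℕ) : (up a n).countP (fun i => 1 ≤ i) = n := by
  induction n with
  | zero => rfl
  | succ n ih =>
    rw [up_succ, List.countP_append, ih, List.countP_cons, List.countP_nil]
    simp [show (1:ℕ) ≤ a + 1 + n by omega]
@[simp] lemma countP_down (a n : ℕ) : (down a n).countP (fun i => 1 ≤ i) = n := by
  induction n with
  | zero => rfl
  | succ n ih =>
    rw [down_succ, List.countP_cons, ih]
    simp [show (1:ℕ) ≤ a + 1 + n by omega]

/-! ### The checkpoint strategy -/

/-- checkpoint positions: `c j = j*k - 1` for `j < q`, and `c q = m`. -/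
def c (m k q j : ℕ) : ℕ := if j < q then j * k - 1 else m

/-- the set of the first `j` checkpoints `c 1, …, c j`. -/
def Cset (m k q j : ℕ) : Finset ℕ := (Finset.Icc 1 j).image (c m k q)

section Facts

variable {m k q : ℕ}

lemma c_zero (hq : 2 ≤ q) : c m k q 0 = 0 := by
  unfold c; rw [if_pos (show 0 < q by omega)]; omega

lemma c_one (hk : 2 ≤ k) (hq : 2 ≤ q) : c m k q 1 = k - 1 := by
  unfold c; rw [if_pos (show 1 < q by omega)]; omega

lemma c_top : c m k q q = m := by simp [c]

lemma c_mono (hk : 2 ≤ k) (hq : 2 ≤ q) (hq1 : m + 1 ≤ q * k) (hq2 : q * k ≤ m + k)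
    {i j : ℕ} (hij : i < j) (hjq : j ≤ q) : c m k q i < c m k q j := by
  have hiq : i < q := lt_of_lt_of_le hij hjq
  have hik : i * k + k ≤ j * k := by
    calc i * k + k = (i + 1) * k := by ring
      _ ≤ j * k := Nat.mul_le_mul_right k (by omega)
  have h2k : 2 * k ≤ q * k := Nat.mul_le_mul_right k hq
  rcases lt_or_eq_of_le hjq with hj | hj
  · have hjk : j * k + k ≤ q * k := by
      calc j * k + k = (j + 1) * k := by ring
        _ ≤ q * k := Nat.mul_le_mul_right k (by omega)
    simp only [c, if_pos hiq, if_pos hj]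
    omega
  · rw [hj, c_top]
    rw [hj] at hik
    simp only [c, if_pos hiq]
    omega

lemma c_le (hk : 2 ≤ k) (hq : 2 ≤ q) (hq1 : m + 1 ≤ q * k) (hq2 : q * k ≤ m + k)
    {i j : ℕ} (hij : i ≤ j) (hjq : j ≤ q) : c m k q i ≤ c m k q j := by
  rcases lt_or_eq_of_le hij with h | h
  · exact le_of_lt (c_mono hk hq hq1 hq2 h hjq)
  · subst h; exact le_rfl

lemma c_gap (hk : 2 ≤ k) (hq : 2 ≤ q) (hq1 : m + 1 ≤ q * k) (hq2 : q * k ≤ m + k)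
    {j : ℕ} (hj : j < q) : c m k q (j + 1) ≤ c m k q j + k := by
  have hjj : (j + 1) * k = j * k + k := by ring
  rcases lt_or_eq_of_le (Nat.succ_le_of_lt hj) with h | h
  · simp only [c, if_pos hj, if_pos h]; omega
  · have h' : j + 1 = q := h
    have hq1' : m + 1 ≤ j * k + k := by rw [← hjj, h']; exact hq1
    simp only [c, if_pos hj, if_neg (by omega : ¬ j + 1 < q)]
    omega

lemma c_pos (hk : 2 ≤ k) (hq : 2 ≤ q) (hq1 : m + 1 ≤ q * k) (hq2 : q * k ≤ m + k)
    {j : ℕ} (hj1 : 1 ≤ j) (hjq : j ≤ q) : 1 ≤ c m k q j := by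
  have h0 := c_mono hk hq hq1 hq2 (show 0 < j by omega) hjq
  rw [c_zero hq] at h0; omega

lemma mem_Cset {x j : ℕ} : x ∈ Cset m k q j ↔ ∃ i, 1 ≤ i ∧ i ≤ j ∧ c m k q i = x := by
  simp [Cset, Finset.mem_image, Finset.mem_Icc]
  constructor
  · rintro ⟨i, ⟨h1, h2⟩, h3⟩; exact ⟨i, h1, h2, h3⟩
  · rintro ⟨i, h1, h2, h3⟩; exact ⟨i, ⟨h1, h2⟩, h3⟩

lemma c_mem_Cset {i j : ℕ} (h1 : 1 ≤ i) (h2 : i ≤ j) : c m k q i ∈ Cset m k q j :=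
  mem_Cset.2 ⟨i, h1, h2, rfl⟩

lemma mem_Cset_le (hk : 2 ≤ k) (hq : 2 ≤ q) (hq1 : m + 1 ≤ q * k) (hq2 : q * k ≤ m + k)
    {x j : ℕ} (hjq : j ≤ q) (hx : x ∈ Cset m k q j) : x ≤ c m k q j := by
  obtain ⟨i, h1, h2, rfl⟩ := mem_Cset.1 hx
  exact c_le hk hq hq1 hq2 h2 hjq

lemma Cset_succ (j : ℕ) :
    Cset m k q (j + 1) = insert (c m k q (j + 1)) (Cset m k q j) := by
  unfold Cset
  rw [show Finset.Icc 1 (j + 1) = insert (j + 1) (Finset.Icc 1 j) by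
    ext x; simp [Finset.mem_Icc]; omega]
  rw [Finset.image_insert]

lemma Cset_zero : Cset m k q 0 = ∅ := by
  unfold Cset; rw [show Finset.Icc 1 0 = ∅ by simp]; simp

lemma Cset_one : Cset m k q 1 = {c m k q 1} := by
  unfold Cset; rw [show Finset.Icc 1 1 = {1} by simp]; simp

lemma card_Cset (hk : 2 ≤ k) (hq : 2 ≤ q) (hq1 : m + 1 ≤ q * k) (hq2 : q * k ≤ m + k)
    {j : ℕ} (hjq : j ≤ q) : (Cset m k q j).card ≤ j := by
  calc (Cset m k q j).card ≤ (Finset.Icc 1 j).card := Finset.card_image_le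
    _ = j := by rw [Nat.card_Icc]; omega

end Facts


/-- phase-1 blocks `2 … n+1`. -/
def p1 (m k q : ℕ) : ℕ → List ℕ
  | 0 => []
  | n + 1 => p1 m k q n ++
      (up (c m k q (n + 1)) (c m k q (n + 2) - c m k q (n + 1)) ++
       down (c m k q (n + 1)) (c m k q (n + 2) - c m k q (n + 1) - 1))

lemma p1_spec {m k q : ℕ} (hk : 2 ≤ k) (hq : 2 ≤ q) (hq1 : m + 1 ≤ q * k)
    (hq2 : q * k ≤ m + k) :
    ∀ n, n + 1 ≤ q →
      Good (q + k - 1) (Cset m k q 1) (p1 m k q n) ∧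
      applyList (Cset m k q 1) (p1 m k q n) = Cset m k q (n + 1) ∧
      (p1 m k q n).countP (fun i => 1 ≤ i) + n ≤ 2 * (c m k q (n + 1) - c m k q 1) := by
  intro n
  induction n with
  | zero =>
    intro _
    refine ⟨?_, by simp [p1], by simp [p1]⟩
    show (Cset m k q 1).card ≤ q + k - 1
    have := card_Cset hk hq hq1 hq2 (show 1 ≤ q by omega)
    omega
  | succ n ih =>
    intro hn
    obtain ⟨ihg, ihapp, ihc⟩ := ih (by omega)
    simp only [p1]
    set a := c m k q (n + 1) with ha_def
    set b := c m k q (n + 2) with hb_def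
    have hab : a < b := c_mono hk hq hq1 hq2 (by omega) (by omega)
    have hLk : b ≤ a + k := c_gap hk hq hq1 hq2 (by omega)
    set L : ℕ := b - a with hL_def
    have hL1 : 1 ≤ L := by omega
    have haL : a + L = b := by omega
    have hcard : (Cset m k q (n + 1)).card ≤ n + 1 :=
      card_Cset hk hq hq1 hq2 (by omega)
    have hup := up_spec (B := q + k - 1) (a := a) (n := L) (S := Cset m k q (n + 1))
      (c_mem_Cset (by omega) le_rfl)
      (fun x hx => Or.inl (mem_Cset_le hk hq hq1 hq2 (by omega) hx))
      (by omega)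
    set S2 := Cset m k q (n + 1) ∪ Finset.Ioc a (a + L) with hS2_def
    have hcard2 : S2.card ≤ n + 1 + L := by
      calc S2.card ≤ (Cset m k q (n + 1)).card + (Finset.Ioc a (a + L)).card :=
            Finset.card_union_le _ _
        _ ≤ n + 1 + L := by rw [Nat.card_Ioc]; omega
    have hdown := down_spec (B := q + k - 1) (a := a) (n := L - 1) (S := S2)
      (Finset.mem_union_left _ (c_mem_Cset (by omega) le_rfl))
      (by
        intro x hx
        rw [Finset.mem_Ioc] at hx
        exact Finset.mem_union_right _ (Finset.mem_Ioc.2 (by omega)))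
      (by omega)
    have hfinal : S2 \ Finset.Ioc a (a + (L - 1)) = Cset m k q (n + 2) := by
      rw [show (n + 2) = (n + 1) + 1 from rfl, Cset_succ]
      ext x
      by_cases hx : x ∈ Cset m k q (n + 1)
      · have hxa : x ≤ a := mem_Cset_le hk hq hq1 hq2 (by omega) hx
        simp only [hS2_def, Finset.mem_sdiff, Finset.mem_union, Finset.mem_Ioc,
          Finset.mem_insert, hx, or_true, and_true, true_or, true_and, iff_true,
          not_and, not_le]
        intro h; omega
      · simp only [hS2_def, Finset.mem_sdiff, Finset.mem_union, Finset.mem_Ioc,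
          Finset.mem_insert, hx, or_false, false_or, ← hb_def]
        constructor
        · rintro ⟨⟨h1, h2⟩, h3⟩
          omega
        · rintro rfl
          refine ⟨⟨by omega, by omega⟩, by omega⟩
    refine ⟨Good.append ihg ?_, ?_, ?_⟩
    · rw [ihapp]
      exact Good.append hup.1 (by rw [hup.2]; exact hdown.1)
    · rw [applyList_append, ihapp, applyList_append, hup.2, hdown.2]
      exact hfinal
    · rw [List.countP_append, List.countP_append, countP_up, countP_down]
      have hc1a : c m k q 1 ≤ a := c_le hk hq hq1 hq2 (by omega) (by omega)
      omega


/-- phase-2: uncompute checkpoints `j, j-1, …, 1`. -/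
def p2 (m k q : ℕ) : ℕ → List ℕ
  | 0 => []
  | 1 => 0 :: (up 0 (c m k q 1 - 1) ++ [c m k q 1] ++ down 0 (c m k q 1 - 1) ++ [0])
  | n + 2 => (up (c m k q (n + 1)) (c m k q (n + 2) - c m k q (n + 1) - 1) ++
      [c m k q (n + 2)] ++
      down (c m k q (n + 1)) (c m k q (n + 2) - c m k q (n + 1) - 1)) ++ p2 m k q (n + 1)

lemma p2_spec {m k q : ℕ} (hk : 2 ≤ k) (hq : 2 ≤ q) (hq1 : m + 1 ≤ q * k)
    (hq2 : q * k ≤ m + k) :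
    ∀ j, 1 ≤ j → j ≤ q - 1 →
      Good (q + k - 1) (Cset m k q j ∪ {m}) (p2 m k q j) ∧
      applyList (Cset m k q j ∪ {m}) (p2 m k q j) = {m} ∧
      (p2 m k q j).countP (fun i => 1 ≤ i) + j ≤ 2 * c m k q j := by
  intro j
  induction j with
  | zero => intro h; omega
  | succ n ih =>
    intro _ hj
    match n, ih, hj with
    | 0, _, hj =>
      -- base case  j = 1
      clear ih
      have hc1 : c m k q 1 = k - 1 := c_one hk hq
      have hc1pos : 1 ≤ c m k q 1 := c_pos hk hq hq1 hq2 le_rfl (by omega)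
      have hc1m : c m k q 1 < m := by
        have := c_mono hk hq hq1 hq2 (show 1 < q by omega) le_rfl
        rwa [c_top] at this
      set e := c m k q 1 with he_def
      rw [Cset_one]
      set S0 : Finset ℕ := {e} ∪ {m} with hS0_def
      have hcard0 : S0.card ≤ 2 := by
        calc S0.card ≤ ({e} : Finset ℕ).card + ({m} : Finset ℕ).card :=
              Finset.card_union_le _ _
          _ = 2 := by simp
      have h0notin : (0 : ℕ) ∉ S0 := by
        simp only [hS0_def, Finset.mem_union, Finset.mem_singleton]
        omega
      have htog0 : toggle S0 0 = insert 0 S0 := by rw [toggle, if_neg h0notin]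
      set S1 : Finset ℕ := insert 0 S0 with hS1_def
      have hcard1 : S1.card ≤ 3 := le_trans (Finset.card_insert_le _ _) (by omega)
      have hup := up_spec (B := q + k - 1) (a := 0) (n := e - 1) (S := S1)
        (Finset.mem_insert_self _ _)
        (by
          intro x hx
          simp only [hS1_def, hS0_def, Finset.mem_insert, Finset.mem_union,
            Finset.mem_singleton] at hx
          omega)
        (by omega)
      set S2 : Finset ℕ := S1 ∪ Finset.Ioc 0 (0 + (e - 1)) with hS2_def
      have hcard2 : S2.card ≤ 3 + (e - 1) := by
        calc S2.card ≤ S1.card + (Finset.Ioc 0 (0 + (e - 1))).card :=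
              Finset.card_union_le _ _
          _ ≤ 3 + (e - 1) := by rw [Nat.card_Ioc]; omega
      have hein : e ∈ S2 := by
        simp only [hS2_def, hS1_def, hS0_def, Finset.mem_union, Finset.mem_insert,
          Finset.mem_singleton]
        tauto
      have htoge : toggle S2 e = S2.erase e := by rw [toggle, if_pos hein]
      have heprev : e - 1 ∈ S2 := by
        simp only [hS2_def, hS1_def, hS0_def, Finset.mem_union, Finset.mem_insert,
          Finset.mem_singleton, Finset.mem_Ioc]
        omega
      set S3 : Finset ℕ := S2.erase e with hS3_def
      have hcard3 : S3.card ≤ 3 + (e - 1) := le_trans (Finset.card_erase_le) hcard2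
      have hdown := down_spec (B := q + k - 1) (a := 0) (n := e - 1) (S := S3)
        (by
          simp only [hS3_def, Finset.mem_erase]
          refine ⟨by omega, ?_⟩
          simp only [hS2_def, hS1_def, Finset.mem_union, Finset.mem_insert]
          tauto)
        (by
          intro x hx
          simp only [Finset.mem_Ioc] at hx
          simp only [hS3_def, Finset.mem_erase, hS2_def, Finset.mem_union,
            Finset.mem_Ioc]
          constructor
          · omega
          · right; omega)
        (by omega)
      have h4 : S3 \ Finset.Ioc 0 (0 + (e - 1)) = {0, m} := by
        ext x
        simp only [hS3_def, hS2_def, hS1_def, hS0_def, Finset.mem_sdiff,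
          Finset.mem_erase, Finset.mem_union, Finset.mem_insert,
          Finset.mem_singleton, Finset.mem_Ioc]
        omega
      have htoglast : toggle ({0, m} : Finset ℕ) 0 = {m} := by
        rw [toggle, if_pos (Finset.mem_insert_self _ _)]
        ext x
        simp only [Finset.mem_erase, Finset.mem_insert, Finset.mem_singleton]
        omega
      have hcardlast : ({0, m} : Finset ℕ).card ≤ 2 :=
        Finset.card_insert_le _ _ |>.trans (by simp)
      -- assemble
      show Good _ _ (0 :: (up 0 (e - 1) ++ [e] ++ down 0 (e - 1) ++ [0])) ∧ _
      have gup : Good (q + k - 1) S1 (up 0 (e - 1)) := hup.1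
      have gsing : Good (q + k - 1) S2 [e] := by
        refine ⟨by omega, Or.inr ⟨hc1pos, heprev⟩, ?_⟩
        rw [htoge]
        show S3.card ≤ q + k - 1
        omega
      have gdown : Good (q + k - 1) S3 (down 0 (e - 1)) := hdown.1
      have glast : Good (q + k - 1) ({0, m} : Finset ℕ) [0] := by
        refine ⟨by omega, Or.inl rfl, ?_⟩
        rw [htoglast]
        show ({m} : Finset ℕ).card ≤ q + k - 1
        rw [Finset.card_singleton]
        omega
      have happ1 : applyList S1 (up 0 (e - 1) ++ [e]) = S3 := by
        rw [applyList_append, hup.2]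
        simp [htoge]
      have happ2 : applyList S1 (up 0 (e - 1) ++ [e] ++ down 0 (e - 1)) = {0, m} := by
        rw [applyList_append, happ1, hdown.2, h4]
      have happ3 : applyList S1 (up 0 (e - 1) ++ [e] ++ down 0 (e - 1) ++ [0]) = {m} := by
        rw [applyList_append, happ2]
        simp [htoglast]
      refine ⟨⟨by omega, Or.inl rfl, ?_⟩, ?_, ?_⟩
      · rw [htog0]
        refine Good.append (Good.append (Good.append gup ?_) ?_) ?_
        · rw [hup.2]; exact gsing
        · rw [happ1]; exact gdown
        · rw [happ2]; exact glast
      · show applyList S0 (0 :: (up 0 (e - 1) ++ [e] ++ down 0 (e - 1) ++ [0])) = {m}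
        rw [applyList_cons, htog0, happ3]
      · show List.countP (fun i => 1 ≤ i)
            (0 :: (up 0 (e - 1) ++ [e] ++ down 0 (e - 1) ++ [0])) + 1 ≤ 2 * e
        rw [List.countP_cons]
        rw [List.countP_append, List.countP_append, List.countP_append,
          countP_up, countP_down, List.countP_cons, List.countP_nil,
          List.countP_cons, List.countP_nil]
        simp only [show ¬ ((1:ℕ) ≤ 0) by omega, decide_eq_true_eq, if_false,
          if_pos hc1pos]
        omega
    | n + 1, ih, hj =>
      -- inductive step  j = n + 2
      obtain ⟨ihg, ihapp, ihc⟩ := ih (by omega) (by omega)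
      simp only [p2]
      set a := c m k q (n + 1) with ha_def
      set b := c m k q (n + 2) with hb_def
      have hab : a < b := c_mono hk hq hq1 hq2 (by omega) (by omega)
      have hLk : b ≤ a + k := c_gap hk hq hq1 hq2 (by omega)
      have hbm : b < m := by
        have := c_mono hk hq hq1 hq2 (show n + 2 < q by omega) le_rfl
        rwa [c_top] at this
      set L : ℕ := b - a with hL_def
      have hL1 : 1 ≤ L := by omega
      have hcardC : (Cset m k q (n + 1)).card ≤ n + 1 :=
        card_Cset hk hq hq1 hq2 (by omega)
      rw [show (n + 1 + 1) = (n + 1) + 1 from rfl, Cset_succ, ← hb_def]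
      set C : Finset ℕ := Cset m k q (n + 1) with hC_def
      set S : Finset ℕ := insert b C ∪ {m} with hS_def
      have hcardS : S.card ≤ n + 3 := by
        calc S.card ≤ (insert b C).card + ({m} : Finset ℕ).card :=
              Finset.card_union_le _ _
          _ ≤ (C.card + 1) + 1 := by
              have := Finset.card_insert_le b C; simp; omega
          _ ≤ n + 3 := by omega
      have hamem : a ∈ C := by
        rw [ha_def, hC_def]; exact c_mem_Cset (by omega) le_rfl
      have hCle : ∀ x ∈ C, x ≤ a := fun x hx =>
        mem_Cset_le hk hq hq1 hq2 (by omega) hx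
      have hup := up_spec (B := q + k - 1) (a := a) (n := L - 1) (S := S)
        (Finset.mem_union_left _ (Finset.mem_insert_of_mem hamem))
        (by
          intro x hx
          simp only [hS_def, Finset.mem_union, Finset.mem_insert,
            Finset.mem_singleton] at hx
          rcases hx with (rfl | hx) | rfl
          · right; omega
          · exact Or.inl (hCle x hx)
          · right; omega)
        (by omega)
      set S2 : Finset ℕ := S ∪ Finset.Ioc a (a + (L - 1)) with hS2_def
      have hcard2 : S2.card ≤ n + 3 + (L - 1) := by
        calc S2.card ≤ S.card + (Finset.Ioc a (a + (L - 1))).card :=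
              Finset.card_union_le _ _
          _ ≤ n + 3 + (L - 1) := by rw [Nat.card_Ioc]; omega
      have hbin : b ∈ S2 := Finset.mem_union_left _
        (Finset.mem_union_left _ (Finset.mem_insert_self _ _))
      have htogb : toggle S2 b = S2.erase b := by rw [toggle, if_pos hbin]
      have hbprev : b - 1 ∈ S2 := by
        rcases eq_or_lt_of_le hL1 with h1 | h1
        · have hba : b - 1 = a := by omega
          rw [hba]
          exact Finset.mem_union_left _ (Finset.mem_union_left _
            (Finset.mem_insert_of_mem hamem))
        · exact Finset.mem_union_right _ (Finset.mem_Ioc.2 ⟨by omega, by omega⟩)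
      set S3 : Finset ℕ := S2.erase b with hS3_def
      have hcard3 : S3.card ≤ n + 3 + (L - 1) := le_trans Finset.card_erase_le hcard2
      have hdown := down_spec (B := q + k - 1) (a := a) (n := L - 1) (S := S3)
        (by
          simp only [hS3_def, Finset.mem_erase]
          exact ⟨by omega, Finset.mem_union_left _
            (Finset.mem_union_left _ (Finset.mem_insert_of_mem hamem))⟩)
        (by
          intro x hx
          simp only [Finset.mem_Ioc] at hx
          simp only [hS3_def, Finset.mem_erase]
          exact ⟨by omega, Finset.mem_union_right _ (Finset.mem_Ioc.2 hx)⟩)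
        (by omega)
      have h4 : S3 \ Finset.Ioc a (a + (L - 1)) = C ∪ {m} := by
        ext x
        by_cases hx : x ∈ C
        · have hxa := hCle x hx
          simp only [hS3_def, hS2_def, hS_def, Finset.mem_sdiff, Finset.mem_erase,
            Finset.mem_union, Finset.mem_insert, Finset.mem_singleton,
            Finset.mem_Ioc, hx, or_true, true_or, and_true, true_and, iff_true,
            not_and, not_le]
          exact ⟨by omega, fun h => by omega⟩
        · simp only [hS3_def, hS2_def, hS_def, Finset.mem_sdiff, Finset.mem_erase,
            Finset.mem_union, Finset.mem_insert, Finset.mem_singleton,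
            Finset.mem_Ioc, hx, or_false, false_or]
          constructor
          · rintro ⟨⟨h1, h2⟩, h3⟩
            rcases h2 with (rfl | h2) | h2
            · omega
            · omega
            · omega
          · rintro rfl
            refine ⟨⟨by omega, Or.inl (Or.inr rfl)⟩, by omega⟩
      -- assemble
      have gup : Good (q + k - 1) S (up a (L - 1)) := hup.1
      have gsing : Good (q + k - 1) S2 [b] := by
        refine ⟨by omega, Or.inr ⟨by omega, hbprev⟩, ?_⟩
        rw [htogb]
        show S3.card ≤ q + k - 1
        omega
      have gdown : Good (q + k - 1) S3 (down a (L - 1)) := hdown.1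
      have happ1 : applyList S (up a (L - 1) ++ [b]) = S3 := by
        rw [applyList_append, hup.2]
        simp [htogb]
      have happ2 : applyList S (up a (L - 1) ++ [b] ++ down a (L - 1)) = C ∪ {m} := by
        rw [applyList_append, happ1, hdown.2, h4]
      refine ⟨?_, ?_, ?_⟩
      · refine Good.append (Good.append (Good.append gup ?_) ?_) ?_
        · rw [hup.2]; exact gsing
        · rw [happ1]; exact gdown
        · rw [happ2]; exact ihg
      · rw [applyList_append, happ2]
        exact ihapp
      · rw [List.countP_append, List.countP_append, List.countP_append,
          countP_up, countP_down, List.countP_cons, List.countP_nil]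
        rw [if_pos (by simp; omega)]
        omega

lemma main_strategy {m k q : ℕ} (hk : 2 ≤ k) (hq : 2 ≤ q) (hq1 : m + 1 ≤ q * k)
    (hq2 : q * k ≤ m + k) :
    ∃ L : List ℕ, Good (q + k - 1) ∅ L ∧ applyList ∅ L = {m} ∧
      L.countP (fun i => 1 ≤ i) ≤ 4 * m - 2 := by
  obtain ⟨q', rfl⟩ : ∃ q', q = q' + 2 := ⟨q - 2, by omega⟩
  have hP : (q' + 2) * k = (q' + 1) * k + k := by ring
  have hcv : c m k (q' + 2) (q' + 1) = (q' + 1) * k - 1 := by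
    unfold c; rw [if_pos (by omega)]
  set e := c m k (q' + 2) 1 with he_def
  have hek : e = k - 1 := c_one hk hq
  have he1 : 1 ≤ e := c_pos hk hq hq1 hq2 le_rfl (by omega)
  have hem : e < m := by
    have := c_mono hk hq hq1 hq2 (show 1 < q' + 2 by omega) le_rfl
    rwa [c_top] at this
  have hm1 : 1 ≤ m := by omega
  refine ⟨0 :: (up 0 e ++ down 0 (e - 1) ++ [0] ++ p1 m k (q' + 2) (q' + 1)
      ++ p2 m k (q' + 2) (q' + 1)), ?_⟩
  have htog0 : toggle ∅ 0 = {0} := by rw [toggle, if_neg (Finset.notMem_empty 0)]; rfl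
  have hup := up_spec (B := q' + 2 + k - 1) (a := 0) (n := e) (S := {0})
    (Finset.mem_singleton_self 0)
    (by intro x hx; simp only [Finset.mem_singleton] at hx; omega)
    (by rw [Finset.card_singleton]; omega)
  set S2 : Finset ℕ := {0} ∪ Finset.Ioc 0 (0 + e) with hS2_def
  have hcard2 : S2.card ≤ 1 + e := by
    calc S2.card ≤ ({0} : Finset ℕ).card + (Finset.Ioc 0 (0 + e)).card :=
          Finset.card_union_le _ _
      _ ≤ 1 + e := by rw [Nat.card_Ioc]; simp
  have hdown := down_spec (B := q' + 2 + k - 1) (a := 0) (n := e - 1) (S := S2)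
    (Finset.mem_union_left _ (Finset.mem_singleton_self 0))
    (by
      intro x hx
      simp only [Finset.mem_Ioc] at hx
      exact Finset.mem_union_right _ (Finset.mem_Ioc.2 ⟨by omega, by omega⟩))
    (by omega)
  have h3 : S2 \ Finset.Ioc 0 (0 + (e - 1)) = {0, e} := by
    ext x
    simp only [hS2_def, Finset.mem_sdiff, Finset.mem_union, Finset.mem_singleton,
      Finset.mem_insert, Finset.mem_Ioc]
    omega
  have htogmid : toggle ({0, e} : Finset ℕ) 0 = Cset m k (q' + 2) 1 := by
    rw [toggle, if_pos (Finset.mem_insert_self _ _), Cset_one, ← he_def]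
    ext x
    simp only [Finset.mem_erase, Finset.mem_insert, Finset.mem_singleton]
    omega
  have hp1 := p1_spec hk hq hq1 hq2 (q' + 1) (by omega)
  have hCq : Cset m k (q' + 2) (q' + 2) = Cset m k (q' + 2) (q' + 1) ∪ {m} := by
    rw [show (q' + 2) = (q' + 1) + 1 from rfl, Cset_succ, c_top]
    ext x
    simp only [Finset.mem_insert, Finset.mem_union, Finset.mem_singleton]
    tauto
  have hp2 := p2_spec hk hq hq1 hq2 (q' + 1) (by omega) (by omega)
  have a1 : applyList ({0} : Finset ℕ) (up 0 e) = S2 := hup.2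
  have a2 : applyList ({0} : Finset ℕ) (up 0 e ++ down 0 (e - 1)) = {0, e} := by
    rw [applyList_append, a1, hdown.2, h3]
  have a3 : applyList ({0} : Finset ℕ) (up 0 e ++ down 0 (e - 1) ++ [0])
      = Cset m k (q' + 2) 1 := by
    rw [applyList_append, a2]
    simp [htogmid]
  have a4 : applyList ({0} : Finset ℕ)
      (up 0 e ++ down 0 (e - 1) ++ [0] ++ p1 m k (q' + 2) (q' + 1))
      = Cset m k (q' + 2) (q' + 1) ∪ {m} := by
    rw [applyList_append, a3, hp1.2.1, ← hCq]
  have gmid : Good (q' + 2 + k - 1) ({0, e} : Finset ℕ) [0] := by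
    refine ⟨?_, Or.inl rfl, ?_⟩
    · have h5 : ({0, e} : Finset ℕ).card ≤ 2 :=
        Finset.card_insert_le _ _ |>.trans (by rw [Finset.card_singleton])
      omega
    · rw [htogmid]
      show (Cset m k (q' + 2) 1).card ≤ q' + 2 + k - 1
      have := card_Cset hk hq hq1 hq2 (show 1 ≤ q' + 2 by omega)
      omega
  refine ⟨⟨by simp, Or.inl rfl, ?_⟩, ?_, ?_⟩
  · rw [htog0]
    refine Good.append (Good.append (Good.append (Good.append hup.1 ?_) ?_) ?_) ?_
    · rw [a1]; exact hdown.1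
    · rw [a2]; exact gmid
    · rw [a3]; exact hp1.1
    · rw [a4]; exact hp2.1
  · rw [applyList_cons, htog0, applyList_append, a4, hp2.2.1]
  · rw [List.countP_cons, List.countP_append, List.countP_append,
      List.countP_append, List.countP_append, countP_up, countP_down,
      List.countP_cons, List.countP_nil]
    have hb1 := hp1.2.2
    have hb2 := hp2.2.2
    rw [c_top, ← he_def] at hb1
    rw [hcv] at hb2
    simp only [show ¬ ((1:ℕ) ≤ 0) by omega, decide_eq_true_eq, if_false]
    omega

lemma trivial_strategy {m : ℕ} (hm : 1 ≤ m) :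
    ∃ L : List ℕ, Good (m + 1) ∅ L ∧ applyList ∅ L = {m} ∧
      L.countP (fun i => 1 ≤ i) ≤ 4 * m - 2 := by
  have htog0 : toggle ∅ 0 = {0} := by
    rw [toggle, if_neg (Finset.notMem_empty 0)]; rfl
  have hup := up_spec (B := m + 1) (a := 0) (n := m) (S := {0})
    (Finset.mem_singleton_self 0)
    (by intro x hx; simp only [Finset.mem_singleton] at hx; omega)
    (by rw [Finset.card_singleton]; omega)
  have hcard2 : ({0} ∪ Finset.Ioc 0 (0 + m)).card ≤ 1 + m := by
    calc ({0} ∪ Finset.Ioc 0 (0 + m)).card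
        ≤ ({0} : Finset ℕ).card + (Finset.Ioc 0 (0 + m)).card :=
          Finset.card_union_le _ _
      _ ≤ 1 + m := by rw [Nat.card_Ioc]; simp
  have hdown := down_spec (B := m + 1) (a := 0) (n := m - 1)
    (S := {0} ∪ Finset.Ioc 0 (0 + m))
    (Finset.mem_union_left _ (Finset.mem_singleton_self 0))
    (by
      intro x hx
      simp only [Finset.mem_Ioc] at hx
      exact Finset.mem_union_right _ (Finset.mem_Ioc.2 ⟨by omega, by omega⟩))
    (by omega)
  have h3 : ({0} ∪ Finset.Ioc 0 (0 + m)) \ Finset.Ioc 0 (0 + (m - 1)) = {0, m} := by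
    ext x
    simp only [Finset.mem_sdiff, Finset.mem_union, Finset.mem_singleton,
      Finset.mem_insert, Finset.mem_Ioc]
    omega
  have htoglast : toggle ({0, m} : Finset ℕ) 0 = {m} := by
    rw [toggle, if_pos (Finset.mem_insert_self _ _)]
    ext x
    simp only [Finset.mem_erase, Finset.mem_insert, Finset.mem_singleton]
    omega
  have a2 : applyList ({0} : Finset ℕ) (up 0 m ++ down 0 (m - 1)) = {0, m} := by
    rw [applyList_append, hup.2, hdown.2, h3]
  refine ⟨0 :: (up 0 m ++ down 0 (m - 1) ++ [0]), ⟨by simp, Or.inl rfl, ?_⟩, ?_, ?_⟩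
  · rw [htog0]
    refine Good.append (Good.append hup.1 ?_) ?_
    · rw [hup.2]; exact hdown.1
    · rw [a2]
      refine ⟨?_, Or.inl rfl, ?_⟩
      · have h5 : ({0, m} : Finset ℕ).card ≤ 2 :=
          Finset.card_insert_le _ _ |>.trans (by rw [Finset.card_singleton])
        omega
      · rw [htoglast]
        show ({m} : Finset ℕ).card ≤ m + 1
        rw [Finset.card_singleton]
        omega
  · rw [applyList_cons, htog0, applyList_append, a2]
    simp [htoglast]
  · rw [List.countP_cons, List.countP_append, List.countP_append,
      countP_up, countP_down, List.countP_cons, List.countP_nil]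
    simp only [show ¬ ((1:ℕ) ≤ 0) by omega, decide_eq_true_eq, if_false]
    omega

end PebbleAux

/-- the simple strategy uses at most `⌈(m+1)/k⌉ + k - 1` registers
and at most `4m - 2` squaring operations. -/
theorem simple_strategy_linear_time (m k : ℕ) (hm : 1 ≤ m) (hk1 : 1 ≤ k)
    (hk2 : k ≤ m + 1) :
    ∃ M : MoveSeq, M.CleanlyComputes m ∧
      (M.space : ℤ) ≤ ⌈((m : ℚ) + 1) / k⌉ + k - 1 ∧
      M.squarings ≤ 4 * m - 2 := by
  by_cases hcase : 2 ≤ k ∧ k ≤ m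
  · obtain ⟨hk, hkm⟩ := hcase
    have hk0 : 0 < k := by omega
    set q : ℕ := (m + k) / k with hq_def
    have hq1 : m + 1 ≤ q * k := by
      have e1 := Nat.div_add_mod (m + k) k
      have e2 := Nat.mod_lt (m + k) hk0
      have e3 : q * k = k * ((m + k) / k) := Nat.mul_comm _ _
      omega
    have hq2 : q * k ≤ m + k := Nat.div_mul_le_self _ _
    have hq : 2 ≤ q := (Nat.le_div_iff_mul_le hk0).2 (by omega)
    obtain ⟨L, hG, happly, hcount⟩ := PebbleAux.main_strategy hk hq hq1 hq2
    refine ⟨PebbleAux.ofList L hG, PebbleAux.ofList_cleanly L hG happly, ?_,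
      PebbleAux.ofList_squarings_le L hG hcount⟩
    have hsp : (PebbleAux.ofList L hG).space ≤ q + k - 1 :=
      PebbleAux.ofList_space_le L hG
    have hceil : (q : ℤ) ≤ ⌈((m : ℚ) + 1) / k⌉ := by
      have hsub : (q - 1) * k ≤ m := by
        have h4 : (q - 1) * k + k = q * k := by
          have h5 : q - 1 + 1 = q := by omega
          calc (q - 1) * k + k = (q - 1 + 1) * k := by ring
            _ = q * k := by rw [h5]
        omega
      have hk0' : (0 : ℚ) < (k : ℚ) := by positivity
      have hlt : ((q : ℚ) - 1) < ((m : ℚ) + 1) / k := by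
        rw [lt_div_iff₀ hk0']
        have hcast : ((q - 1 : ℕ) : ℚ) * (k : ℚ) ≤ (m : ℚ) := by exact_mod_cast hsub
        have heq : ((q - 1 : ℕ) : ℚ) = (q : ℚ) - 1 := by
          push_cast [Nat.cast_sub (show 1 ≤ q by omega)]
          ring
        nlinarith [hk0']
      have := Int.lt_ceil.2
        (show (((q : ℤ) - 1 : ℤ) : ℚ) < ((m : ℚ) + 1) / k by push_cast; linarith)
      omega
    omega
  · have hkeq : k = 1 ∨ k = m + 1 := by omega
    obtain ⟨L, hG, happly, hcount⟩ := PebbleAux.trivial_strategy hm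
    refine ⟨PebbleAux.ofList L hG, PebbleAux.ofList_cleanly L hG happly, ?_,
      PebbleAux.ofList_squarings_le L hG hcount⟩
    have hsp : (PebbleAux.ofList L hG).space ≤ m + 1 := PebbleAux.ofList_space_le L hG
    have hbound : (m : ℤ) + 1 ≤ ⌈((m : ℚ) + 1) / k⌉ + k - 1 := by
      rcases hkeq with rfl | rfl
      · have h1 : ((m : ℚ) + 1) / ((1 : ℕ) : ℚ) = ((m + 1 : ℤ) : ℚ) := by
          push_cast; ring
        rw [h1, Int.ceil_intCast]; omega
      · have hne : ((m : ℚ) + 1) ≠ 0 := by positivity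
        have h1 : ((m : ℚ) + 1) / ((m + 1 : ℕ) : ℚ) = ((1 : ℤ) : ℚ) := by
          push_cast; rw [div_self hne]
        rw [h1, Int.ceil_intCast]; omega
    omega
end

section
/- For every m ≥ 1 there exists a move sequence that cleanly computes m whose space is at most 2·⌈√(m+1)⌉ − 1 and which contains at most 4m − 2 squaring operations. -/
namespace PebbleAux

def tog (S : Finset ℕ) (i : ℕ) : Finset ℕ := if i ∈ S then S.erase i else insert i S

def runM : Finset ℕ → List ℕ → Finset ℕ
  | S, [] => S
  | S, i :: L => runM (tog S i) L

def LegalM : Finset ℕ → List ℕ → Prop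
  | _, [] => True
  | S, i :: L => (i = 0 ∨ (1 ≤ i ∧ i - 1 ∈ S)) ∧ LegalM (tog S i) L

def BddM (P : ℕ) : Finset ℕ → List ℕ → Prop
  | S, [] => S.card ≤ P
  | S, i :: L => S.card ≤ P ∧ BddM P (tog S i) L

@[simp] lemma runM_nil (S : Finset ℕ) : runM S [] = S := rfl
@[simp] lemma runM_cons (S : Finset ℕ) (i : ℕ) (L : List ℕ) :
    runM S (i :: L) = runM (tog S i) L := rfl
@[simp] lemma runM_append (S : Finset ℕ) (L1 L2 : List ℕ) :
    runM S (L1 ++ L2) = runM (runM S L1) L2 := by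
  induction L1 generalizing S <;> simp [*]

@[simp] lemma LegalM_nil (S : Finset ℕ) : LegalM S [] := trivial

lemma LegalM_append {S : Finset ℕ} {L1 L2 : List ℕ}
    (h1 : LegalM S L1) (h2 : LegalM (runM S L1) L2) : LegalM S (L1 ++ L2) := by
  induction L1 generalizing S with
  | nil => simpa using h2
  | cons a L ih => exact ⟨h1.1, ih h1.2 h2⟩

lemma BddM_append {P : ℕ} {S : Finset ℕ} {L1 L2 : List ℕ}
    (h1 : BddM P S L1) (h2 : BddM P (runM S L1) L2) : BddM P S (L1 ++ L2) := by
  induction L1 generalizing S with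
  | nil => simpa using h2
  | cons a L ih => exact ⟨h1.1, ih h1.2 h2⟩

lemma BddM_mono {P Q : ℕ} {S : Finset ℕ} {L : List ℕ} (hPQ : P ≤ Q) (h : BddM P S L) :
    BddM Q S L := by
  induction L generalizing S with
  | nil => exact le_trans h hPQ
  | cons a L ih => exact ⟨le_trans h.1 hPQ, ih h.2⟩

lemma BddM_card {P : ℕ} {S : Finset ℕ} {L : List ℕ} (h : BddM P S L) : S.card ≤ P := by
  cases L
  · exact h
  · exact h.1


def upL (a : ℕ) : ℕ → List ℕ
  | 0 => []
  | n + 1 => upL a n ++ [a + 1 + n]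

def dnL (a : ℕ) : ℕ → List ℕ
  | 0 => []
  | n + 1 => (a + 1 + n) :: dnL a n

lemma up_spec_s2 (a : ℕ) : ∀ (n : ℕ) (S : Finset ℕ), a ∈ S →
    (∀ i ∈ Finset.Ioc a (a + n), i ∉ S) →
    LegalM S (upL a n) ∧ runM S (upL a n) = S ∪ Finset.Ioc a (a + n) ∧
      BddM (S.card + n) S (upL a n) := by
  intro n
  induction n with
  | zero =>
    intro S ha _
    refine ⟨trivial, by simp [upL], ?_⟩
    
    · simpa [BddM, upL] using le_refl S.card
  | succ n ih =>
    intro S ha hd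
    obtain ⟨hL, hR, hB⟩ := ih S ha (fun i hi => hd i (by
      simp only [Finset.mem_Ioc] at hi ⊢; omega))
    have hmem : a + n ∈ S ∪ Finset.Ioc a (a + n) := by
      cases n with
      | zero => simpa using ha
      | succ n => exact Finset.mem_union_right _ (by simp [Finset.mem_Ioc])
    have hnot : a + 1 + n ∉ S ∪ Finset.Ioc a (a + n) := by
      simp only [Finset.mem_union, Finset.mem_Ioc]
      push_neg
      refine ⟨hd _ (by simp only [Finset.mem_Ioc]; omega), fun _ => by omega⟩
    have htog : tog (S ∪ Finset.Ioc a (a + n)) (a + 1 + n)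
        = S ∪ Finset.Ioc a (a + (n + 1)) := by
      rw [tog, if_neg hnot]
      ext x
      simp only [Finset.mem_insert, Finset.mem_union, Finset.mem_Ioc]
      by_cases hxS : x ∈ S <;> simp [hxS] <;> omega
    have hcard : (S ∪ Finset.Ioc a (a + n)).card = S.card + n := by
      rw [Finset.card_union_of_disjoint, Nat.card_Ioc]
      · omega
      · exact Finset.disjoint_left.mpr (fun x hx hx2 => hd x (by
          simp only [Finset.mem_Ioc] at hx2 ⊢; omega) hx)
    refine ⟨?_, ?_, ?_⟩
    · refine LegalM_append hL ?_
      rw [hR]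
      exact ⟨Or.inr ⟨by omega, by simpa using hmem⟩, trivial⟩
    · rw [upL, runM_append, hR]
      simpa using htog
    · refine BddM_append (BddM_mono (by omega) hB) ?_
      rw [hR]
      refine ⟨by omega, ?_⟩
      rw [htog]
      have : (S ∪ Finset.Ioc a (a + (n+1))).card = S.card + (n+1) := by
        rw [Finset.card_union_of_disjoint, Nat.card_Ioc]
        · omega
        · exact Finset.disjoint_left.mpr (fun x hx hx2 => hd x (by
            simp only [Finset.mem_Ioc] at hx2 ⊢; omega) hx)
      simpa [BddM] using le_of_eq this

lemma dn_spec (a : ℕ) : ∀ (n : ℕ) (S : Finset ℕ), a ∈ S →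
    (Finset.Ioc a (a + n) ⊆ S) →
    LegalM S (dnL a n) ∧ runM S (dnL a n) = S \ Finset.Ioc a (a + n) ∧
      BddM S.card S (dnL a n) := by
  intro n
  induction n with
  | zero =>
    intro S ha _
    refine ⟨trivial, by simp [dnL], ?_⟩
    simpa [BddM, dnL] using le_refl S.card
  | succ n ih =>
    intro S ha hsub
    have hmemtop : a + 1 + n ∈ S := hsub (by simp only [Finset.mem_Ioc]; omega)
    have htog : tog S (a + 1 + n) = S.erase (a + 1 + n) := by
      rw [tog, if_pos hmemtop]
    have ha' : a ∈ S.erase (a + 1 + n) := Finset.mem_erase.mpr ⟨by omega, ha⟩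
    have hsub' : Finset.Ioc a (a + n) ⊆ S.erase (a + 1 + n) := by
      intro x hx
      simp only [Finset.mem_Ioc] at hx
      exact Finset.mem_erase.mpr ⟨by omega, hsub (by simp only [Finset.mem_Ioc]; omega)⟩
    obtain ⟨hL, hR, hB⟩ := ih (S.erase (a + 1 + n)) ha' hsub'
    have hprev : a + n ∈ S := by
      cases n with
      | zero => simpa using ha
      | succ n => exact hsub (by simp only [Finset.mem_Ioc]; omega)
    refine ⟨?_, ?_, ?_⟩
    · exact ⟨Or.inr ⟨by omega, by simpa using hprev⟩, by rw [htog]; exact hL⟩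
    · rw [dnL, runM_cons, htog, hR]
      ext x
      simp only [Finset.mem_sdiff, Finset.mem_erase, Finset.mem_Ioc]
      constructor
      · rintro ⟨⟨h1, h2⟩, h3⟩; exact ⟨h2, by omega⟩
      · rintro ⟨h1, h2⟩; exact ⟨⟨by omega, h1⟩, by omega⟩
    · refine ⟨le_refl _, ?_⟩
      rw [htog]
      exact BddM_mono (Finset.card_erase_le) hB


def blockL (a b : ℕ) : List ℕ := upL a (b - a) ++ dnL a (b - a - 1)

def unblockL (a b : ℕ) : List ℕ := upL a (b - a - 1) ++ (b :: dnL a (b - a - 1))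

lemma block_spec {S : Finset ℕ} {a b : ℕ} (ha : a ∈ S) (hab : a < b)
    (hd : ∀ x ∈ S, x ≤ a) :
    LegalM S (blockL a b) ∧ runM S (blockL a b) = insert b S ∧
      BddM (S.card + (b - a)) S (blockL a b) := by
  have hdisj : ∀ i ∈ Finset.Ioc a (a + (b - a)), i ∉ S := by
    intro i hi hiS
    simp only [Finset.mem_Ioc] at hi
    have := hd i hiS
    omega
  obtain ⟨hL1, hR1, hB1⟩ := up_spec_s2 a (b - a) S ha hdisj
  have hab' : a + (b - a) = b := by omega
  rw [hab'] at hR1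
  set S' := S ∪ Finset.Ioc a b with hS'
  have haS' : a ∈ S' := Finset.mem_union_left _ ha
  have hsub : Finset.Ioc a (a + (b - a - 1)) ⊆ S' := by
    intro x hx
    simp only [Finset.mem_Ioc] at hx
    exact Finset.mem_union_right _ (by simp only [Finset.mem_Ioc]; omega)
  obtain ⟨hL2, hR2, hB2⟩ := dn_spec a (b - a - 1) S' haS' hsub
  have hcard' : S'.card = S.card + (b - a) := by
    rw [hS', Finset.card_union_of_disjoint, Nat.card_Ioc]
    exact Finset.disjoint_left.mpr (fun x hx hx2 => by
      have := hd x hx; simp only [Finset.mem_Ioc] at hx2; omega)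
  have hfin : S' \ Finset.Ioc a (a + (b - a - 1)) = insert b S := by
    ext x
    simp only [hS', Finset.mem_sdiff, Finset.mem_union, Finset.mem_Ioc, Finset.mem_insert]
    by_cases hxS : x ∈ S
    · have := hd x hxS; simp [hxS]; omega
    · simp [hxS]; omega
  refine ⟨?_, ?_, ?_⟩
  · exact LegalM_append hL1 (by rw [hR1]; exact hL2)
  · rw [blockL, runM_append, hR1, hR2, hfin]
  · exact BddM_append hB1 (by rw [hR1]; exact BddM_mono (le_of_eq hcard') hB2)

lemma unblock_spec {S : Finset ℕ} {a b : ℕ} (ha : a ∈ S) (hb : b ∈ S) (hab : a < b)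
    (hd : ∀ x ∈ S, a < x → b ≤ x) :
    LegalM S (unblockL a b) ∧ runM S (unblockL a b) = S.erase b ∧
      BddM (S.card + (b - a - 1)) S (unblockL a b) := by
  have hdisj : ∀ i ∈ Finset.Ioc a (a + (b - a - 1)), i ∉ S := by
    intro i hi hiS
    simp only [Finset.mem_Ioc] at hi
    have := hd i hiS (by omega)
    omega
  obtain ⟨hL1, hR1, hB1⟩ := up_spec_s2 a (b - a - 1) S ha hdisj
  have heq : a + (b - a - 1) = b - 1 := by omega
  rw [heq] at hR1
  set S' := S ∪ Finset.Ioc a (b - 1) with hS'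
  have hbS' : b ∈ S' := Finset.mem_union_left _ hb
  have htog : tog S' b = S'.erase b := by rw [tog, if_pos hbS']
  have hprev : b - 1 ∈ S' := by
    rcases Nat.lt_or_ge a (b - 1) with h | h
    · exact Finset.mem_union_right _ (by simp only [Finset.mem_Ioc]; omega)
    · have : b - 1 = a := by omega
      rw [this]; exact Finset.mem_union_left _ ha
  have haS'' : a ∈ S'.erase b := Finset.mem_erase.mpr ⟨by omega, Finset.mem_union_left _ ha⟩
  have hsub : Finset.Ioc a (a + (b - a - 1)) ⊆ S'.erase b := by
    intro x hx
    simp only [Finset.mem_Ioc] at hx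
    refine Finset.mem_erase.mpr ⟨by omega, Finset.mem_union_right _ ?_⟩
    simp only [Finset.mem_Ioc]; omega
  obtain ⟨hL2, hR2, hB2⟩ := dn_spec a (b - a - 1) (S'.erase b) haS'' hsub
  have hdj : Disjoint S (Finset.Ioc a (b - 1)) :=
    Finset.disjoint_left.mpr (fun x hx hx2 => by
      simp only [Finset.mem_Ioc] at hx2
      have := hd x hx hx2.1; omega)
  have hcard' : S'.card = S.card + (b - a - 1) := by
    rw [hS', Finset.card_union_of_disjoint hdj, Nat.card_Ioc]
    omega
  have hfin : (S'.erase b) \ Finset.Ioc a (a + (b - a - 1)) = S.erase b := by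
    ext x
    simp only [hS', Finset.mem_sdiff, Finset.mem_erase, Finset.mem_union, Finset.mem_Ioc]
    by_cases hxS : x ∈ S
    · by_cases hxb : x = b
      · simp [hxS, hxb] <;> omega
      · have := hd x hxS; simp [hxS, hxb] <;> omega
    · simp [hxS] <;> omega
  refine ⟨?_, ?_, ?_⟩
  · refine LegalM_append hL1 ?_
    rw [hR1]
    exact ⟨Or.inr ⟨by omega, hprev⟩, by rw [htog]; exact hL2⟩
  · rw [unblockL, runM_append, hR1, runM_cons, htog, hR2, hfin]
  · refine BddM_append hB1 ?_
    rw [hR1]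
    refine ⟨le_of_eq hcard', ?_⟩
    rw [htog]
    exact BddM_mono (le_trans Finset.card_erase_le (le_of_eq hcard')) hB2


/-! ### Checkpoints -/

def cp (m k j : ℕ) : ℕ := m * j / k

section Checkpoints

variable {m k : ℕ}

lemma cp_zero : cp m k 0 = 0 := by simp [cp]

lemma cp_last (hk : 0 < k) : cp m k k = m := Nat.mul_div_cancel m hk

lemma cp_succ_lt (hk : 0 < k) (hkm : k ≤ m) (j : ℕ) : cp m k j < cp m k (j + 1) := by
  have h1 : cp m k j + 1 = (m * j + k) / k := (Nat.add_div_right _ hk).symm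
  have h2 : (m * j + k) / k ≤ (m * j + m) / k := Nat.div_le_div_right (by omega)
  have h3 : m * j + m = m * (j + 1) := by ring
  rw [h3] at h2
  have : cp m k j + 1 ≤ cp m k (j + 1) := by rw [h1]; exact h2
  omega

lemma cp_strictMono (hk : 0 < k) (hkm : k ≤ m) : StrictMono (cp m k) :=
  strictMono_nat_of_lt_succ (cp_succ_lt hk hkm)

lemma cp_succ_le (hk : 0 < k) (hm2 : m + 1 ≤ k * k) (j : ℕ) :
    cp m k (j + 1) ≤ cp m k j + k := by
  have h : m * (j + 1) < (cp m k j + k + 1) * k := by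
    have h1 := Nat.div_add_mod (m * j) k
    have h2 := Nat.mod_lt (m * j) hk
    have h3 : (cp m k j + k + 1) * k = k * (m * j / k) + k * k + k := by
      rw [cp]; ring
    have h4 : m * (j + 1) = m * j + m := by ring
    rw [h3, h4]
    linarith
  have := (Nat.div_lt_iff_lt_mul hk).mpr h
  exact Nat.lt_succ_iff.mp this

lemma cp_one_le (hk : 0 < k) (hm2 : m + 1 ≤ k * k) : cp m k 1 ≤ k - 1 := by
  have : m / k < k := (Nat.div_lt_iff_lt_mul hk).mpr (by omega)
  have h1 : cp m k 1 = m / k := by rw [cp, mul_one]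
  omega

def SP (m k j : ℕ) : Finset ℕ := (Finset.Icc 1 j).image (cp m k)

def TP (m k j : ℕ) : Finset ℕ := insert m (SP m k j)

lemma SP_card (hk : 0 < k) (hkm : k ≤ m) (j : ℕ) : (SP m k j).card = j := by
  rw [SP, Finset.card_image_of_injOn ((cp_strictMono hk hkm).injective.injOn), Nat.card_Icc]
  omega

lemma mem_SP_le (hk : 0 < k) (hkm : k ≤ m) {j x : ℕ} (hx : x ∈ SP m k j) :
    x ≤ cp m k j := by
  simp only [SP, Finset.mem_image, Finset.mem_Icc] at hx
  obtain ⟨i, ⟨_, hij⟩, rfl⟩ := hx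
  exact (cp_strictMono hk hkm).monotone hij

lemma cp_mem_SP {j : ℕ} (hj : 1 ≤ j) : cp m k j ∈ SP m k j := by
  simp only [SP, Finset.mem_image, Finset.mem_Icc]
  exact ⟨j, ⟨hj, le_refl j⟩, rfl⟩

lemma SP_succ (j : ℕ) : SP m k (j + 1) = insert (cp m k (j + 1)) (SP m k j) := by
  ext x
  simp only [SP, Finset.mem_image, Finset.mem_Icc, Finset.mem_insert]
  constructor
  · rintro ⟨i, ⟨h1, h2⟩, rfl⟩
    rcases eq_or_lt_of_le h2 with rfl | h
    · exact Or.inl rfl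
    · exact Or.inr ⟨i, ⟨h1, by omega⟩, rfl⟩
  · rintro (rfl | ⟨i, ⟨h1, h2⟩, rfl⟩)
    · exact ⟨j + 1, ⟨by omega, le_refl _⟩, rfl⟩
    · exact ⟨i, ⟨h1, by omega⟩, rfl⟩

lemma m_not_mem_SP (hk : 0 < k) (hkm : k ≤ m) {j : ℕ} (hj : j < k) :
    m ∉ SP m k j := by
  intro h
  have := mem_SP_le hk hkm h
  have h2 : cp m k j < cp m k k := cp_strictMono hk hkm hj
  rw [cp_last hk] at h2
  omega

lemma TP_card (hk : 0 < k) (hkm : k ≤ m) {j : ℕ} (hj : j < k) :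
    (TP m k j).card = j + 1 := by
  rw [TP, Finset.card_insert_of_notMem (m_not_mem_SP hk hkm hj), SP_card hk hkm]

/-! ### Phase 1: the blocks -/

def blocksL (m k : ℕ) : ℕ → ℕ → List ℕ
  | _, 0 => []
  | j, n + 1 => blockL (cp m k j) (cp m k (j + 1)) ++ blocksL m k (j + 1) n

lemma blocks_spec (hk : 2 ≤ k) (hkm : k ≤ m) (hm2 : m + 1 ≤ k * k) :
    ∀ n j, 1 ≤ j → j + n ≤ k →
    LegalM (SP m k j) (blocksL m k j n) ∧
      runM (SP m k j) (blocksL m k j n) = SP m k (j + n) ∧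
      BddM (2 * k - 1) (SP m k j) (blocksL m k j n) := by
  have hk0 : 0 < k := by omega
  intro n
  induction n with
  | zero =>
    intro j hj hjk
    refine ⟨trivial, by simp [blocksL], ?_⟩
    show (SP m k j).card ≤ 2 * k - 1
    rw [SP_card hk0 hkm]
    omega
  | succ n ih =>
    intro j hj hjk
    obtain ⟨bL, bR, bB⟩ := block_spec (S := SP m k j) (cp_mem_SP hj)
      (cp_succ_lt hk0 hkm j) (fun x hx => mem_SP_le hk0 hkm hx)
    rw [← SP_succ] at bR
    obtain ⟨iL, iR, iB⟩ := ih (j + 1) (by omega) (by omega)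
    have hrun : runM (SP m k j) (blocksL m k j (n + 1)) = SP m k (j + (n + 1)) := by
      rw [blocksL, runM_append, bR]
      rw [iR]
      congr 1
      omega
    refine ⟨?_, hrun, ?_⟩
    · exact LegalM_append bL (by rw [bR]; exact iL)
    · refine BddM_append (BddM_mono ?_ bB) (by rw [bR]; exact iB)
      rw [SP_card hk0 hkm]
      have := cp_succ_le hk0 hm2 j
      omega

/-! ### Phase 2: the unblocks -/

def unblocksL (m k : ℕ) : ℕ → ℕ → List ℕ
  | _, 0 => []
  | j, n + 1 => unblocksL m k (j + 1) n ++ unblockL (cp m k j) (cp m k (j + 1))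

lemma unblocks_spec (hk : 2 ≤ k) (hkm : k ≤ m) (hm2 : m + 1 ≤ k * k) :
    ∀ n j, 1 ≤ j → j + n + 1 ≤ k →
    LegalM (TP m k (j + n)) (unblocksL m k j n) ∧
      runM (TP m k (j + n)) (unblocksL m k j n) = TP m k j ∧
      BddM (2 * k - 1) (TP m k (j + n)) (unblocksL m k j n) := by
  have hk0 : 0 < k := by omega
  intro n
  induction n with
  | zero =>
    intro j hj hjk
    refine ⟨trivial, by simp [unblocksL], ?_⟩
    show (TP m k j).card ≤ 2 * k - 1
    rw [TP_card hk0 hkm (by omega)]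
    omega
  | succ n ih =>
    intro j hj hjk
    obtain ⟨iL, iR, iB⟩ := ih (j + 1) (by omega) (by omega)
    have heq : j + (n + 1) = (j + 1) + n := by omega
    have hcpj : cp m k j ∈ TP m k (j + 1) := by
      rw [TP, SP_succ]
      exact Finset.mem_insert_of_mem (Finset.mem_insert_of_mem (cp_mem_SP hj))
    have hcpj1 : cp m k (j + 1) ∈ TP m k (j + 1) := by
      rw [TP]
      exact Finset.mem_insert_of_mem (cp_mem_SP (by omega))
    have hd : ∀ x ∈ TP m k (j + 1), cp m k j < x → cp m k (j + 1) ≤ x := by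
      intro x hx hlt
      rw [TP, Finset.mem_insert] at hx
      rcases hx with rfl | hx
      · have := (cp_strictMono hk0 hkm).monotone (show j + 1 ≤ k by omega)
        rw [cp_last hk0] at this
        exact this
      · simp only [SP, Finset.mem_image, Finset.mem_Icc] at hx
        obtain ⟨i, ⟨hi1, hi2⟩, rfl⟩ := hx
        have : j < i := by
          by_contra hc
          have := (cp_strictMono hk0 hkm).monotone (show i ≤ j by omega)
          omega
        exact (cp_strictMono hk0 hkm).monotone (by omega)
    obtain ⟨uL, uR, uB⟩ := unblock_spec (S := TP m k (j + 1)) hcpj hcpj1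
      (cp_succ_lt hk0 hkm j) hd
    have hTP1 : TP m k (j + 1) = insert (cp m k (j + 1)) (TP m k j) := by
      rw [TP, TP, SP_succ, Finset.insert_comm]
    have hnotmem : cp m k (j + 1) ∉ TP m k j := by
      rw [TP, Finset.mem_insert]
      push_neg
      constructor
      · have h2 : cp m k (j + 1) < cp m k k := cp_strictMono hk0 hkm (by omega)
        rw [cp_last hk0] at h2
        omega
      · intro h
        have := mem_SP_le hk0 hkm h
        have := cp_succ_lt hk0 hkm j
        omega
    have hres : (TP m k (j + 1)).erase (cp m k (j + 1)) = TP m k j := by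
      rw [hTP1, Finset.erase_insert hnotmem]
    refine ⟨?_, ?_, ?_⟩
    · rw [heq]
      exact LegalM_append iL (by rw [iR]; exact uL)
    · rw [heq, unblocksL, runM_append, iR, uR, hres]
    · rw [heq]
      have hbd : (TP m k (j + 1)).card + (cp m k (j + 1) - cp m k j - 1) ≤ 2 * k - 1 := by
        rw [TP_card hk0 hkm (by omega)]
        have := cp_succ_le hk0 hm2 j
        have := cp_succ_lt hk0 hkm j
        omega
      exact BddM_append iB (by rw [iR]; exact BddM_mono hbd uB)

end Checkpoints


/-! ### Lengths and squaring counts -/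

@[simp] lemma upL_length (a n : ℕ) : (upL a n).length = n := by
  induction n with
  | zero => rfl
  | succ n ih => simp [upL, ih]

@[simp] lemma dnL_length (a n : ℕ) : (dnL a n).length = n := by
  induction n with
  | zero => rfl
  | succ n ih => simp [dnL, ih]

lemma blockL_length (a b : ℕ) :
    (blockL a b).length = (b - a) + (b - a - 1) := by
  simp [blockL]

lemma unblockL_length (a b : ℕ) :
    (unblockL a b).length = (b - a - 1) + (1 + (b - a - 1)) := by
  simp [unblockL]
  omega

section Lengths

variable {m k : ℕ}

lemma blocksL_len (hk0 : 0 < k) (hkm : k ≤ m) :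
    ∀ n j, (blocksL m k j n).length ≤ 2 * (cp m k (j + n) - cp m k j) := by
  intro n
  induction n with
  | zero => intro j; simp [blocksL]
  | succ n ih =>
    intro j
    rw [blocksL, List.length_append]
    have h1 := cp_succ_lt hk0 hkm j
    have h2 : cp m k (j + 1) ≤ cp m k (j + 1 + n) :=
      (cp_strictMono hk0 hkm).monotone (by omega)
    have h3 := ih (j + 1)
    have e : j + (n + 1) = j + 1 + n := by omega
    rw [e, blockL_length]
    omega

lemma unblocksL_len (hk0 : 0 < k) (hkm : k ≤ m) :
    ∀ n j, (unblocksL m k j n).length ≤ 2 * (cp m k (j + n) - cp m k j) := by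
  intro n
  induction n with
  | zero => intro j; simp [unblocksL]
  | succ n ih =>
    intro j
    rw [unblocksL, List.length_append]
    have h1 := cp_succ_lt hk0 hkm j
    have h2 : cp m k (j + 1) ≤ cp m k (j + 1 + n) :=
      (cp_strictMono hk0 hkm).monotone (by omega)
    have h3 := ih (j + 1)
    have e : j + (n + 1) = j + 1 + n := by omega
    rw [e, unblockL_length]
    omega

/-! ### The full strategy -/

def fullL (m k : ℕ) : List ℕ :=
  0 :: (blockL 0 (cp m k 1) ++
    (0 :: (blocksL m k 1 (k - 1) ++
      (unblocksL m k 1 (k - 2) ++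
        (0 :: (unblockL 0 (cp m k 1) ++ [0]))))))

lemma full_spec (hk : 2 ≤ k) (hkm : k ≤ m) (hm2 : m + 1 ≤ k * k) :
    LegalM ∅ (fullL m k) ∧ runM ∅ (fullL m k) = {m} ∧
      BddM (2 * k - 1) ∅ (fullL m k) ∧
      (fullL m k).countP (fun i => decide (1 ≤ i)) ≤ 4 * m - 2 := by
  have hk0 : 0 < k := by omega
  have hc1pos : 0 < cp m k 1 := by
    have h1 := cp_succ_lt hk0 hkm 0
    norm_num at h1
    rw [cp_zero] at h1
    omega
  have hc1le : cp m k 1 ≤ k - 1 := cp_one_le hk0 hm2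
  have hc1m : cp m k 1 < m := by
    have h := cp_strictMono hk0 hkm (show 1 < k by omega)
    rwa [cp_last hk0] at h
  have hm1 : 1 ≤ m := by omega
  -- step configs
  have t1 : tog ∅ 0 = {0} := by
    rw [tog, if_neg (Finset.notMem_empty 0)]; rfl
  obtain ⟨AL, AR, AB⟩ := block_spec (S := ({0} : Finset ℕ)) (a := 0) (b := cp m k 1)
    (Finset.mem_singleton_self 0) hc1pos (fun x hx => by
      rw [Finset.mem_singleton] at hx; omega)
  have t2 : tog (insert (cp m k 1) {0}) 0 = {cp m k 1} := by
    rw [tog, if_pos (Finset.mem_insert_of_mem (Finset.mem_singleton_self 0))]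
    ext x
    simp only [Finset.mem_erase, Finset.mem_insert, Finset.mem_singleton]
    omega
  have hSP1 : SP m k 1 = {cp m k 1} := by
    rw [SP, Finset.Icc_self, Finset.image_singleton]
  obtain ⟨BL, BR, BB⟩ := blocks_spec hk hkm hm2 (k - 1) 1 (le_refl 1) (by omega)
  have hSPk : SP m k k = TP m k (k - 1) := by
    have e2 : k = (k - 1) + 1 := by omega
    rw [TP]
    conv_lhs => rw [e2]
    rw [SP_succ, ← e2, cp_last hk0]
  have eB : 1 + (k - 1) = k := by omega
  rw [eB, hSPk, hSP1] at BR
  rw [hSP1] at BL BB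
  obtain ⟨CL, CR, CB⟩ := unblocks_spec hk hkm hm2 (k - 2) 1 (le_refl 1) (by omega)
  have eC : 1 + (k - 2) = k - 1 := by omega
  rw [eC] at CL CR CB
  have hTP1 : TP m k 1 = insert m {cp m k 1} := by rw [TP, hSP1]
  have t3 : tog (TP m k 1) 0 = insert 0 (TP m k 1) := by
    rw [tog, if_neg]
    rw [hTP1]
    simp only [Finset.mem_insert, Finset.mem_singleton]
    omega
  have hU : insert 0 (TP m k 1) = insert (cp m k 1) (insert 0 {m}) := by
    rw [hTP1]
    ext x
    simp only [Finset.mem_insert, Finset.mem_singleton]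
    tauto
  obtain ⟨DL, DR, DB⟩ := unblock_spec (S := insert 0 (TP m k 1)) (a := 0) (b := cp m k 1)
    (Finset.mem_insert_self 0 _)
    (by rw [hTP1]; exact Finset.mem_insert_of_mem (Finset.mem_insert_of_mem
      (Finset.mem_singleton_self _)))
    hc1pos
    (by
      intro x hx hpos
      rw [hTP1] at hx
      simp only [Finset.mem_insert, Finset.mem_singleton] at hx
      rcases hx with rfl | rfl | rfl <;> omega)
  have hDres : (insert 0 (TP m k 1)).erase (cp m k 1) = insert 0 {m} := by
    rw [hU, Finset.erase_insert]
    simp only [Finset.mem_insert, Finset.mem_singleton]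
    omega
  rw [hDres] at DR
  have t4 : tog (insert 0 {m}) 0 = {m} := by
    rw [tog, if_pos (Finset.mem_insert_self 0 _), Finset.erase_insert]
    simp only [Finset.mem_singleton]
    omega
  have hUcard : (insert 0 (TP m k 1)).card ≤ 3 := by
    rw [hU]
    refine le_trans (Finset.card_insert_le _ _) ?_
    have := Finset.card_insert_le 0 ({m} : Finset ℕ)
    simp only [Finset.card_singleton] at this
    omega
  -- the final run value
  have hrun : runM ∅ (fullL m k) = {m} := by
    simp only [fullL, runM_cons, runM_append, runM_nil]
    rw [t1, AR, t2, BR, CR, t3, DR, t4]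
  refine ⟨?_, hrun, ?_, ?_⟩
  · -- legality
    refine ⟨Or.inl rfl, ?_⟩
    rw [t1]
    refine LegalM_append AL ?_
    rw [AR]
    refine ⟨Or.inl rfl, ?_⟩
    rw [t2]
    refine LegalM_append BL ?_
    rw [BR]
    refine LegalM_append CL ?_
    rw [CR]
    refine ⟨Or.inl rfl, ?_⟩
    rw [t3]
    refine LegalM_append DL ?_
    rw [DR]
    exact ⟨Or.inl rfl, trivial⟩
  · -- boundedness
    refine ⟨by simp, ?_⟩
    rw [t1]
    refine BddM_append (BddM_mono ?_ AB) ?_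
    · simp only [Finset.card_singleton]
      omega
    rw [AR]
    refine ⟨?_, ?_⟩
    · refine le_trans (Finset.card_insert_le _ _) ?_
      simp only [Finset.card_singleton]
      omega
    rw [t2]
    refine BddM_append BB ?_
    rw [BR]
    refine BddM_append CB ?_
    rw [CR]
    refine ⟨?_, ?_⟩
    · rw [TP_card hk0 hkm (by omega)]
      omega
    rw [t3]
    refine BddM_append (BddM_mono ?_ DB) ?_
    · omega
    rw [DR]
    refine ⟨?_, ?_⟩
    · refine le_trans (Finset.card_insert_le _ _) ?_
      simp only [Finset.card_singleton]
      omega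
    rw [t4]
    show ({m} : Finset ℕ).card ≤ 2 * k - 1
    simp only [Finset.card_singleton]
    omega
  · -- squaring count
    have hA : (blockL 0 (cp m k 1)).countP (fun i => decide (1 ≤ i)) ≤ 2 * cp m k 1 := by
      refine le_trans List.countP_le_length ?_
      rw [blockL_length]
      omega
    have hB : (blocksL m k 1 (k - 1)).countP (fun i => decide (1 ≤ i))
        ≤ 2 * (m - cp m k 1) := by
      refine le_trans List.countP_le_length ?_
      have := blocksL_len hk0 hkm (k - 1) 1
      rw [eB, cp_last hk0] at this
      exact this
    have hC : (unblocksL m k 1 (k - 2)).countP (fun i => decide (1 ≤ i))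
        ≤ 2 * (cp m k (k - 1) - cp m k 1) := by
      refine le_trans List.countP_le_length ?_
      have := unblocksL_len hk0 hkm (k - 2) 1
      rw [eC] at this
      exact this
    have hD : (unblockL 0 (cp m k 1)).countP (fun i => decide (1 ≤ i))
        ≤ 2 * cp m k 1 := by
      refine le_trans List.countP_le_length ?_
      rw [unblockL_length]
      omega
    have hck1 : cp m k (k - 1) < m := by
      have h := cp_strictMono hk0 hkm (show k - 1 < k by omega)
      rwa [cp_last hk0] at h
    have hc1k1 : cp m k 1 ≤ cp m k (k - 1) :=
      (cp_strictMono hk0 hkm).monotone (by omega)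
    have hexp : (fullL m k).countP (fun i => decide (1 ≤ i)) =
        (blockL 0 (cp m k 1)).countP (fun i => decide (1 ≤ i)) +
        (blocksL m k 1 (k - 1)).countP (fun i => decide (1 ≤ i)) +
        (unblocksL m k 1 (k - 2)).countP (fun i => decide (1 ≤ i)) +
        (unblockL 0 (cp m k 1)).countP (fun i => decide (1 ≤ i)) := by
      simp [fullL, List.countP_append, List.countP_cons]
      ring
    rw [hexp]
    omega

end Lengths


/-! ### From move lists to `MoveSeq` -/

lemma runM_take_succ (L : List ℕ) :
    ∀ (t : ℕ) (S : Finset ℕ), t < L.length →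
      runM S (L.take (t + 1)) = tog (runM S (L.take t)) (L.getD t 0) := by
  induction L with
  | nil => intro t S ht; simp at ht
  | cons a L ih =>
    intro t S ht
    cases t with
    | zero => simp
    | succ t =>
      simp only [List.take_succ_cons, List.getD_cons_succ, runM_cons]
      exact ih t (tog S a) (by simpa using ht)

lemma legalM_take (L : List ℕ) :
    ∀ (t : ℕ) (S : Finset ℕ), LegalM S L → t < L.length →
      (L.getD t 0 = 0 ∨ (1 ≤ L.getD t 0 ∧ L.getD t 0 - 1 ∈ runM S (L.take t))) := by
  induction L with
  | nil => intro t S _ ht; simp at ht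
  | cons a L ih =>
    intro t S hL ht
    cases t with
    | zero => simpa using hL.1
    | succ t =>
      simp only [List.take_succ_cons, List.getD_cons_succ, runM_cons]
      exact ih t (tog S a) hL.2 (by simpa using ht)

lemma bddM_take {P : ℕ} (L : List ℕ) :
    ∀ (t : ℕ) (S : Finset ℕ), BddM P S L → (runM S (L.take t)).card ≤ P := by
  induction L with
  | nil => intro t S h; simpa [BddM] using h
  | cons a L ih =>
    intro t S h
    cases t with
    | zero => simpa using h.1
    | succ t =>
      simp only [List.take_succ_cons, runM_cons]
      exact ih t (tog S a) h.2

def mkSeq (L : List ℕ) (hL : LegalM ∅ L) : MoveSeq where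
  T := L.length
  conf := fun t => runM ∅ (L.take t)
  move := fun t => L.getD t 0
  init := by simp
  legal := fun t ht => legalM_take L t ∅ hL ht
  step := fun t ht => by
    show runM ∅ (L.take (t + 1)) = _
    rw [runM_take_succ L t ∅ ht]
    rfl

lemma mkSeq_space {L : List ℕ} {hL : LegalM ∅ L} {P : ℕ} (h : BddM P ∅ L) :
    (mkSeq L hL).space ≤ P :=
  Finset.sup_le fun t _ => bddM_take L t ∅ h

lemma mkSeq_cleanly {L : List ℕ} {hL : LegalM ∅ L} {m : ℕ} (h : runM ∅ L = {m}) :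
    (mkSeq L hL).CleanlyComputes m := by
  show runM ∅ (L.take L.length) = {m}
  rw [List.take_length, h]

lemma filter_getD (L : List ℕ) :
    ((Finset.range L.length).filter fun t => 1 ≤ L.getD t 0).card
      = L.countP (fun i => decide (1 ≤ i)) := by
  induction L using List.reverseRecOn with
  | nil => simp
  | append_singleton L x ih =>
    rw [List.countP_append, List.length_append]
    have hcongr : (Finset.range L.length).filter (fun t => 1 ≤ (L ++ [x]).getD t 0)
        = (Finset.range L.length).filter (fun t => 1 ≤ L.getD t 0) := by
      apply Finset.filter_congr
      intro t ht
      rw [List.getD_append _ _ _ _ (Finset.mem_range.mp ht)]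
    have hget : (L ++ [x]).getD L.length 0 = x := by
      rw [List.getD_append_right _ _ _ _ (le_refl _), Nat.sub_self]
      rfl
    have hnm : L.length ∉ (Finset.range L.length).filter
        (fun t => 1 ≤ (L ++ [x]).getD t 0) :=
      fun hmem => absurd (Finset.mem_range.mp (Finset.mem_filter.mp hmem).1) (lt_irrefl _)
    simp only [List.length_singleton]
    rw [show L.length + 1 = (L.length).succ from rfl, Nat.succ_eq_add_one, Finset.range_add_one, Finset.filter_insert]
    by_cases hx : 1 ≤ x
    · rw [if_pos (by rw [hget]; exact hx), Finset.card_insert_of_notMem hnm, hcongr, ih]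
      simp [List.countP_cons, hx]
    · rw [if_neg (by rw [hget]; exact hx), hcongr, ih]
      simp [List.countP_cons, hx]

lemma mkSeq_squarings (L : List ℕ) (hL : LegalM ∅ L) :
    (mkSeq L hL).squarings = L.countP (fun i => decide (1 ≤ i)) :=
  filter_getD L

end PebbleAux

open PebbleAux in
/-- the simple strategy with `k ≈ √(m+1)`: space `O(√m)`, linear time. -/
theorem simple_strategy_sqrt_space (m : ℕ) (hm : 1 ≤ m) :
    ∃ M : MoveSeq, M.CleanlyComputes m ∧
      (M.space : ℤ) ≤ 2 * ⌈Real.sqrt ((m : ℝ) + 1)⌉ - 1 ∧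
      M.squarings ≤ 4 * m - 2 := by
  have hr0 : (0:ℝ) < Real.sqrt ((m:ℝ) + 1) := Real.sqrt_pos.mpr (by positivity)
  have hceil0 : 0 < ⌈Real.sqrt ((m:ℝ) + 1)⌉ := Int.ceil_pos.mpr hr0
  set k : ℕ := (⌈Real.sqrt ((m:ℝ) + 1)⌉).toNat with hkdef
  have hkz : (k : ℤ) = ⌈Real.sqrt ((m:ℝ) + 1)⌉ := Int.toNat_of_nonneg hceil0.le
  have hk2 : 2 ≤ k := by
    have h1 : (1:ℝ) < Real.sqrt ((m:ℝ) + 1) := by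
      rw [Real.lt_sqrt (by norm_num : (0:ℝ) ≤ 1)]
      have : (1:ℝ) ≤ (m:ℝ) := by exact_mod_cast hm
      nlinarith
    have h2 : (1:ℤ) < ⌈Real.sqrt ((m:ℝ) + 1)⌉ := Int.lt_ceil.mpr (by exact_mod_cast h1)
    omega
  have hm2 : m + 1 ≤ k * k := by
    have h1 : Real.sqrt ((m:ℝ)+1) ≤ (k:ℝ) := by
      have h := Int.le_ceil (Real.sqrt ((m:ℝ)+1))
      rw [← hkz] at h
      exact_mod_cast h
    have h2 : (m:ℝ) + 1 ≤ (k:ℝ) * (k:ℝ) := by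
      have hs := Real.sq_sqrt (show (0:ℝ) ≤ (m:ℝ)+1 by positivity)
      nlinarith [hr0.le]
    exact_mod_cast h2
  have hbound : (2:ℤ) * ⌈Real.sqrt ((m:ℝ)+1)⌉ - 1 = ((2*k - 1 : ℕ) : ℤ) := by
    rw [← hkz]
    omega
  by_cases hm1 : m = 1
  · subst hm1
    have leg1 : LegalM ∅ [0,1,0] := by
      refine ⟨Or.inl rfl, ?_, Or.inl rfl, trivial⟩
      refine Or.inr ⟨le_refl 1, ?_⟩
      show 0 ∈ tog ∅ 0
      rw [tog, if_neg (Finset.notMem_empty 0)]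
      exact Finset.mem_insert_self 0 ∅
    refine ⟨mkSeq [0,1,0] leg1, ?_, ?_, ?_⟩
    · exact mkSeq_cleanly (by decide)
    · have hsp : (mkSeq [0,1,0] leg1).space ≤ 3 := mkSeq_space (by norm_num [BddM, tog])
      have h3 : ((mkSeq [0,1,0] leg1).space : ℤ) ≤ 3 := by exact_mod_cast hsp
      refine le_trans h3 ?_
      rw [hbound]
      omega
    · rw [mkSeq_squarings]
      decide
  · have hm' : 2 ≤ m := by omega
    have hkm : k ≤ m := by
      rcases Nat.lt_or_ge k 3 with h3 | h3
      · omega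
      · have h1 : ((k:ℝ) - 1) < Real.sqrt ((m:ℝ)+1) := by
          have h := Int.ceil_lt_add_one (Real.sqrt ((m:ℝ)+1))
          rw [← hkz] at h
          push_cast at h
          linarith
        have h2 : ((k:ℝ) - 1)^2 < (m:ℝ) + 1 := by
          have hs := Real.sq_sqrt (show (0:ℝ) ≤ (m:ℝ)+1 by positivity)
          have hk1 : (0:ℝ) ≤ (k:ℝ) - 1 := by
            have : (3:ℝ) ≤ (k:ℝ) := by exact_mod_cast h3
            linarith
          nlinarith
        have h4 : ((k - 1 : ℕ):ℝ) = (k:ℝ) - 1 := by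
          rw [Nat.cast_sub (by omega : 1 ≤ k), Nat.cast_one]
        have h5 : (k-1)*(k-1) ≤ m := by
          rw [← h4] at h2
          have h5' : (((k-1):ℕ):ℝ) * (((k-1):ℕ):ℝ) < (m:ℝ) + 1 := by nlinarith
          have h5'' : (k-1)*(k-1) < m + 1 := by exact_mod_cast h5'
          omega
        have h6 : 2*(k-1) ≤ (k-1)*(k-1) := Nat.mul_le_mul_right _ (by omega)
        omega
    obtain ⟨Lg, Rg, Bg, Cg⟩ := full_spec hk2 hkm hm2
    refine ⟨mkSeq (fullL m k) Lg, mkSeq_cleanly Rg, ?_, ?_⟩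
    · have hsp := mkSeq_space (hL := Lg) Bg
      rw [hbound]
      exact_mod_cast hsp
    · rw [mkSeq_squarings]
      exact Cg
end

section
/- For every n and every move sequence whose space is at most n, no configuration visited by the sequence contains the node 2^n − 1. -/
namespace PebbleAux

/-- Best support below `x` in list `L`: max of `q+1` over `q ∈ L` with `q < x`, or `0`. -/
def supp (x : ℕ) : List ℕ → ℕ
  | [] => 0
  | q :: R => if q < x then max (q + 1) (supp x R) else supp x R

@[simp] lemma supp_nil (x : ℕ) : supp x [] = 0 := rfl

lemma supp_cons (x a : ℕ) (R : List ℕ) :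
    supp x (a :: R) = if a < x then max (a + 1) (supp x R) else supp x R := rfl

lemma le_supp_of_mem {q x : ℕ} : ∀ {L : List ℕ}, q ∈ L → q < x → q + 1 ≤ supp x L
  | a :: R, h, hq => by
    rcases List.mem_cons.1 h with rfl | h'
    · rw [supp_cons, if_pos hq]; exact le_max_left _ _
    · have := le_supp_of_mem h' hq
      rw [supp_cons]
      split
      · exact le_trans this (le_max_right _ _)
      · exact this

lemma supp_le_supp {x y : ℕ} (hxy : x ≤ y) :
    ∀ {L₁ : List ℕ} {L₂ : List ℕ}, (∀ q, q ∈ L₁ → q < x → q ∈ L₂) →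
    supp x L₁ ≤ supp y L₂
  | [], L₂, _ => Nat.zero_le _
  | a :: R, L₂, hmem => by
    have hR : supp x R ≤ supp y L₂ :=
      supp_le_supp hxy (fun q hq hlt => hmem q (List.mem_cons_of_mem a hq) hlt)
    rw [supp_cons]
    split
    · rename_i ha
      refine max_le ?_ hR
      exact le_supp_of_mem (hmem a (List.mem_cons_self) ha) (lt_of_lt_of_le ha hxy)
    · exact hR

lemma supp_cases (x : ℕ) : ∀ (L : List ℕ),
    supp x L = 0 ∨ ∃ q, q ∈ L ∧ q < x ∧ supp x L = q + 1
  | [] => Or.inl rfl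
  | a :: R => by
    rcases supp_cases x R with h | ⟨q, hq, hlt, hs⟩ <;> rw [supp_cons] <;> split
    · rename_i ha
      right; exact ⟨a, List.mem_cons_self, ha, by omega⟩
    · left; exact h
    · rename_i ha
      rcases Nat.le_total (a + 1) (q + 1) with hle | hle
      · right; exact ⟨q, List.mem_cons_of_mem a hq, hlt, by omega⟩
      · right; exact ⟨a, List.mem_cons_self, ha, by omega⟩
    · right; exact ⟨q, List.mem_cons_of_mem a hq, hlt, hs⟩

/-- Valid removal order: `ok e L` says the list `L` can be "unpebbled" in order, where
the `j`-th element gets budget exponent `e + j` and must be within `2^(e+j)` of its best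
support among later elements. -/
def ok : ℕ → List ℕ → Prop
  | _, [] => True
  | e, p :: R => p + 1 ≤ supp p R + 2 ^ e ∧ ok (e + 1) R

lemma ok_nil (e : ℕ) : ok e [] := trivial

lemma ok_cons {e p : ℕ} {R : List ℕ} :
    ok e (p :: R) ↔ p + 1 ≤ supp p R + 2 ^ e ∧ ok (e + 1) R := Iff.rfl

/-- Upper bound: any member of an `ok e` list is below `2^(e + length) - 2^e`. -/
lemma ok_bound : ∀ (L : List ℕ) (e m : ℕ), ok e L → m ∈ L →
    m + 1 + 2 ^ e ≤ 2 ^ (e + L.length)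
  | p :: R, e, m, hok, hm => by
    obtain ⟨hhead, htail⟩ := hok
    have hp2 : (2:ℕ) ^ (e + 1) = 2 ^ e * 2 := pow_succ 2 e
    have hlen : e + (p :: R).length = (e + 1) + R.length := by
      simp [List.length_cons]; omega
    rcases List.mem_cons.1 hm with rfl | hmR
    · rcases supp_cases m R with h0 | ⟨q, hq, _, hs⟩
      · have hmono : (2:ℕ) ^ (e + 1) ≤ 2 ^ ((e + 1) + R.length) :=
          Nat.pow_le_pow_right (by norm_num) (by omega)
        rw [hlen]; omega
      · have hb := ok_bound R (e + 1) q htail hq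
        rw [hlen]; omega
    · have hb := ok_bound R (e + 1) m htail hmR
      rw [hlen]; omega

/-- KEY LEMMA: deleting an element `x` from an `ok` list (keeping the order) stays `ok`
with the starting exponent bumped by one, provided `x = 0` or `x` has a support in the
remaining list within slack `c`, `c + 1 ≤ 2^e`. -/
lemma ok_erase : ∀ (A : List ℕ) (e c : ℕ) (B : List ℕ) (x : ℕ),
    ok e (A ++ x :: B) → (x = 0 ∨ x ≤ supp x (A ++ B) + c) → c + 1 ≤ 2 ^ e →
    ok (e + 1) (A ++ B)
  | [], e, c, B, x, hok, _, _ => hok.2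
  | a :: A', e, c, B, x, hok, hyp, hc => by
    rw [List.cons_append, ok_cons] at hok
    obtain ⟨ha, htail⟩ := hok
    rw [List.cons_append] at hyp ⊢
    rw [ok_cons]
    have hp2 : (2:ℕ) ^ (e + 1) = 2 ^ e * 2 := pow_succ 2 e
    have h1e : 1 ≤ 2 ^ e := Nat.one_le_pow _ _ (by norm_num)
    constructor
    · -- head condition: a + 1 ≤ supp a (A' ++ B) + 2^(e+1)
      by_cases hxa : x < a
      · -- supp a (A'++x::B) ≤ max (x+1) (supp a (A'++B))
        have hsplit : supp a (A' ++ x :: B) ≤ max (x + 1) (supp a (A' ++ B)) := by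
          clear ha htail hyp
          induction A' with
          | nil =>
            rw [List.nil_append, supp_cons, if_pos hxa, List.nil_append]
          | cons q A'' ih =>
            rw [List.cons_append, supp_cons, List.cons_append, supp_cons]
            split
            · refine max_le (le_trans (le_max_left _ _) (le_max_right _ _)) ?_
              refine le_trans ih (max_le (le_max_left _ _) ?_)
              exact le_trans (le_max_right _ _) (le_max_right _ _)
            · exact ih
        have hxb : x + 1 ≤ supp a (A' ++ B) + 2 ^ e := by
          rcases hyp with rfl | hx
          · omega
          · rw [supp_cons, if_neg (by omega)] at hx
            have : supp x (A' ++ B) ≤ supp a (A' ++ B) :=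
              supp_le_supp (le_of_lt hxa) (fun q hq _ => hq)
            omega
        have hM : supp a (A' ++ x :: B) ≤ x + 1 ∨
            supp a (A' ++ x :: B) ≤ supp a (A' ++ B) := by
          rcases Nat.le_total (x + 1) (supp a (A' ++ B)) with h' | h'
          · exact Or.inr (le_trans hsplit (max_le h' le_rfl))
          · exact Or.inl (le_trans hsplit (max_le le_rfl h'))
        rcases hM with hM | hM <;> omega
      · -- x ≥ a : removing x cannot decrease a's support
        have : supp a (A' ++ x :: B) ≤ supp a (A' ++ B) := by
          refine supp_le_supp le_rfl (fun q hq hlt => ?_)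
          rcases List.mem_append.1 hq with h | h
          · exact List.mem_append.2 (Or.inl h)
          · rcases List.mem_cons.1 h with rfl | h
            · omega
            · exact List.mem_append.2 (Or.inr h)
        omega
    · -- tail: recursive call
      rcases hyp with rfl | hx
      · exact ok_erase A' (e + 1) c B 0 htail (Or.inl rfl) (by omega)
      · by_cases hax : a < x
        · rw [supp_cons, if_pos hax] at hx
          rcases Nat.le_total (a + 1) (supp x (A' ++ B)) with hle | hle
          · refine ok_erase A' (e + 1) c B x htail (Or.inr ?_) (by omega)
            omega
          · -- x's best support in the head a; use a's own condition
            have hsub : supp a (A' ++ x :: B) ≤ supp x (A' ++ B) := by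
              refine supp_le_supp (le_of_lt hax) (fun q hq hlt => ?_)
              rcases List.mem_append.1 hq with h | h
              · exact List.mem_append.2 (Or.inl h)
              · rcases List.mem_cons.1 h with rfl | h
                · omega
                · exact List.mem_append.2 (Or.inr h)
            refine ok_erase A' (e + 1) (c + 2 ^ e) B x htail (Or.inr ?_) (by omega)
            omega
        · rw [supp_cons, if_neg hax] at hx
          exact ok_erase A' (e + 1) c B x htail (Or.inr hx) (by omega)

/-- Decomposition of a list at a member. -/
lemma mem_split {x : ℕ} : ∀ {L : List ℕ}, x ∈ L → ∃ A B, L = A ++ x :: B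
  | a :: R, h => by
    rcases List.mem_cons.1 h with rfl | h'
    · exact ⟨[], R, rfl⟩
    · obtain ⟨A, B, hAB⟩ := mem_split h'
      exact ⟨a :: A, B, by rw [hAB, List.cons_append]⟩

/-- The invariant carried through the pebble game. -/
def Inv (n : ℕ) (S : Finset ℕ) : Prop :=
  ∃ L : List ℕ, L.Nodup ∧ L.toFinset = S ∧ L.length ≤ n ∧ ok (n - L.length) L

lemma inv_empty (n : ℕ) : Inv n ∅ :=
  ⟨[], List.nodup_nil, by simp, by simp, ok_nil _⟩

lemma inv_insert (n x : ℕ) (S : Finset ℕ) (hx : x ∉ S)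
    (hleg : x = 0 ∨ (1 ≤ x ∧ x - 1 ∈ S))
    (hcard : (insert x S).card ≤ n) (h : Inv n S) : Inv n (insert x S) := by
  obtain ⟨L, hnd, hfin, hlen, hok⟩ := h
  have hxL : x ∉ L := fun hmem => hx (hfin ▸ List.mem_toFinset.2 hmem)
  have hcard' : S.card = L.length := by
    rw [← hfin, List.toFinset_card_of_nodup hnd]
  have hlen1 : L.length + 1 ≤ n := by
    rw [Finset.card_insert_of_notMem hx] at hcard; omega
  refine ⟨x :: L, List.nodup_cons.2 ⟨hxL, hnd⟩, by rw [List.toFinset_cons, hfin],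
    by simpa using hlen1, ?_⟩
  have hlc : (x :: L).length = L.length + 1 := rfl
  rw [hlc, ok_cons]
  constructor
  · have h1 : 1 ≤ 2 ^ (n - (L.length + 1)) := Nat.one_le_pow _ _ (by norm_num)
    rcases hleg with rfl | ⟨hx1, hmem⟩
    · omega
    · have hmemL : x - 1 ∈ L := List.mem_toFinset.1 (by rw [hfin]; exact hmem)
      have := le_supp_of_mem hmemL (by omega : x - 1 < x)
      omega
  · have heq : n - (L.length + 1) + 1 = n - L.length := by omega
    rw [heq]; exact hok

lemma inv_erase (n x : ℕ) (S : Finset ℕ) (hx : x ∈ S)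
    (hleg : x = 0 ∨ (1 ≤ x ∧ x - 1 ∈ S)) (h : Inv n S) : Inv n (S.erase x) := by
  obtain ⟨L, hnd, hfin, hlen, hok⟩ := h
  have hxL : x ∈ L := List.mem_toFinset.1 (by rw [hfin]; exact hx)
  obtain ⟨A, B, hAB⟩ := mem_split hxL
  subst hAB
  have hndAB : (A ++ B).Nodup := by
    have h1 := List.nodup_append.1 hnd
    have h2 := List.nodup_cons.1 h1.2.1
    refine List.nodup_append.2 ⟨h1.1, h2.2, ?_⟩
    intro q hqA r hqB
    exact h1.2.2 q hqA r (List.mem_cons_of_mem x hqB)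
  have hxnotinAB : x ∉ A ++ B := by
    intro hmem
    rcases List.mem_append.1 hmem with hA | hB
    · exact (List.nodup_append.1 hnd).2.2 x hA x List.mem_cons_self rfl
    · exact (List.nodup_cons.1 (List.nodup_append.1 hnd).2.1).1 hB
  have hlenAB : (A ++ B).length + 1 = (A ++ x :: B).length := by
    simp only [List.length_append, List.length_cons]
    omega
  refine ⟨A ++ B, hndAB, ?_, by omega, ?_⟩
  · ext q
    simp only [List.mem_toFinset, Finset.mem_erase]
    constructor
    · intro hq
      refine ⟨fun hqx => hxnotinAB (hqx ▸ hq), ?_⟩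
      rw [← hfin, List.mem_toFinset]
      rcases List.mem_append.1 hq with hA | hB
      · exact List.mem_append.2 (Or.inl hA)
      · exact List.mem_append.2 (Or.inr (List.mem_cons_of_mem x hB))
    · rintro ⟨hqx, hqS⟩
      rw [← hfin, List.mem_toFinset] at hqS
      rcases List.mem_append.1 hqS with hA | hB
      · exact List.mem_append.2 (Or.inl hA)
      · rcases List.mem_cons.1 hB with rfl | hB
        · exact absurd rfl hqx
        · exact List.mem_append.2 (Or.inr hB)
  · have hyp : x = 0 ∨ x ≤ supp x (A ++ B) + 0 := by
      rcases hleg with rfl | ⟨hx1, hmem⟩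
      · exact Or.inl rfl
      · right
        have hmemL : x - 1 ∈ A ++ x :: B :=
          List.mem_toFinset.1 (by rw [hfin]; exact hmem)
        have hmemAB : x - 1 ∈ A ++ B := by
          rcases List.mem_append.1 hmemL with hA | hB
          · exact List.mem_append.2 (Or.inl hA)
          · rcases List.mem_cons.1 hB with habs | hB
            · omega
            · exact List.mem_append.2 (Or.inr hB)
        have := le_supp_of_mem hmemAB (by omega : x - 1 < x)
        omega
    have hres := ok_erase A (n - (A ++ x :: B).length) 0 B x hok hyp
      (by have : 1 ≤ 2 ^ (n - (A ++ x :: B).length) := Nat.one_le_pow _ _ (by norm_num); omega)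
    have heq : n - (A ++ B).length = n - (A ++ x :: B).length + 1 := by omega
    rw [heq]
    exact hres

end PebbleAux

/-- with space at most `n`, the node `2^n - 1` can never be pebbled. -/
theorem space_n_cannot_reach (n : ℕ) (M : MoveSeq) (h : M.space ≤ n) :
    ¬ M.Visits (2 ^ n - 1) := by
  rintro ⟨t, ht, hmem⟩
  have hcard : ∀ s, s ≤ M.T → (M.conf s).card ≤ n := by
    intro s hs
    refine le_trans ?_ h
    exact Finset.le_sup (f := fun t => (M.conf t).card) (Finset.mem_range.2 (by omega))
  have hinv : ∀ s, s ≤ M.T → PebbleAux.Inv n (M.conf s) := by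
    intro s
    induction s with
    | zero => intro _; rw [M.init]; exact PebbleAux.inv_empty n
    | succ s ih =>
      intro hs
      have hsT : s < M.T := by omega
      have hstep := M.step s hsT
      have hleg := M.legal s hsT
      have hIs := ih (by omega)
      by_cases hx : M.move s ∈ M.conf s
      · rw [hstep, if_pos hx]
        refine PebbleAux.inv_erase n _ _ hx ?_ hIs
        rcases hleg with h0 | h1
        · exact Or.inl h0
        · exact Or.inr h1
      · rw [hstep, if_neg hx]
        have hcard1 : (insert (M.move s) (M.conf s)).card ≤ n := by
          have := hcard (s + 1) hs
          rw [hstep, if_neg hx] at this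
          exact this
        refine PebbleAux.inv_insert n _ _ hx ?_ hcard1 hIs
        rcases hleg with h0 | h1
        · exact Or.inl h0
        · exact Or.inr h1
  obtain ⟨L, hnd, hfin, hlen, hok⟩ := hinv t ht
  have hmL : (2 ^ n - 1) ∈ L := List.mem_toFinset.1 (by rw [hfin]; exact hmem)
  have hb := PebbleAux.ok_bound L (n - L.length) _ hok hmL
  have hpow : (2:ℕ) ^ (n - L.length + L.length) = 2 ^ n := by
    rw [Nat.sub_add_cancel hlen]
  rw [hpow] at hb
  have h1 : 1 ≤ 2 ^ (n - L.length) := Nat.one_le_pow _ _ (by norm_num)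
  have h2 : 1 ≤ 2 ^ n := Nat.one_le_pow _ _ (by norm_num)
  omega
end

section
/- If a move sequence cleanly computes m ≥ 1 and has space r, then m ≤ 2^(r−1) − 1, i.e., r ≥ ⌈log₂(m+1)⌉ + 1. In particular, for every n ≥ 1 no move sequence with space at most n cleanly computes 2^(n−1). -/
/- ### Auxiliary development -/

/-- One (possibly idle) legal step of the abstract reversible pebble game. -/
def Stp (A B : Finset ℕ) : Prop :=
  A = B ∨ ∃ x, (x = 0 ∨ (1 ≤ x ∧ x - 1 ∈ A)) ∧
    ((x ∉ A ∧ B = insert x A) ∨ (x ∈ A ∧ B = A.erase x))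

/-- A legal (idle-allowed) segment of play between times `a` and `b`. -/
def Seg (f : ℕ → Finset ℕ) (a b : ℕ) : Prop :=
  ∀ t, a ≤ t → t < b → Stp (f t) (f (t + 1))

lemma Stp.symm {A B : Finset ℕ} (h : Stp A B) : Stp B A := by
  rcases h with h | ⟨x, hleg, h⟩
  · exact Or.inl h.symm
  have hx1 : x = 0 ∨ (1 ≤ x ∧ x - 1 ≠ x) := by
    rcases hleg with h0 | ⟨h1, _⟩
    · exact Or.inl h0
    · right; exact ⟨h1, by omega⟩
  rcases h with ⟨hxA, hB⟩ | ⟨hxA, hB⟩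
  · refine Or.inr ⟨x, ?_, Or.inr ⟨by simp [hB], by simp [hB, Finset.erase_insert hxA]⟩⟩
    rcases hleg with h0 | ⟨h1, hmem⟩
    · exact Or.inl h0
    · exact Or.inr ⟨h1, by simp [hB, Finset.mem_insert]; tauto⟩
  · refine Or.inr ⟨x, ?_, Or.inl ⟨by simp [hB], by simp [hB, Finset.insert_erase hxA]⟩⟩
    rcases hx1 with h0 | ⟨h1, hne⟩
    · exact Or.inl h0
    · refine Or.inr ⟨h1, ?_⟩
      rcases hleg with h0 | ⟨_, hmem⟩
      · omega
      · simp [hB, Finset.mem_erase, hne, hmem]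

/-- The touch bound at space `s`: in a legal segment whose window `[c,d]`
starts empty and always holds at most `s` pebbles, a pebble appearing at `d`
forces `d - c ≤ 2^s - 2`. -/
def TouchBnd (s : ℕ) : Prop :=
  ∀ (f : ℕ → Finset ℕ) (a b c d t1 : ℕ),
    Seg f a b →
    (∀ t, a ≤ t → t ≤ b → ((f t) ∩ Finset.Icc c d).card ≤ s) →
    f a ∩ Finset.Icc c d = ∅ →
    a ≤ t1 → t1 ≤ b → d ∈ f t1 → c ≤ d →
    d + 2 ≤ c + 2 ^ s

lemma touchBnd_zero : TouchBnd 0 := by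
  intro f a b c d t1 _ hcnt _ ha1 h1b hd hcd
  have : d ∈ f t1 ∩ Finset.Icc c d := by
    simp [Finset.mem_inter, Finset.mem_Icc, hd, hcd]
  have h1 : 1 ≤ (f t1 ∩ Finset.Icc c d).card := Finset.card_pos.mpr ⟨d, this⟩
  have := hcnt t1 ha1 h1b
  omega

/-- The clean bound at space `s+1`, derived from the touch bound at `s` by
reversing the final segment. -/
lemma clean_of_touch {s : ℕ} (H : TouchBnd s) :
    ∀ (f : ℕ → Finset ℕ) (a b c e : ℕ),
      Seg f a b →
      (∀ t, a ≤ t → t ≤ b → ((f t) ∩ Finset.Icc c e).card ≤ s + 1) →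
      f a ∩ Finset.Icc c e = ∅ →
      f b ∩ Finset.Icc c e = {e} →
      a ≤ b →
      e + 1 ≤ c + 2 ^ s := by
  classical
  intro f a b c e hseg hcnt hstart hend hab
  have heb : e ∈ f b ∩ Finset.Icc c e := by rw [hend]; exact Finset.mem_singleton_self e
  have hefb : e ∈ f b := (Finset.mem_inter.mp heb).1
  have hce : c ≤ e := (Finset.mem_Icc.mp (Finset.mem_inter.mp heb).2).1
  rcases Nat.eq_or_lt_of_le hce with hec | hlt
  · have : (1:ℕ) ≤ 2 ^ s := Nat.one_le_two_pow
    omega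
  -- now c < e, in particular 1 ≤ e
  have he1 : 1 ≤ e := by omega
  have hea : e ∉ f a := by
    intro hmem
    have : e ∈ f a ∩ Finset.Icc c e := by
      simp [Finset.mem_inter, Finset.mem_Icc, hmem, hce]
    rw [hstart] at this; simp at this
  set P : ℕ → Prop := fun t => a ≤ t ∧ e ∉ f t with hP
  have hdec : DecidablePred P := Classical.decPred P
  set u0 : ℕ := Nat.findGreatest P b with hu0def
  have hPa : P a := ⟨le_rfl, hea⟩
  have hau0 : a ≤ u0 := Nat.le_findGreatest hab hPa
  have hu0b : u0 ≤ b := Nat.findGreatest_le b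
  have hPu0 : P u0 := Nat.findGreatest_spec hab hPa
  have hu0b' : u0 < b := by
    rcases Nat.eq_or_lt_of_le hu0b with h | h
    · exact absurd hefb (h ▸ hPu0.2)
    · exact h
  have hmem_after : ∀ t, u0 < t → t ≤ b → e ∈ f t := by
    intro t ht htb
    by_contra hne
    have : t ≤ u0 := Nat.le_findGreatest htb ⟨by omega, hne⟩
    omega
  -- the step at u0 places e, so e-1 is present at u0 and at u0+1
  have hstep := hseg u0 hau0 hu0b'
  have heu1 : e ∈ f (u0 + 1) := hmem_after (u0 + 1) (by omega) (by omega)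
  have hpred : e - 1 ∈ f (u0 + 1) := by
    rcases hstep with h | ⟨x, hleg, h⟩
    · exact absurd (h ▸ heu1) hPu0.2
    rcases h with ⟨hxA, hB⟩ | ⟨hxA, hB⟩
    · have hxe : x = e := by
        rw [hB] at heu1
        rcases Finset.mem_insert.mp heu1 with h | h
        · exact h.symm
        · exact absurd h hPu0.2
      subst hxe
      rcases hleg with h0 | ⟨_, hmem⟩
      · omega
      · rw [hB]; exact Finset.mem_insert_of_mem hmem
    · rw [hB] at heu1
      exact absurd (Finset.mem_of_mem_erase heu1) hPu0.2
  -- reverse the segment [u0+1, b]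
  set u : ℕ := u0 + 1 with hu
  have hub : u ≤ b := hu0b'
  set g : ℕ → Finset ℕ := fun i => f (b - i) with hg
  have hgseg : Seg g 0 (b - u) := by
    intro i _ hi
    have h2 : b - i - 1 < b := by omega
    have hstp := (hseg (b - i - 1) (by omega) h2).symm
    have e1 : b - i - 1 + 1 = b - i := by omega
    rw [e1] at hstp
    show Stp (f (b - i)) (f (b - (i + 1)))
    have e2 : b - (i + 1) = b - i - 1 := by omega
    rw [e2]
    exact hstp
  have hgcnt : ∀ i, 0 ≤ i → i ≤ b - u → ((g i) ∩ Finset.Icc c (e - 1)).card ≤ s := by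
    intro i _ hi
    have htb : b - i ≤ b := by omega
    have htu : u ≤ b - i := by omega
    have het : e ∈ f (b - i) := hmem_after (b - i) (by omega) htb
    have hsub : insert e ((f (b - i)) ∩ Finset.Icc c (e - 1)) ⊆ (f (b - i)) ∩ Finset.Icc c e := by
      intro x hx
      rcases Finset.mem_insert.mp hx with h | h
      · subst h; simp [Finset.mem_inter, Finset.mem_Icc, het, hce]
      · rcases Finset.mem_inter.mp h with ⟨h1, h2⟩
        rcases Finset.mem_Icc.mp h2 with ⟨h3, h4⟩
        exact Finset.mem_inter.mpr ⟨h1, Finset.mem_Icc.mpr ⟨h3, by omega⟩⟩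
    have hnot : e ∉ (f (b - i)) ∩ Finset.Icc c (e - 1) := by
      intro hmem
      have := (Finset.mem_Icc.mp (Finset.mem_inter.mp hmem).2).2
      omega
    have hcard := Finset.card_le_card hsub
    rw [Finset.card_insert_of_notMem hnot] at hcard
    have := hcnt (b - i) (by omega) htb
    show ((f (b - i)) ∩ Finset.Icc c (e - 1)).card ≤ s
    omega
  have hgstart : g 0 ∩ Finset.Icc c (e - 1) = ∅ := by
    show f (b - 0) ∩ Finset.Icc c (e - 1) = ∅
    rw [Nat.sub_zero]
    apply Finset.eq_empty_of_forall_notMem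
    intro x hx
    rcases Finset.mem_inter.mp hx with ⟨h1, h2⟩
    rcases Finset.mem_Icc.mp h2 with ⟨h3, h4⟩
    have : x ∈ f b ∩ Finset.Icc c e := by
      exact Finset.mem_inter.mpr ⟨h1, Finset.mem_Icc.mpr ⟨h3, by omega⟩⟩
    rw [hend] at this
    have := Finset.mem_singleton.mp this
    omega
  have hgd : e - 1 ∈ g (b - u) := by
    show e - 1 ∈ f (b - (b - u))
    have heq : b - (b - u) = u := by omega
    rw [heq]
    exact hpred
  have := H g 0 (b - u) c (e - 1) (b - u) hgseg hgcnt hgstart (by omega) le_rfl hgd (by omega)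
  omega

lemma touchBnd_succ {s : ℕ} (H : TouchBnd s) : TouchBnd (s + 1) := by
  classical
  intro f a b c d t1 hseg hcnt hstart hat1 ht1b hd hcd
  set P : ℕ → Prop := fun t => a ≤ t ∧ f t ∩ Finset.Icc c d = ∅ with hP
  set te : ℕ := Nat.findGreatest P t1 with hte
  have hPa : P a := ⟨le_rfl, hstart⟩
  have hate : a ≤ te := Nat.le_findGreatest hat1 hPa
  have htet1 : te ≤ t1 := Nat.findGreatest_le t1
  have hPte : P te := Nat.findGreatest_spec hat1 hPa
  have hdt1 : d ∈ f t1 ∩ Finset.Icc c d := by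
    simp [Finset.mem_inter, Finset.mem_Icc, hd, hcd]
  have htet1' : te < t1 := by
    rcases Nat.eq_or_lt_of_le htet1 with h | h
    · rw [h] at hPte
      rw [hPte.2] at hdt1
      simp at hdt1
    · exact h
  have hne : ∀ t, te < t → t ≤ t1 → (f t ∩ Finset.Icc c d).Nonempty := by
    intro t ht htb
    rcases Finset.eq_empty_or_nonempty (f t ∩ Finset.Icc c d) with h | h
    · have : t ≤ te := Nat.le_findGreatest htb ⟨by omega, h⟩
      omega
    · exact h
  set μ : ℕ → ℕ := fun t =>
    if h : (f t ∩ Finset.Icc c d).Nonempty then (f t ∩ Finset.Icc c d).min' h else 0 with hμ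
  have hμmem : ∀ t, te < t → t ≤ t1 → μ t ∈ f t ∩ Finset.Icc c d := by
    intro t h1 h2
    have h := hne t h1 h2
    rw [hμ]; simp only [dif_pos h]
    exact Finset.min'_mem _ h
  have hμle : ∀ t, te < t → t ≤ t1 → ∀ x ∈ f t ∩ Finset.Icc c d, μ t ≤ x := by
    intro t h1 h2 x hx
    have h := hne t h1 h2
    rw [hμ]; simp only [dif_pos h]
    exact Finset.min'_le _ x hx
  have hInonempty : (Finset.Icc (te + 1) t1).Nonempty := by
    refine ⟨t1, ?_⟩; rw [Finset.mem_Icc]; omega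
  obtain ⟨tp, htpI, hmax⟩ := Finset.exists_max_image (Finset.Icc (te + 1) t1) μ hInonempty
  rcases Finset.mem_Icc.mp htpI with ⟨htp1, htp2⟩
  set p : ℕ := μ tp with hp
  have hpmem : p ∈ f tp ∩ Finset.Icc c d := hμmem tp (by omega) htp2
  have hpfc : p ∈ f tp := (Finset.mem_inter.mp hpmem).1
  have hcp : c ≤ p := (Finset.mem_Icc.mp (Finset.mem_inter.mp hpmem).2).1
  have hpd : p ≤ d := (Finset.mem_Icc.mp (Finset.mem_inter.mp hpmem).2).2
  -- clean segment from te to tp on window [c, p]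
  have hcleanend : f tp ∩ Finset.Icc c p = {p} := by
    apply Finset.eq_singleton_iff_unique_mem.mpr
    constructor
    · exact Finset.mem_inter.mpr ⟨hpfc, Finset.mem_Icc.mpr ⟨hcp, le_rfl⟩⟩
    · intro x hx
      rcases Finset.mem_inter.mp hx with ⟨h1, h2⟩
      rcases Finset.mem_Icc.mp h2 with ⟨h3, h4⟩
      have : x ∈ f tp ∩ Finset.Icc c d :=
        Finset.mem_inter.mpr ⟨h1, Finset.mem_Icc.mpr ⟨h3, by omega⟩⟩
      have := hμle tp (by omega) htp2 x this
      omega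
  have hsegtp : Seg f te tp := fun t h1 h2 => hseg t (by omega) (by omega)
  have hcnttp : ∀ t, te ≤ t → t ≤ tp → ((f t) ∩ Finset.Icc c p).card ≤ s + 1 := by
    intro t h1 h2
    have hsub : (f t) ∩ Finset.Icc c p ⊆ (f t) ∩ Finset.Icc c d :=
      Finset.inter_subset_inter (le_refl _) (Finset.Icc_subset_Icc le_rfl hpd)
    exact le_trans (Finset.card_le_card hsub) (hcnt t (by omega) (by omega))
  have hstarttp : f te ∩ Finset.Icc c p = ∅ := by
    apply Finset.eq_empty_of_forall_notMem
    intro x hx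
    have hsub : (f te) ∩ Finset.Icc c p ⊆ (f te) ∩ Finset.Icc c d :=
      Finset.inter_subset_inter (le_refl _) (Finset.Icc_subset_Icc le_rfl hpd)
    have := hsub hx
    rw [hPte.2] at this
    simp at this
  have hclean : p + 1 ≤ c + 2 ^ s :=
    clean_of_touch H f te tp c p hsegtp hcnttp hstarttp hcleanend (by omega)
  have h2s1 : (1:ℕ) ≤ 2 ^ s := Nat.one_le_two_pow
  have hpow : (2:ℕ) ^ (s + 1) = 2 ^ s + 2 ^ s := by rw [pow_succ]; ring
  rcases Nat.eq_or_lt_of_le hpd with hpd' | hpd'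
  · -- p = d
    omega
  · -- p < d : apply touch at s on the upper window [p+1, d] over [te, t1]
    have hsegt1 : Seg f te t1 := fun t h1 h2 => hseg t (by omega) (by omega)
    have hstartup : f te ∩ Finset.Icc (p + 1) d = ∅ := by
      apply Finset.eq_empty_of_forall_notMem
      intro x hx
      rcases Finset.mem_inter.mp hx with ⟨hx1, hx2⟩
      rcases Finset.mem_Icc.mp hx2 with ⟨hx3, hx4⟩
      have : x ∈ f te ∩ Finset.Icc c d :=
        Finset.mem_inter.mpr ⟨hx1, Finset.mem_Icc.mpr ⟨by omega, hx4⟩⟩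
      rw [hPte.2] at this; simp at this
    have hcntup : ∀ t, te ≤ t → t ≤ t1 → ((f t) ∩ Finset.Icc (p + 1) d).card ≤ s := by
      intro t h1 h2
      rcases Nat.eq_or_lt_of_le h1 with h | h
      · rw [← h, hstartup]; simp
      · -- te < t : the minimum pebble μ t ≤ p witnesses an extra pebble below
        have hq := hμmem t h h2
        have hqle : μ t ≤ p := hmax t (Finset.mem_Icc.mpr ⟨by omega, h2⟩)
        have hsub : insert (μ t) ((f t) ∩ Finset.Icc (p + 1) d) ⊆ (f t) ∩ Finset.Icc c d := by
          intro x hx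
          rcases Finset.mem_insert.mp hx with hh | hh
          · subst hh; exact hq
          · rcases Finset.mem_inter.mp hh with ⟨h1', h2'⟩
            rcases Finset.mem_Icc.mp h2' with ⟨h3', h4'⟩
            exact Finset.mem_inter.mpr ⟨h1', Finset.mem_Icc.mpr ⟨by omega, h4'⟩⟩
        have hnot : μ t ∉ (f t) ∩ Finset.Icc (p + 1) d := by
          intro hmem
          have := (Finset.mem_Icc.mp (Finset.mem_inter.mp hmem).2).1
          omega
        have hcard := Finset.card_le_card hsub
        rw [Finset.card_insert_of_notMem hnot] at hcard
        have := hcnt t (by omega) (by omega)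
        omega
    have := H f te t1 (p + 1) d t1 hsegt1 hcntup hstartup (by omega) le_rfl hd (by omega)
    omega

lemma touchBnd (s : ℕ) : TouchBnd s := by
  induction s with
  | zero => exact touchBnd_zero
  | succ s ih => exact touchBnd_succ ih

/-- the space lower bound: cleanly computing `m ≥ 1` with space `r`
forces `m ≤ 2^(r-1) - 1`, i.e. `r ≥ ⌈log₂(m+1)⌉ + 1`; in particular, with space
at most `n` one cannot cleanly compute `2^(n-1)`. -/
theorem space_lower_bound :
    (∀ (M : MoveSeq) (m r : ℕ), 1 ≤ m → M.CleanlyComputes m → M.space = r →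
      m ≤ 2 ^ (r - 1) - 1 ∧ Nat.clog 2 (m + 1) + 1 ≤ r) ∧
    (∀ n : ℕ, 1 ≤ n → ∀ M : MoveSeq, M.space ≤ n →
      ¬ M.CleanlyComputes (2 ^ (n - 1))) := by
  have main : ∀ (M : MoveSeq) (m r : ℕ), 1 ≤ m → M.CleanlyComputes m → M.space = r →
      m ≤ 2 ^ (r - 1) - 1 ∧ Nat.clog 2 (m + 1) + 1 ≤ r := by
    intro M m r _ hcc hsp
    have hcards : ∀ t, t ≤ M.T → (M.conf t).card ≤ r := by
      intro t ht
      rw [← hsp]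
      exact Finset.le_sup (f := fun t => (M.conf t).card)
        (Finset.mem_range.mpr (by omega))
    have hr1 : 1 ≤ r := by
      have h1 := hcards M.T le_rfl
      rw [MoveSeq.CleanlyComputes] at hcc
      rw [hcc] at h1
      simpa using h1
    have hseg : Seg M.conf 0 M.T := by
      intro t _ ht
      right
      refine ⟨M.move t, M.legal t ht, ?_⟩
      by_cases hmem : M.move t ∈ M.conf t
      · exact Or.inr ⟨hmem, by rw [M.step t ht, if_pos hmem]⟩
      · exact Or.inl ⟨hmem, by rw [M.step t ht, if_neg hmem]⟩
    have hcnt : ∀ t, 0 ≤ t → t ≤ M.T → ((M.conf t) ∩ Finset.Icc 0 m).card ≤ (r - 1) + 1 := by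
      intro t _ ht
      have h1 : ((M.conf t) ∩ Finset.Icc 0 m).card ≤ (M.conf t).card :=
        Finset.card_le_card (Finset.inter_subset_left)
      have h2 := hcards t ht
      omega
    have hstart : M.conf 0 ∩ Finset.Icc 0 m = ∅ := by
      rw [M.init]; simp
    have hend : M.conf M.T ∩ Finset.Icc 0 m = {m} := by
      rw [MoveSeq.CleanlyComputes] at hcc
      rw [hcc]
      apply Finset.eq_singleton_iff_unique_mem.mpr
      constructor
      · simp [Finset.mem_Icc]
      · intro x hx
        simpa using (Finset.mem_inter.mp hx).1
    have hbnd : m + 1 ≤ 0 + 2 ^ (r - 1) :=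
      clean_of_touch (touchBnd (r - 1)) M.conf 0 M.T 0 m hseg hcnt hstart hend (by omega)
    have hbnd' : m + 1 ≤ 2 ^ (r - 1) := by omega
    constructor
    · omega
    · have := (Nat.clog_le_iff_le_pow (by norm_num : 1 < 2)).mpr hbnd'
      omega
  refine ⟨main, ?_⟩
  intro n hn M hsp hcc
  obtain ⟨h1, _⟩ := main M (2 ^ (n - 1)) M.space Nat.one_le_two_pow hcc rfl
  have h2 : (2:ℕ) ^ (M.space - 1) ≤ 2 ^ (n - 1) :=
    Nat.pow_le_pow_right (by norm_num) (by omega)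
  have h3 : (1:ℕ) ≤ 2 ^ (n - 1) := Nat.one_le_two_pow
  omega
end

section
/- For every n ≥ 1 there exists a move sequence with space at most n that cleanly computes 2^(n−1) − 1. -/
namespace PebbleAux

/-- Run a list of moves from configuration `S`. -/
def run (S : Finset ℕ) (l : List ℕ) : Finset ℕ := l.foldl toggle S

@[simp] lemma run_nil (S : Finset ℕ) : run S [] = S := rfl
@[simp] lemma run_cons (S : Finset ℕ) (i : ℕ) (l : List ℕ) :
    run S (i :: l) = run (toggle S i) l := rfl
lemma run_append (S : Finset ℕ) (l₁ l₂ : List ℕ) :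
    run S (l₁ ++ l₂) = run (run S l₁) l₂ := List.foldl_append

lemma mem_toggle_of_ne {S : Finset ℕ} {i j : ℕ} (h : j ≠ i) :
    j ∈ toggle S i ↔ j ∈ S := by
  unfold toggle; split <;> simp [Finset.mem_erase, Finset.mem_insert, h]

lemma toggle_toggle (S : Finset ℕ) (i : ℕ) : toggle (toggle S i) i = S := by
  unfold toggle
  by_cases h : i ∈ S
  · simp [h, Finset.notMem_erase, Finset.insert_erase h]
  · simp [h, Finset.erase_insert h]

lemma toggle_insert_of_ne (S : Finset ℕ) {a i : ℕ} (h : i ≠ a) :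
    toggle (insert a S) i = insert a (toggle S i) := by
  unfold toggle
  by_cases hi : i ∈ S
  · simp only [Finset.mem_insert, hi, or_true, if_pos, if_true]
    exact Finset.erase_insert_of_ne (Ne.symm h)
  · have : i ∉ insert a S := by simp [h, hi]
    simp [this, hi, Finset.insert_comm]

lemma toggle_image_add (S : Finset ℕ) (i s : ℕ) :
    toggle (S.image (· + s)) (i + s) = (toggle S i).image (· + s) := by
  have hinj : Function.Injective (· + s) := add_left_injective s
  unfold toggle
  by_cases hi : i ∈ S
  · have : i + s ∈ S.image (· + s) := Finset.mem_image_of_mem _ hi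
    simp [hi, this, ← Finset.image_erase hinj]
  · have : i + s ∉ S.image (· + s) := by
      intro hmem
      obtain ⟨a, ha, h⟩ := Finset.mem_image.1 hmem
      exact hi (hinj h ▸ ha)
    simp [hi, this, Finset.image_insert]

/-- Legality of a move list from a configuration. -/
def Legal : Finset ℕ → List ℕ → Prop
  | _, [] => True
  | S, i :: l => (i = 0 ∨ (1 ≤ i ∧ i - 1 ∈ S)) ∧ Legal (toggle S i) l

/-- All configurations along the run have card ≤ k. -/
def Bounded (k : ℕ) : Finset ℕ → List ℕ → Prop
  | S, [] => S.card ≤ k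
  | S, i :: l => S.card ≤ k ∧ Bounded k (toggle S i) l

lemma Bounded.head {k : ℕ} {S : Finset ℕ} {l : List ℕ} (h : Bounded k S l) :
    S.card ≤ k := by cases l with
  | nil => exact h
  | cons i l => exact h.1

lemma legal_append {S : Finset ℕ} {l₁ l₂ : List ℕ}
    (h₁ : Legal S l₁) (h₂ : Legal (run S l₁) l₂) : Legal S (l₁ ++ l₂) := by
  induction l₁ generalizing S with
  | nil => exact h₂
  | cons i l ih => exact ⟨h₁.1, ih h₁.2 h₂⟩

lemma bounded_append {k : ℕ} {S : Finset ℕ} {l₁ l₂ : List ℕ}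
    (h₁ : Bounded k S l₁) (h₂ : Bounded k (run S l₁) l₂) : Bounded k S (l₁ ++ l₂) := by
  induction l₁ generalizing S with
  | nil => exact h₂
  | cons i l ih => exact ⟨h₁.1, ih h₁.2 h₂⟩

lemma bounded_mono {k k' : ℕ} {S : Finset ℕ} {l : List ℕ}
    (h : Bounded k S l) (hk : k ≤ k') : Bounded k' S l := by
  induction l generalizing S with
  | nil => exact le_trans h hk
  | cons i l ih => exact ⟨le_trans h.1 hk, ih h.2⟩

/-! ### Reversal -/

lemma run_reverse (S : Finset ℕ) (l : List ℕ) : run (run S l) l.reverse = S := by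
  induction l generalizing S with
  | nil => rfl
  | cons i l ih =>
    simp only [run_cons, List.reverse_cons, run_append, ih]
    exact toggle_toggle S i

lemma legal_reverse {S : Finset ℕ} {l : List ℕ} (h : Legal S l) :
    Legal (run S l) l.reverse := by
  induction l generalizing S with
  | nil => trivial
  | cons i l ih =>
    simp only [run_cons, List.reverse_cons]
    apply legal_append (ih h.2)
    rw [run_reverse]
    refine ⟨?_, trivial⟩
    rcases h.1 with h0 | ⟨h1, hm⟩
    · exact Or.inl h0
    · exact Or.inr ⟨h1, (mem_toggle_of_ne (by omega)).2 hm⟩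

lemma bounded_reverse {k : ℕ} {S : Finset ℕ} {l : List ℕ} (h : Bounded k S l) :
    Bounded k (run S l) l.reverse := by
  induction l generalizing S with
  | nil => exact h
  | cons i l ih =>
    simp only [run_cons, List.reverse_cons]
    apply bounded_append (ih h.2)
    rw [run_reverse]
    exact ⟨(h.2).head, by rw [toggle_toggle]; exact h.1⟩

/-! ### Spectator pebble -/

lemma run_insert {S : Finset ℕ} {a : ℕ} {l : List ℕ} (h : ∀ i ∈ l, i ≠ a) :
    run (insert a S) l = insert a (run S l) := by
  induction l generalizing S with
  | nil => rfl
  | cons i l ih =>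
    simp only [run_cons, toggle_insert_of_ne S (h i (by simp))]
    exact ih fun j hj => h j (by simp [hj])

lemma legal_insert {S : Finset ℕ} {a : ℕ} {l : List ℕ} (h : ∀ i ∈ l, i ≠ a)
    (hl : Legal S l) : Legal (insert a S) l := by
  induction l generalizing S with
  | nil => trivial
  | cons i l ih =>
    refine ⟨?_, ?_⟩
    · rcases hl.1 with h0 | ⟨h1, hm⟩
      · exact Or.inl h0
      · exact Or.inr ⟨h1, Finset.mem_insert_of_mem hm⟩
    · rw [toggle_insert_of_ne S (h i (by simp))]
      exact ih (fun j hj => h j (by simp [hj])) hl.2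

lemma bounded_insert {k : ℕ} {S : Finset ℕ} {a : ℕ} {l : List ℕ} (h : ∀ i ∈ l, i ≠ a)
    (hl : Bounded k S l) : Bounded (k + 1) (insert a S) l := by
  induction l generalizing S with
  | nil =>
    have h0 : S.card ≤ k := hl
    exact le_trans (Finset.card_insert_le _ _) (by omega)
  | cons i l ih =>
    have h0 : S.card ≤ k := hl.1
    refine ⟨le_trans (Finset.card_insert_le _ _) (by omega), ?_⟩
    rw [toggle_insert_of_ne S (h i (by simp))]
    exact ih (fun j hj => h j (by simp [hj])) hl.2

/-! ### Shift by m + 1 with pebble at m -/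

lemma run_shift (m : ℕ) (S : Finset ℕ) (l : List ℕ) :
    run (insert m (S.image (· + (m + 1)))) (l.map (· + (m + 1)))
      = insert m ((run S l).image (· + (m + 1))) := by
  induction l generalizing S with
  | nil => rfl
  | cons i l ih =>
    simp only [List.map_cons, run_cons]
    rw [toggle_insert_of_ne _ (show _ + (m+1) ≠ m by omega), toggle_image_add]
    exact ih _

lemma legal_shift (m : ℕ) {S : Finset ℕ} {l : List ℕ} (hl : Legal S l) :
    Legal (insert m (S.image (· + (m + 1)))) (l.map (· + (m + 1))) := by
  induction l generalizing S with
  | nil => trivial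
  | cons i l ih =>
    refine ⟨?_, ?_⟩
    · refine Or.inr ⟨by simp only []; omega, ?_⟩
      rcases hl.1 with h0 | ⟨h1, hm⟩
      · subst h0; simp
      · have : i - 1 + (m + 1) = i + (m + 1) - 1 := by omega
        exact Finset.mem_insert_of_mem (this ▸ Finset.mem_image_of_mem _ hm)
    · rw [toggle_insert_of_ne _ (show _ + (m+1) ≠ m by omega), toggle_image_add]
      exact ih hl.2

lemma bounded_shift (m : ℕ) {k : ℕ} {S : Finset ℕ} {l : List ℕ} (hl : Bounded k S l) :
    Bounded (k + 1) (insert m (S.image (· + (m + 1)))) (l.map (· + (m + 1))) := by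
  induction l generalizing S with
  | nil =>
    calc (insert m (S.image (· + (m + 1)))).card ≤ (S.image (· + (m+1))).card + 1 :=
          Finset.card_insert_le _ _
      _ ≤ S.card + 1 := by have := Finset.card_image_le (s := S) (f := (· + (m+1))); omega
      _ ≤ k + 1 := by have h0 : S.card ≤ k := hl; omega
  | cons i l ih =>
    refine ⟨?_, ?_⟩
    · calc (insert m (S.image (· + (m + 1)))).card ≤ (S.image (· + (m+1))).card + 1 :=
            Finset.card_insert_le _ _
        _ ≤ S.card + 1 := by have := Finset.card_image_le (s := S) (f := (· + (m+1))); omega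
        _ ≤ k + 1 := by have h0 : S.card ≤ k := hl.1; omega
    · rw [toggle_insert_of_ne _ (show _ + (m+1) ≠ m by omega), toggle_image_add]
      exact ih hl.2

/-! ### The recursive strategy -/

def strat : ℕ → List ℕ
  | 0 => [0]
  | k + 1 => strat k ++ (strat k).map (· + 2 ^ k) ++ (strat k).reverse

lemma strat_moves_lt (k : ℕ) : ∀ i ∈ strat k, i < 2 ^ k := by
  induction k with
  | zero => intro i hi; simp [strat] at hi; omega
  | succ k ih =>
    intro i hi
    simp only [strat, List.mem_append, List.mem_map, List.mem_reverse] at hi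
    have h2 : 2 ^ (k + 1) = 2 ^ k + 2 ^ k := by ring
    rcases hi with (hi | ⟨a, ha, rfl⟩) | hi
    · have := ih i hi; omega
    · have := ih a ha; omega
    · have := ih i hi; omega

lemma strat_spec (k : ℕ) :
    Legal ∅ (strat k) ∧ run ∅ (strat k) = {2 ^ k - 1} ∧ Bounded (k + 1) ∅ (strat k) := by
  induction k with
  | zero =>
    refine ⟨⟨Or.inl rfl, trivial⟩, ?_, by norm_num [Bounded, toggle, strat]⟩
    simp [strat, run, toggle]
  | succ k ih =>
    obtain ⟨hleg, hrun, hbd⟩ := ih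
    set l := strat k with hl
    have hpos : 1 ≤ 2 ^ k := Nat.one_le_two_pow
    set m := 2 ^ k - 1 with hm
    have hs : m + 1 = 2 ^ k := by omega
    set M := 2 ^ (k + 1) - 1 with hM
    have hMm : m + (m + 1) = M := by
      have : 2 ^ (k + 1) = 2 ^ k + 2 ^ k := by ring
      omega
    have hsing : ({m} : Finset ℕ) = insert m ((∅ : Finset ℕ).image (· + (m + 1))) := by simp
    -- part B : shifted copy
    have hrunB : run {m} (l.map (· + (m + 1))) = insert m {M} := by
      rw [hsing, run_shift, hrun]
      simp [hMm]
    have hlegB : Legal {m} (l.map (· + (m + 1))) := by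
      rw [hsing]; exact legal_shift m hleg
    have hbdB : Bounded (k + 2) {m} (l.map (· + (m + 1))) := by
      rw [hsing]; exact bounded_shift m hbd
    -- part C : reversed copy with spectator M
    have hne : ∀ i ∈ l.reverse, i ≠ M := by
      intro i hi
      have := strat_moves_lt k i (List.mem_reverse.1 hi)
      have : 2 ^ (k+1) = 2 ^ k + 2 ^ k := by ring
      omega
    have hlegC : Legal (insert M {m}) l.reverse := by
      apply legal_insert hne
      have := legal_reverse hleg
      rwa [hrun] at this
    have hrunC : run (insert M {m}) l.reverse = {M} := by
      rw [run_insert hne]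
      have := run_reverse (∅ : Finset ℕ) l
      rw [hrun] at this
      rw [this]
      simp
    have hbdC : Bounded (k + 2) (insert M {m}) l.reverse := by
      apply bounded_insert hne
      have := bounded_reverse hbd
      rwa [hrun] at this
    have hpair : (insert m {M} : Finset ℕ) = insert M {m} := Finset.pair_comm m M
    refine ⟨?_, ?_, ?_⟩
    · show Legal ∅ (l ++ l.map (· + 2 ^ k) ++ l.reverse)
      rw [← hs]
      apply legal_append (legal_append hleg (by rwa [hrun]))
      rw [run_append, hrun, hrunB, hpair]
      exact hlegC
    · show run ∅ (l ++ l.map (· + 2 ^ k) ++ l.reverse) = {M}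
      rw [← hs, run_append, run_append, hrun, hrunB, hpair, hrunC]
    · show Bounded (k + 2) ∅ (l ++ l.map (· + 2 ^ k) ++ l.reverse)
      rw [← hs]
      apply bounded_append (bounded_append (bounded_mono hbd (by omega)) (by rwa [hrun]))
      rw [run_append, hrun, hrunB, hpair]
      exact hbdC

/-! ### Extraction lemmas -/

lemma legal_take {S : Finset ℕ} {L : List ℕ} (h : Legal S L) :
    ∀ t < L.length, L.getD t 0 = 0 ∨ (1 ≤ L.getD t 0 ∧ L.getD t 0 - 1 ∈ run S (L.take t)) := by
  induction L generalizing S with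
  | nil => intro t ht; simp at ht
  | cons i l ih =>
    intro t ht
    cases t with
    | zero => simpa using h.1
    | succ t =>
      simp only [List.getD_cons_succ, List.take_succ_cons, run_cons]
      exact ih h.2 t (by simpa using ht)

lemma bounded_take {k : ℕ} {S : Finset ℕ} {L : List ℕ} (h : Bounded k S L) :
    ∀ t, (run S (L.take t)).card ≤ k := by
  induction L generalizing S with
  | nil => intro t; simpa using (show S.card ≤ k from h)
  | cons i l ih =>
    intro t
    cases t with
    | zero => simpa using h.head
    | succ t =>
      simp only [List.take_succ_cons, run_cons]
      exact ih h.2 t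

lemma run_take_succ {S : Finset ℕ} {L : List ℕ} {t : ℕ} (ht : t < L.length) :
    run S (L.take (t + 1)) = toggle (run S (L.take t)) (L.getD t 0) := by
  rw [List.take_succ, run_append]
  rw [List.getElem?_eq_getElem ht, List.getD_eq_getElem?_getD, List.getElem?_eq_getElem ht]
  rfl

end PebbleAux

/-- with space at most `n`, one can cleanly compute `2^(n-1) - 1`. -/
theorem binary_recursion_achieves_bound (n : ℕ) (hn : 1 ≤ n) :
    ∃ M : MoveSeq, M.space ≤ n ∧ M.CleanlyComputes (2 ^ (n - 1) - 1) := by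
  obtain ⟨hleg, hrun, hbd⟩ := PebbleAux.strat_spec (n - 1)
  set L := PebbleAux.strat (n - 1) with hL
  refine ⟨⟨L.length, fun t => PebbleAux.run ∅ (L.take t), fun t => L.getD t 0,
      by simp, fun t ht => PebbleAux.legal_take hleg t ht, ?_⟩, ?_, ?_⟩
  · intro t ht
    rw [PebbleAux.run_take_succ ht]
    rfl
  · unfold MoveSeq.space
    apply Finset.sup_le
    intro t _
    have h1 := PebbleAux.bounded_take hbd t
    have h2 : n - 1 + 1 = n := by omega
    simpa [h2] using h1
  · show PebbleAux.run ∅ (L.take L.length) = _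
    rw [List.take_length, hrun]
end

section
/- For all n ≥ 1 and m ≥ 0, there exists a move sequence with space at most n that cleanly computes m if and only if m ≤ 2^(n−1) − 1. In other words, the maximum number of squarings cleanly computable with n registers is exactly G(n) = 2^(n−1) − 1. -/
namespace PG

/-- toggle a node -/
def tog (S : Finset ℕ) (i : ℕ) : Finset ℕ := if i ∈ S then S.erase i else insert i S

/-- legality of toggling `i` in configuration `S` -/
def lg (S : Finset ℕ) (i : ℕ) : Prop := i = 0 ∨ (1 ≤ i ∧ i - 1 ∈ S)

/-- execute a list of moves -/
def ex (S : Finset ℕ) (l : List ℕ) : Finset ℕ := l.foldl tog S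

/-- a list of moves is valid (each move legal when played) -/
def VF : Finset ℕ → List ℕ → Prop
  | _, [] => True
  | S, i :: l => lg S i ∧ VF (tog S i) l

/-- all configurations along the run have card ≤ n -/
def Bnd (n : ℕ) (S : Finset ℕ) (l : List ℕ) : Prop :=
  ∀ p, p <+: l → (ex S p).card ≤ n

@[simp] lemma ex_nil (S : Finset ℕ) : ex S [] = S := rfl
@[simp] lemma ex_cons (S : Finset ℕ) (i : ℕ) (l : List ℕ) : ex S (i :: l) = ex (tog S i) l := rfl
lemma ex_append (S : Finset ℕ) (p q : List ℕ) : ex S (p ++ q) = ex (ex S p) q :=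
  List.foldl_append ..

lemma mem_tog {S : Finset ℕ} {x i : ℕ} :
    i ∈ tog S x ↔ ((i = x ∧ x ∉ S) ∨ (i ≠ x ∧ i ∈ S)) := by
  by_cases h : x ∈ S
  · rcases eq_or_ne i x with rfl | hne
    · simp [tog, h]
    · simp [tog, h, hne]
  · rcases eq_or_ne i x with rfl | hne
    · simp [tog, h]
    · simp [tog, h, hne]

lemma tog_tog (S : Finset ℕ) (x : ℕ) : tog (tog S x) x = S := by
  ext i
  rcases eq_or_ne i x with rfl | hne
  · simp [mem_tog]
  · simp [mem_tog, hne]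

lemma VF_append {S : Finset ℕ} {p q : List ℕ} :
    VF S (p ++ q) ↔ VF S p ∧ VF (ex S p) q := by
  induction p generalizing S with
  | nil => simp [VF]
  | cons i l ih => simp [VF, ih, and_assoc]

lemma lg_tog {S : Finset ℕ} {x : ℕ} : lg (tog S x) x ↔ lg S x := by
  unfold lg
  rcases Nat.eq_zero_or_pos x with rfl | hx
  · simp
  · have hne : x - 1 ≠ x := by omega
    simp [mem_tog, hne, hx]

lemma ex_reverse (S : Finset ℕ) (l : List ℕ) : ex (ex S l) l.reverse = S := by
  induction l generalizing S with
  | nil => rfl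
  | cons i l ih =>
    simp only [ex_cons, List.reverse_cons, ex_append, ih]
    simp [ex, tog_tog]

lemma VF_reverse {S : Finset ℕ} {l : List ℕ} (h : VF S l) : VF (ex S l) l.reverse := by
  induction l generalizing S with
  | nil => trivial
  | cons i l ih =>
    obtain ⟨h1, h2⟩ := h
    simp only [List.reverse_cons, ex_cons]
    rw [VF_append]
    refine ⟨ih h2, ?_⟩
    rw [ex_reverse]
    exact ⟨lg_tog.mpr h1, trivial⟩

/-- configurations along the reversed run are configurations along the forward run -/
lemma reverse_configs {S : Finset ℕ} {l p : List ℕ} (hp : p <+: l.reverse) :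
    ∃ q, q <+: l ∧ ex (ex S l) p = ex S q := by
  have hp' : p = (l.drop (l.length - p.length)).reverse := by
    conv_lhs => rw [List.prefix_iff_eq_take.mp hp]
    rw [List.take_reverse]
  obtain ⟨k, hk⟩ : ∃ k, p = (l.drop k).reverse := ⟨_, hp'⟩
  clear hp' hp
  subst hk
  refine ⟨l.take k, List.take_prefix .., ?_⟩
  have h2 : ex S l = ex (ex S (l.take k)) (l.drop k) := by
    rw [← ex_append, List.take_append_drop]
  rw [h2, ex_reverse]

-- persistence
lemma mem_ex_of_not_mem {a : ℕ} {S : Finset ℕ} {l : List ℕ} (ha : a ∈ S) (hl : a ∉ l) :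
    a ∈ ex S l := by
  induction l generalizing S with
  | nil => exact ha
  | cons i l ih =>
    simp only [List.mem_cons, not_or] at hl
    exact ih (mem_tog.mpr (Or.inr ⟨hl.1, ha⟩)) hl.2

lemma not_mem_ex_of_not_mem {a : ℕ} {S : Finset ℕ} {l : List ℕ} (ha : a ∉ S) (hl : a ∉ l) :
    a ∉ ex S l := by
  induction l generalizing S with
  | nil => exact ha
  | cons i l ih =>
    simp only [List.mem_cons, not_or] at hl
    refine ih (fun hc => ?_) hl.2
    rcases mem_tog.mp hc with ⟨h1, _⟩ | ⟨_, h2⟩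
    · exact hl.1 h1
    · exact ha h2

/-- last placement decomposition -/
lemma last_placement {a : ℕ} {S : Finset ℕ} {l : List ℕ} (hmem : a ∈ ex S l) (hS : a ∉ S) :
    ∃ l1 l2, l = l1 ++ a :: l2 ∧ a ∉ l2 ∧ a ∉ ex S l1 := by
  induction l using List.reverseRecOn with
  | nil => exact absurd hmem hS
  | append_singleton l' x ih =>
    rw [ex_append] at hmem
    rcases eq_or_ne x a with heq | hne
    · rw [heq] at hmem ⊢
      have hnm : a ∉ ex S l' := by
        intro hc
        have h9 : a ∉ ex (ex S l') [a] := by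
          simp only [ex_cons, ex_nil]
          intro h
          rcases mem_tog.mp h with ⟨_, h2⟩ | ⟨h1, _⟩
          · exact h2 hc
          · exact h1 rfl
        exact h9 hmem
      exact ⟨l', [], rfl, List.not_mem_nil, hnm⟩
    · have hmem' : a ∈ ex S l' := by
        rcases mem_tog.mp hmem with ⟨h1, _⟩ | ⟨_, h2⟩
        · exact absurd h1.symm hne
        · exact h2
      obtain ⟨l1, l2, rfl, h2, h3⟩ := ih hmem'
      exact ⟨l1, l2 ++ [x], by simp, by
        simp only [List.mem_append, List.mem_singleton, not_or]
        exact ⟨h2, fun h => hne h.symm⟩, h3⟩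

-- ============ restriction below a ============
def exB (a : ℕ) (S : Finset ℕ) : Finset ℕ := S.filter (· < a)
def lB (a : ℕ) (l : List ℕ) : List ℕ := l.filter (· < a)

lemma mem_exB {a i : ℕ} {S : Finset ℕ} : i ∈ exB a S ↔ i ∈ S ∧ i < a := by
  simp [exB]

lemma exB_tog (a : ℕ) (S : Finset ℕ) (x : ℕ) :
    exB a (tog S x) = if x < a then tog (exB a S) x else exB a S := by
  by_cases hx : x < a
  · simp only [hx, if_true]
    ext i
    rcases eq_or_ne i x with rfl | hne
    · simp [mem_exB, mem_tog, hx]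
    · simp [mem_exB, mem_tog, hne]
  · simp only [hx, if_false]
    ext i
    have hne : i ∈ exB a S → i ≠ x := by
      intro h hc; subst hc; exact hx (mem_exB.mp h).2
    simp only [mem_exB, mem_tog]
    constructor
    · rintro ⟨(⟨rfl, _⟩ | ⟨_, h2⟩), hia⟩
      · exact absurd hia hx
      · exact ⟨h2, hia⟩
    · rintro ⟨h1, hia⟩
      have : i ≠ x := fun hc => hx (hc ▸ hia)
      exact ⟨Or.inr ⟨this, h1⟩, hia⟩

lemma lB_cons_pos {a i : ℕ} (l : List ℕ) (h : i < a) : lB a (i :: l) = i :: lB a l := by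
  simp [lB, List.filter_cons, h]

lemma lB_cons_neg {a i : ℕ} (l : List ℕ) (h : ¬ i < a) : lB a (i :: l) = lB a l := by
  simp [lB, List.filter_cons, h]

lemma ex_exB (a : ℕ) (S : Finset ℕ) (l : List ℕ) :
    ex (exB a S) (lB a l) = exB a (ex S l) := by
  induction l generalizing S with
  | nil => rfl
  | cons i l ih =>
    by_cases h : i < a
    · rw [lB_cons_pos l h, ex_cons, ex_cons,
        show tog (exB a S) i = exB a (tog S i) from by rw [exB_tog, if_pos h]]
      exact ih (tog S i)
    · rw [lB_cons_neg l h, ex_cons,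
        show exB a S = exB a (tog S i) from by rw [exB_tog, if_neg h]]
      exact ih (tog S i)

lemma VF_exB {a : ℕ} {S : Finset ℕ} {l : List ℕ} (h : VF S l) : VF (exB a S) (lB a l) := by
  induction l generalizing S with
  | nil => trivial
  | cons i l ih =>
    obtain ⟨h1, h2⟩ := h
    by_cases hi : i < a
    · rw [lB_cons_pos l hi]
      constructor
      · rcases h1 with h0 | ⟨hpos, hmem⟩
        · exact Or.inl h0
        · exact Or.inr ⟨hpos, mem_exB.mpr ⟨hmem, by omega⟩⟩
      · rw [show tog (exB a S) i = exB a (tog S i) by rw [exB_tog]; simp [hi]]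
        exact ih h2
    · rw [lB_cons_neg l hi, show exB a S = exB a (tog S i) from by rw [exB_tog, if_neg hi]]
      exact ih h2

lemma prefix_filter {f : ℕ → Bool} {l p : List ℕ} (hp : p <+: l.filter f) :
    ∃ q, q <+: l ∧ q.filter f = p := by
  induction l generalizing p with
  | nil => simp only [List.filter_nil, List.prefix_nil] at hp; exact ⟨[], by simp [hp]⟩
  | cons i l ih =>
    by_cases hf : f i
    · rw [List.filter_cons_of_pos hf] at hp
      rcases p with _ | ⟨x, p'⟩
      · exact ⟨[], List.nil_prefix, rfl⟩
      · obtain ⟨hx, hp'⟩ := List.cons_prefix_cons.mp hp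
        obtain ⟨q, hq1, hq2⟩ := ih hp'
        exact ⟨i :: q, List.cons_prefix_cons.mpr ⟨rfl, hq1⟩, by
          rw [List.filter_cons_of_pos hf, hq2, hx]⟩
    · rw [List.filter_cons_of_neg (by simpa using hf)] at hp
      obtain ⟨q, hq1, hq2⟩ := ih hp
      exact ⟨i :: q, List.cons_prefix_cons.mpr ⟨rfl, hq1⟩, by
        rw [List.filter_cons_of_neg (by simpa using hf), hq2]⟩

-- ============ restriction above c (shift) ============
def shS (c : ℕ) (S : Finset ℕ) : Finset ℕ := (S.filter (c ≤ ·)).image (· - c)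
def lS (c : ℕ) (l : List ℕ) : List ℕ := l.filterMap (fun x => if c ≤ x then some (x - c) else none)

lemma mem_shS {c i : ℕ} {S : Finset ℕ} : i ∈ shS c S ↔ i + c ∈ S := by
  simp only [shS, Finset.mem_image, Finset.mem_filter]
  constructor
  · rintro ⟨j, ⟨hj, hcj⟩, rfl⟩
    rwa [Nat.sub_add_cancel hcj]
  · intro h
    exact ⟨i + c, ⟨h, Nat.le_add_left c i⟩, by omega⟩

lemma shS_tog_ge {c x : ℕ} (S : Finset ℕ) (hcx : c ≤ x) :
    shS c (tog S x) = tog (shS c S) (x - c) := by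
  ext i
  simp only [mem_shS, mem_tog, Nat.sub_add_cancel hcx]
  constructor
  · rintro (⟨h1, h2⟩ | ⟨h1, h2⟩)
    · exact Or.inl ⟨by omega, h2⟩
    · exact Or.inr ⟨by omega, h2⟩
  · rintro (⟨h1, h2⟩ | ⟨h1, h2⟩)
    · exact Or.inl ⟨by omega, h2⟩
    · exact Or.inr ⟨by omega, h2⟩

lemma shS_tog_lt {c x : ℕ} (S : Finset ℕ) (hcx : ¬ c ≤ x) :
    shS c (tog S x) = shS c S := by
  ext i
  rw [mem_shS, mem_tog, mem_shS]
  constructor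
  · rintro (⟨h1, _⟩ | ⟨_, h2⟩)
    · omega
    · exact h2
  · intro h
    exact Or.inr ⟨by omega, h⟩

lemma ex_shS (c : ℕ) (S : Finset ℕ) (l : List ℕ) :
    ex (shS c S) (lS c l) = shS c (ex S l) := by
  induction l generalizing S with
  | nil => rfl
  | cons i l ih =>
    by_cases h : c ≤ i
    · have : lS c (i :: l) = (i - c) :: lS c l := by simp [lS, List.filterMap_cons, h]
      rw [this, ex_cons, ex_cons, ← shS_tog_ge S h]
      exact ih (tog S i)
    · have : lS c (i :: l) = lS c l := by simp [lS, List.filterMap_cons, h]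
      rw [this, ex_cons, ← shS_tog_lt S h]
      exact ih (tog S i)

lemma VF_shS {c : ℕ} {S : Finset ℕ} {l : List ℕ} (h : VF S l) : VF (shS c S) (lS c l) := by
  induction l generalizing S with
  | nil => trivial
  | cons i l ih =>
    obtain ⟨h1, h2⟩ := h
    by_cases hc : c ≤ i
    · have : lS c (i :: l) = (i - c) :: lS c l := by simp [lS, List.filterMap_cons, hc]
      rw [this]
      refine ⟨?_, ?_⟩
      · rcases eq_or_ne i c with rfl | hne
        · exact Or.inl (by omega)
        · have hic : c + 1 ≤ i := by omega
          rcases h1 with h0 | ⟨_, hmem⟩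
          · omega
          · refine Or.inr ⟨by omega, ?_⟩
            rw [show i - c - 1 = i - 1 - c by omega, mem_shS, Nat.sub_add_cancel (by omega)]
            exact hmem
      · rw [show tog (shS c S) (i - c) = shS c (tog S i) from (shS_tog_ge S hc).symm]
        exact ih h2
    · have h8 : lS c (i :: l) = lS c l := by simp [lS, List.filterMap_cons, hc]
      rw [h8, show shS c S = shS c (tog S i) from (shS_tog_lt S hc).symm]
      exact ih h2

lemma prefix_filterMap {f : ℕ → Option ℕ} {l : List ℕ} {p : List ℕ} (hp : p <+: l.filterMap f) :
    ∃ q, q <+: l ∧ q.filterMap f = p := by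
  induction l generalizing p with
  | nil => simp only [List.filterMap_nil, List.prefix_nil] at hp; exact ⟨[], by simp [hp]⟩
  | cons i l ih =>
    rw [List.filterMap_cons] at hp
    cases hf : f i with
    | none =>
      rw [hf] at hp
      obtain ⟨q, hq1, hq2⟩ := ih hp
      exact ⟨i :: q, List.cons_prefix_cons.mpr ⟨rfl, hq1⟩, by rw [List.filterMap_cons, hf, hq2]⟩
    | some y =>
      rw [hf] at hp
      rcases p with _ | ⟨x, p'⟩
      · exact ⟨[], List.nil_prefix, rfl⟩
      · obtain ⟨hx, hp'⟩ := List.cons_prefix_cons.mp hp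
        obtain ⟨q, hq1, hq2⟩ := ih hp'
        exact ⟨i :: q, List.cons_prefix_cons.mpr ⟨rfl, hq1⟩, by
          rw [List.filterMap_cons, hf, hq2, hx]⟩

lemma card_shS (c : ℕ) (S : Finset ℕ) : (shS c S).card = (S.filter (c ≤ ·)).card := by
  apply Finset.card_image_of_injOn
  intro x hx y hy hxy
  simp only [Finset.coe_filter, Set.mem_setOf_eq] at hx hy
  have h9 : x - c = y - c := hxy
  omega

-- ============ adjoin a pebble not touched ============
lemma tog_insert {k x : ℕ} (S : Finset ℕ) (hne : x ≠ k) :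
    tog (insert k S) x = insert k (tog S x) := by
  ext i
  simp only [mem_tog, Finset.mem_insert]
  by_cases hik : i = k
  · subst hik
    constructor
    · intro _; exact Or.inl rfl
    · intro _; exact Or.inr ⟨fun h => hne h.symm, Or.inl rfl⟩
  · constructor
    · rintro (⟨rfl, h2⟩ | ⟨h1, (rfl | h2)⟩)
      · exact Or.inr (Or.inl ⟨rfl, fun hc => h2 (Or.inr hc)⟩)
      · exact absurd rfl hik
      · exact Or.inr (Or.inr ⟨h1, h2⟩)
    · rintro (rfl | ⟨rfl, h2⟩ | ⟨h1, h2⟩)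
      · exact absurd rfl hik
      · exact Or.inl ⟨rfl, fun hc => by
          rcases hc with h | h
          · exact hne h
          · exact h2 h⟩
      · exact Or.inr ⟨h1, Or.inr h2⟩

lemma adjoin {k : ℕ} {S : Finset ℕ} {l : List ℕ} (hk : k ∉ l) (h : VF S l) :
    VF (insert k S) l ∧ ex (insert k S) l = insert k (ex S l) := by
  induction l generalizing S with
  | nil => exact ⟨trivial, rfl⟩
  | cons i l ih =>
    simp only [List.mem_cons, not_or] at hk
    obtain ⟨h1, h2⟩ := h
    have hne : i ≠ k := fun hc => hk.1 hc.symm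
    have htog := tog_insert S hne
    obtain ⟨ihv, ihe⟩ := ih hk.2 h2
    refine ⟨⟨?_, ?_⟩, ?_⟩
    · rcases h1 with h0 | ⟨hpos, hmem⟩
      · exact Or.inl h0
      · exact Or.inr ⟨hpos, Finset.mem_insert_of_mem hmem⟩
    · rw [htog]; exact ihv
    · rw [ex_cons, htog, ihe]; rfl

-- ============ lower bound ============

lemma VF_prefix {S : Finset ℕ} {l p : List ℕ} (h : VF S l) (hp : p <+: l) : VF S p := by
  obtain ⟨t, rfl⟩ := hp
  exact (VF_append.mp h).1

lemma Bnd_prefix {n : ℕ} {S : Finset ℕ} {l p : List ℕ} (h : Bnd n S l) (hp : p <+: l) :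
    Bnd n S p := fun q hq => h q (hq.trans hp)

/-- the visiting bound at level `n`: with space `n`, all visited nodes are `≤ 2^n - 2` -/
def VBst (n : ℕ) : Prop :=
  ∀ l : List ℕ, VF ∅ l → Bnd n ∅ l → ∀ p, p <+: l → ∀ b ∈ ex ∅ p, b + 2 ≤ 2 ^ n

/-- minimum bound: with space `n+1`, the minimum of the final configuration is `≤ 2^n - 1` -/
lemma MBgen (n : ℕ) (hVB : VBst n) {l : List ℕ} (hv : VF ∅ l) (hb : Bnd (n+1) ∅ l)
    {a : ℕ} (ha : a ∈ ex ∅ l) (hmin : ∀ x ∈ ex ∅ l, a ≤ x) : a + 1 ≤ 2 ^ n := by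
  have h2n : 0 < 2 ^ n := Nat.two_pow_pos n
  rcases Nat.eq_zero_or_pos a with rfl | hapos
  · omega
  obtain ⟨l1, l2, rfl, hal2, hnot⟩ := last_placement ha (Finset.notMem_empty a)
  have hsplit := VF_append.mp hv
  have hv1 : VF ∅ l1 := hsplit.1
  have hlg : lg (ex ∅ l1) a := hsplit.2.1
  have hv2 : VF (tog (ex ∅ l1) a) l2 := hsplit.2.2
  have ham : a - 1 ∈ ex ∅ l1 := by
    rcases hlg with h0 | ⟨_, h⟩
    · omega
    · exact h
  set S0 := tog (ex ∅ l1) a with hS0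
  have haS0 : a ∈ S0 := mem_tog.mpr (Or.inl ⟨rfl, hnot⟩)
  have ha1S0 : a - 1 ∈ S0 := mem_tog.mpr (Or.inr ⟨by omega, ham⟩)
  have hU : ex S0 l2 = ex ∅ (l1 ++ a :: l2) := by rw [ex_append]; rfl
  -- forward restricted run, below a
  have hvB : VF (exB a S0) (lB a l2) := VF_exB hv2
  have hfin : ex (exB a S0) (lB a l2) = ∅ := by
    rw [ex_exB, hU]
    apply Finset.eq_empty_iff_forall_notMem.mpr
    intro x hx
    obtain ⟨hx1, hx2⟩ := mem_exB.mp hx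
    exact absurd (hmin x hx1) (by omega)
  -- reversed run
  have hvr : VF ∅ ((lB a l2).reverse) := by
    have := VF_reverse hvB; rwa [hfin] at this
  have hexr : ex ∅ ((lB a l2).reverse) = exB a S0 := by
    have := ex_reverse (exB a S0) (lB a l2); rwa [hfin] at this
  have hbr : Bnd n ∅ ((lB a l2).reverse) := by
    intro p hp
    obtain ⟨q, hq, hqe⟩ := reverse_configs (S := exB a S0) hp
    rw [hfin] at hqe
    rw [hqe]
    obtain ⟨r, hr, hre⟩ := prefix_filter hq
    have hql : ex (exB a S0) q = exB a (ex S0 r) := by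
      rw [← hre]
      exact ex_exB a S0 r
    rw [hql]
    -- a is still present in ex S0 r
    have har : a ∉ r := fun hc => hal2 (hr.subset hc)
    have haEx : a ∈ ex S0 r := mem_ex_of_not_mem haS0 har
    -- card of ex S0 r ≤ n+1
    have hpre : l1 ++ a :: r <+: l1 ++ a :: l2 := by
      obtain ⟨t, rfl⟩ := hr
      exact ⟨t, by simp⟩
    have hcard : (ex S0 r).card ≤ n + 1 := by
      have : ex S0 r = ex ∅ (l1 ++ a :: r) := by rw [ex_append]; rfl
      rw [this]
      exact hb _ hpre
    have hsub : exB a (ex S0 r) ⊆ (ex S0 r).erase a := by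
      intro x hx
      obtain ⟨hx1, hx2⟩ := mem_exB.mp hx
      exact Finset.mem_erase.mpr ⟨by omega, hx1⟩
    calc (exB a (ex S0 r)).card ≤ ((ex S0 r).erase a).card := Finset.card_le_card hsub
      _ ≤ n := by
          rw [Finset.card_erase_of_mem haEx]
          omega
  have hfinal : a - 1 ∈ ex ∅ ((lB a l2).reverse) := by
    rw [hexr]
    exact mem_exB.mpr ⟨ha1S0, by omega⟩
  have := hVB _ hvr hbr _ (List.prefix_refl _) _ hfinal
  omega

lemma VB : ∀ n, VBst n := by
  intro n
  induction n with
  | zero =>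
    intro l hv hb p hp b hbmem
    have h0 := hb p hp
    rw [Nat.le_zero, Finset.card_eq_zero] at h0
    rw [h0] at hbmem
    exact absurd hbmem (Finset.notMem_empty b)
  | succ n ih =>
    intro l hv hb p hp b hbm
    by_contra hcon
    push_neg at hcon
    have h2n : 0 < 2 ^ n := Nat.two_pow_pos n
    have h2n1 : 2 ^ (n + 1) = 2 ^ n + 2 ^ n := by ring
    have hble : 2 ^ (n+1) ≤ b + 1 := by omega
    set c := b + 1 - 2 ^ n with hc
    have hcge : 2 ^ n ≤ c := by omega
    have hvp : VF ∅ p := VF_prefix hv hp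
    have hbp : Bnd (n+1) ∅ p := Bnd_prefix hb hp
    have hempty : shS c ∅ = ∅ := by
      ext i; simp [mem_shS]
    have hvs : VF ∅ (lS c p) := by
      have := VF_shS (c := c) hvp; rwa [hempty] at this
    have hexq : ∀ q : List ℕ, ex (∅ : Finset ℕ) (lS c q) = shS c (ex ∅ q) := by
      intro q
      conv_lhs => rw [← hempty]
      exact ex_shS c ∅ q
    have hbs : ¬ Bnd n ∅ (lS c p) := by
      intro hbnd
      have hbc : b - c ∈ ex ∅ (lS c p) := by
        rw [hexq p, mem_shS, Nat.sub_add_cancel (by omega : c ≤ b)]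
        exact hbm
      have := ih _ hvs hbnd _ (List.prefix_refl _) _ hbc
      omega
    unfold Bnd at hbs
    push_neg at hbs
    obtain ⟨q, hq, hqc⟩ := hbs
    obtain ⟨r, hr, hre⟩ := prefix_filterMap hq
    set T := ex ∅ r with hT
    have hcardq : (ex ∅ q).card = (T.filter (c ≤ ·)).card := by
      rw [← hre]
      show (ex ∅ (lS c r)).card = _
      rw [hexq r, card_shS]
    have hTcard : T.card ≤ n + 1 := hbp r hr
    have hfeq : T.filter (c ≤ ·) = T :=
      Finset.eq_of_subset_of_card_le (Finset.filter_subset _ _) (by omega)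
    have hall : ∀ x ∈ T, c ≤ x := by
      intro x hx
      rw [← hfeq] at hx
      exact (Finset.mem_filter.mp hx).2
    have hfc : (T.filter (c ≤ ·)).card ≤ T.card := Finset.card_le_card (Finset.filter_subset _ _)
    have hne : T.Nonempty := Finset.card_pos.mp (by omega)
    obtain ⟨a, haT, hamin⟩ := T.exists_min_image id hne
    have hfin := MBgen n ih (VF_prefix hvp hr) (Bnd_prefix hbp hr) haT hamin
    have := hall a haT
    omega

-- ============ construction ============

lemma prefix_append_cases {p x y : List ℕ} (hp : p <+: x ++ y) :
    p <+: x ∨ ∃ q, q <+: y ∧ p = x ++ q := by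
  induction x generalizing p with
  | nil => exact Or.inr ⟨p, by simpa using hp, by simp⟩
  | cons i x' ih =>
    rcases p with _ | ⟨j, p'⟩
    · exact Or.inl (List.nil_prefix)
    · obtain ⟨hj, hp'⟩ := List.cons_prefix_cons.mp hp
      rcases ih hp' with h | ⟨q, hq, rfl⟩
      · exact Or.inl (List.cons_prefix_cons.mpr ⟨hj, h⟩)
      · exact Or.inr ⟨q, hq, by rw [hj]; rfl⟩

lemma constr : ∀ k m, m ≤ 2 ^ k - 1 → ∀ s (D : Finset ℕ), (s = 0 ∨ s - 1 ∈ D) →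
    (∀ x ∈ D, x < s) →
    ∃ l : List ℕ, VF D l ∧ ex D l = insert (s + m) D ∧ (∀ x ∈ l, s ≤ x ∧ x ≤ s + m) ∧
      ∀ p, p <+: l → ex D p ⊆ D ∪ Finset.Icc s (s + m) ∧ (ex D p).card ≤ D.card + (k + 1) := by
  intro k
  induction k with
  | zero =>
    intro m hm s D hs hD
    have hm0 : m = 0 := by omega
    subst hm0
    have hsD : s ∉ D := fun hc => absurd (hD s hc) (by omega)
    have hlg : lg D s := by
      rcases Nat.eq_zero_or_pos s with h0 | hpos
      · exact Or.inl h0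
      · rcases hs with h0 | h1
        · exact Or.inl h0
        · exact Or.inr ⟨hpos, h1⟩
    have hex : ex D [s] = insert s D := by
      show tog D s = insert s D
      unfold tog
      rw [if_neg hsD]
    refine ⟨[s], ⟨hlg, trivial⟩, by rw [Nat.add_zero]; exact hex, ?_, ?_⟩
    · intro x hx
      rcases List.mem_singleton.mp hx with rfl
      omega
    · intro p hp
      have hpc : p = [] ∨ p = [s] := by
        rcases p with _ | ⟨j, p'⟩
        · exact Or.inl rfl
        · obtain ⟨hj, hp'⟩ := List.cons_prefix_cons.mp hp
          rw [List.prefix_nil] at hp'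
          exact Or.inr (by rw [hj, hp'])
      rcases hpc with rfl | rfl
      · rw [ex_nil]
        exact ⟨Finset.subset_union_left, by omega⟩
      · rw [hex]
        constructor
        · intro x hx
          rcases Finset.mem_insert.mp hx with rfl | hx
          · exact Finset.mem_union_right _ (Finset.mem_Icc.mpr ⟨le_refl _, by omega⟩)
          · exact Finset.mem_union_left _ hx
        · calc (insert s D).card ≤ D.card + 1 := Finset.card_insert_le _ _
            _ ≤ D.card + (0 + 1) := by omega
  | succ k ih =>
    intro m hm s D hs hD
    have h2k : 0 < 2 ^ k := Nat.two_pow_pos k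
    by_cases hm2 : m ≤ 2 ^ k - 1
    · obtain ⟨l, h1, h2, h3, h4⟩ := ih m hm2 s D hs hD
      exact ⟨l, h1, h2, h3, fun p hp => ⟨(h4 p hp).1, le_trans (h4 p hp).2 (by omega)⟩⟩
    · have hmge : 2 ^ k ≤ m := by omega
      have hmle : m ≤ 2 ^ (k+1) - 1 := hm
      have h2k1 : 2 ^ (k+1) = 2 ^ k + 2 ^ k := by ring
      set a := m - 2 ^ k with hadef
      have ha : a ≤ 2 ^ k - 1 := by omega
      have ham : a < m := by omega
      obtain ⟨l1, hv1, he1, hmv1, hpre1⟩ := ih a ha s D hs hD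
      set D1 := insert (s + a) D with hD1
      have hsD1 : s + a + 1 - 1 ∈ D1 := by
        simp [hD1]
      have hD1lt : ∀ x ∈ D1, x < s + a + 1 := by
        intro x hx
        rcases Finset.mem_insert.mp hx with rfl | hx
        · omega
        · have := hD x hx; omega
      obtain ⟨l2, hv2, he2, hmv2, hpre2⟩ := ih (2 ^ k - 1) (le_refl _) (s + a + 1) D1
        (Or.inr hsD1) hD1lt
      have htop : s + a + 1 + (2 ^ k - 1) = s + m := by omega
      rw [htop] at he2 hmv2 hpre2
      have htopnot1 : (s + m) ∉ l1 := by
        intro hc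
        have := (hmv1 _ hc).2
        omega
      obtain ⟨hva, hea⟩ := adjoin htopnot1 hv1
      rw [he1] at hea
      have hvr : VF (insert (s+m) D1) l1.reverse := by
        have := VF_reverse hva; rwa [hea] at this
      have her : ex (insert (s+m) D1) l1.reverse = insert (s+m) D := by
        have := ex_reverse (insert (s+m) D) l1; rwa [hea] at this
      have hmid : ex D (l1 ++ l2) = insert (s + m) D1 := by
        rw [ex_append, he1, he2]
      refine ⟨(l1 ++ l2) ++ l1.reverse, ?_, ?_, ?_, ?_⟩
      · rw [VF_append, VF_append, he1]
        exact ⟨⟨hv1, hv2⟩, by rw [show ex D (l1 ++ l2) = insert (s+m) D1 from hmid]; exact hvr⟩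
      · rw [ex_append, hmid, her]
      · intro x hx
        rcases List.mem_append.mp hx with hx | hx
        · rcases List.mem_append.mp hx with hx | hx
          · have := hmv1 x hx; omega
          · have := hmv2 x hx; omega
        · rw [List.mem_reverse] at hx
          have := hmv1 x hx; omega
      · intro p hp
        rcases prefix_append_cases hp with hp1 | ⟨q, hq, rfl⟩
        · rcases prefix_append_cases hp1 with hp2 | ⟨q, hq, rfl⟩
          · refine ⟨le_trans (hpre1 p hp2).1 ?_, le_trans (hpre1 p hp2).2 (by omega)⟩
            apply Finset.union_subset_union_right
            apply Finset.Icc_subset_Icc (le_refl _)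
            omega
          · rw [ex_append, he1]
            refine ⟨?_, ?_⟩
            · refine le_trans (hpre2 q hq).1 ?_
              intro x hx
              rcases Finset.mem_union.mp hx with hx | hx
              · rcases Finset.mem_insert.mp hx with rfl | hx
                · exact Finset.mem_union_right _ (Finset.mem_Icc.mpr ⟨by omega, by omega⟩)
                · exact Finset.mem_union_left _ hx
              · rw [Finset.mem_Icc] at hx
                exact Finset.mem_union_right _ (Finset.mem_Icc.mpr ⟨by omega, by omega⟩)
            · refine le_trans (hpre2 q hq).2 ?_
              have : D1.card ≤ D.card + 1 := Finset.card_insert_le _ _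
              omega
        · rw [ex_append, hmid]
          obtain ⟨q', hq', hqe⟩ := reverse_configs (S := insert (s+m) D) (l := l1) hq
          rw [hea] at hqe
          rw [hqe]
          have hnotq' : (s+m) ∉ q' := fun hc => htopnot1 (hq'.subset hc)
          obtain ⟨_, heq'⟩ := adjoin hnotq' (VF_prefix hv1 hq')
          rw [heq']
          refine ⟨?_, ?_⟩
          · intro x hx
            rcases Finset.mem_insert.mp hx with rfl | hx
            · exact Finset.mem_union_right _ (Finset.mem_Icc.mpr ⟨by omega, le_refl _⟩)
            · rcases Finset.mem_union.mp ((hpre1 q' hq').1 hx) with hx | hx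
              · exact Finset.mem_union_left _ hx
              · rw [Finset.mem_Icc] at hx
                exact Finset.mem_union_right _ (Finset.mem_Icc.mpr ⟨by omega, by omega⟩)
          · calc (insert (s+m) (ex D q')).card ≤ (ex D q').card + 1 := Finset.card_insert_le _ _
              _ ≤ D.card + (k + 1) + 1 := by have := (hpre1 q' hq').2; omega
              _ = D.card + (k + 1 + 1) := by omega

-- ============ glue with MoveSeq ============

lemma VF_take_legal {S : Finset ℕ} {l : List ℕ} (h : VF S l) {t : ℕ} (ht : t < l.length) :
    lg (ex S (l.take t)) (l.getD t 0) := by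
  have h1 : VF (ex S (l.take t)) (l.drop t) := by
    have := VF_append.mp (show VF S (l.take t ++ l.drop t) by rwa [List.take_append_drop])
    exact this.2
  rw [List.drop_eq_getElem_cons ht] at h1
  rw [List.getD_eq_getElem l 0 ht]
  exact h1.1

lemma ex_take_succ {S : Finset ℕ} {l : List ℕ} {t : ℕ} (ht : t < l.length) :
    ex S (l.take (t + 1)) = tog (ex S (l.take t)) (l.getD t 0) := by
  rw [List.take_succ, List.getElem?_eq_getElem ht, List.getD_eq_getElem l 0 ht]
  rw [ex_append]
  rfl

/-- build a MoveSeq from a valid list -/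
def toMS (l : List ℕ) (h : VF ∅ l) : MoveSeq where
  T := l.length
  conf := fun t => ex ∅ (l.take t)
  move := fun t => l.getD t 0
  init := by simp
  legal := fun t ht => VF_take_legal h ht
  step := fun t ht => by
    show ex ∅ (l.take (t+1)) = tog (ex ∅ (l.take t)) (l.getD t 0)
    exact ex_take_succ ht

lemma exists_moveseq (n m : ℕ) (hn : 1 ≤ n) (hm : m ≤ 2 ^ (n-1) - 1) :
    ∃ M : MoveSeq, M.space ≤ n ∧ M.CleanlyComputes m := by
  obtain ⟨l, hv, hex, _, hpre⟩ := constr (n-1) m hm 0 ∅ (Or.inl rfl) (by simp)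
  refine ⟨toMS l hv, ?_, ?_⟩
  · apply Finset.sup_le
    intro t _
    have := (hpre (l.take t) (List.take_prefix t l)).2
    simp only [Finset.card_empty] at this
    show (ex ∅ (l.take t)).card ≤ n
    omega
  · show ex ∅ (l.take l.length) = {m}
    rw [List.take_length, hex]
    simp

lemma ms_run (M : MoveSeq) : ∀ t, t ≤ M.T →
    VF ∅ ((List.range t).map M.move) ∧ ex ∅ ((List.range t).map M.move) = M.conf t := by
  intro t
  induction t with
  | zero => exact fun _ => ⟨trivial, M.init.symm⟩
  | succ t ih =>
    intro ht
    obtain ⟨hvt, het⟩ := ih (by omega)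
    have hrange : List.range (t+1) = List.range t ++ [t] := by rw [List.range_succ]
    constructor
    · rw [hrange, List.map_append, VF_append, het]
      refine ⟨hvt, M.legal t (by omega), trivial⟩
    · rw [hrange, List.map_append, ex_append, het]
      show tog (M.conf t) (M.move t) = M.conf (t+1)
      rw [M.step t (by omega)]
      rfl

lemma bound_moveseq (n m : ℕ) (hn : 1 ≤ n) (M : MoveSeq) (hsp : M.space ≤ n)
    (hcc : M.CleanlyComputes m) : m ≤ 2 ^ (n-1) - 1 := by
  set l := (List.range M.T).map M.move with hl
  have hlen : l.length = M.T := by simp [hl]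
  obtain ⟨hv, hex⟩ := ms_run M M.T le_rfl
  rw [hcc] at hex
  have hbnd : Bnd n ∅ l := by
    intro p hp
    have hple : p.length ≤ M.T := hlen ▸ hp.length_le
    have hpt : p = (List.range p.length).map M.move := by
      conv_lhs => rw [List.prefix_iff_eq_take.mp hp]
      rw [hl, ← List.map_take, List.take_range, Nat.min_eq_left hple]
    rw [hpt, (ms_run M p.length hple).2]
    have hle : (M.conf p.length).card ≤ M.space := by
      apply Finset.le_sup (f := fun t => (M.conf t).card)
      exact Finset.mem_range.mpr (by omega)
    omega
  have hn' : n - 1 + 1 = n := by omega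
  have hmb := MBgen (n-1) (VB (n-1)) hv (by rw [hn']; exact hbnd)
    (a := m) (by rw [hex]; exact Finset.mem_singleton_self m)
    (by intro x hx; rw [hex, Finset.mem_singleton] at hx; omega)
  have h2 : 0 < 2 ^ (n-1) := Nat.two_pow_pos _
  omega

end PG

/-- the maximum number of squarings cleanly computable with `n`
registers is exactly `G(n) = 2^(n-1) - 1`. -/
theorem max_cleanly_computable (n : ℕ) (hn : 1 ≤ n) (m : ℕ) :
    (∃ M : MoveSeq, M.space ≤ n ∧ M.CleanlyComputes m) ↔ m ≤ 2 ^ (n - 1) - 1 := by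
  constructor
  · rintro ⟨M, hsp, hcc⟩
    exact PG.bound_moveseq n m hn M hsp hcc
  · intro hm
    exact PG.exists_moveseq n m hn hm
end
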